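/- arXiv:1710.01428 — 5 statements merged into one kernel-verified Lean document; each statement's English description precedes it below -/
import Mathlib

section
/- For all integers k, m, n ≥ 0 with m ≥ n, and every smooth function F of (x, p_0, p_1, …) depending on finitely many variables, one has ∂_n (D_m^k F) = Σ_{j=0}^{min(n,k)} C(k, j) · D_m^{k−j} (∂_{n−j} F), where C(k, j) is the binomial coefficient and D_m^k is the k-th iterate of D_m. -/
/-!
Common framework: smooth functions of `(x, p₀, p₁, p₂, …)` depending on finitely
many variables, truncated total differential operators `D m`, and truncated
Euler–Lagrange operators `E m n`.
-/

/-- A "function of `(x, p₀, p₁, …)`". -/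
abbrev Fn : Type := ℝ → (ℕ → ℝ) → ℝ

/-- Partial derivative in the variable `p k`. -/
noncomputable def pd (k : ℕ) (F : Fn) : Fn :=
  fun x p => deriv (fun t => F x (Function.update p k t)) (p k)

/-- Partial derivative in the variable `x`. -/
noncomputable def pdx (F : Fn) : Fn :=
  fun x p => deriv (fun t => F t p) x

/-- The truncated total differential operator
`D m = ∂ₓ + p₁ ∂₀ + p₂ ∂₁ + ⋯ + p_m ∂_{m-1}` (for `m = 0` it is just `∂ₓ`). -/
noncomputable def D (m : ℕ) (F : Fn) : Fn :=
  fun x p => pdx F x p + ∑ k ∈ Finset.range m, p (k + 1) * pd k F x p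

/-- The `m`-th order Euler–Lagrange operator with `n+1` terms,
`E m n = Σ_{k=0}^n (-1)^k (D m)^k ∂_k`. -/
noncomputable def E (m n : ℕ) (F : Fn) : Fn :=
  fun x p => ∑ k ∈ Finset.range (n + 1), (-1 : ℝ) ^ k * ((D m)^[k] (pd k F)) x p

/-- `F` depends only on the variables `x, p₀, …, p_{M-1}`. -/
def FnDependsOn (F : Fn) (M : ℕ) : Prop :=
  ∀ (x : ℝ) (p q : ℕ → ℝ), (∀ i, i < M → p i = q i) → F x p = F x q

/-- `F` depends only on `x, p₀, …, p_{M-1}` and is smooth as a function of those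
finitely many variables. -/
def SmoothUpTo (F : Fn) (M : ℕ) : Prop :=
  FnDependsOn F M ∧
    ContDiff ℝ (⊤ : ℕ∞) (fun v : ℝ × (Fin M → ℝ) =>
      F v.1 (fun i => if h : i < M then v.2 ⟨i, h⟩ else 0))

/-- `F` is a smooth function depending on finitely many of the variables. -/
def SmoothFn (F : Fn) : Prop := ∃ M, SmoothUpTo F M

/-- Antiderivative in `p k` vanishing at `p k = 0`:  `∫^{p_k} F`. -/
noncomputable def pint (k : ℕ) (F : Fn) : Fn :=
  fun x p => ∫ t in (0 : ℝ)..(p k), F x (Function.update p k t)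

/-- Second antiderivative in `p k`:  `∫^{p_k} ∫ F`. -/
noncomputable def pint2 (k : ℕ) (F : Fn) : Fn := pint k (pint k F)

/-- Antiderivative in `x` vanishing at `x = 0`:  `∫^x F`. -/
noncomputable def xint (F : Fn) : Fn :=
  fun x p => ∫ t in (0 : ℝ)..x, F t p

/-- `e^{-F}`. -/
noncomputable def negExpF (F : Fn) : Fn := fun x p => Real.exp (-F x p)

namespace Aux
variable {M : ℕ}

/-- restriction of `p` to the first `M` coordinates -/
def res (M : ℕ) (p : ℕ → ℝ) : Fin M → ℝ := fun i => p i

/-- basis direction -/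
def bvec (M l : ℕ) : Fin M → ℝ := fun i => if (i : ℕ) = l then 1 else 0

def Rep (F : Fn) (M : ℕ) (G : ℝ × (Fin M → ℝ) → ℝ) : Prop :=
  ContDiff ℝ (⊤ : ℕ∞) G ∧ ∀ x p, F x p = G (x, res M p)

theorem res_update {l : ℕ} (hl : l < M) (p : ℕ → ℝ) (t : ℝ) :
    res M (Function.update p l t) = Function.update (res M p) ⟨l, hl⟩ t := by
  funext i
  rw [Function.update_apply]
  by_cases hi : i = ⟨l, hl⟩
  · subst hi; simp [res]
  · rw [if_neg hi]
    have : (i : ℕ) ≠ l := fun h => hi (Fin.ext h)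
    simp [res, Function.update_apply, this]

theorem update_eq_affine {l : ℕ} (hl : l < M) (q : Fin M → ℝ) (t : ℝ) :
    Function.update q ⟨l, hl⟩ t = (q - q ⟨l, hl⟩ • bvec M l) + t • bvec M l := by
  funext i
  rw [Function.update_apply]
  by_cases hi : i = ⟨l, hl⟩
  · subst hi; simp [bvec]
  · have : (i : ℕ) ≠ l := fun h => hi (Fin.ext h)
    simp [bvec, this, hi]

theorem hasDerivAt_p {F : Fn} {G} (h : Rep F M G) {l : ℕ} (hl : l < M) (x : ℝ) (p : ℕ → ℝ)
    (t₀ : ℝ) :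
    HasDerivAt (fun t => F x (Function.update p l t))
      (fderiv ℝ G (x, Function.update (res M p) ⟨l, hl⟩ t₀) (0, bvec M l)) t₀ := by
  have hfun : (fun t => F x (Function.update p l t)) =
      fun t => G ((x, (res M p - res M p ⟨l, hl⟩ • bvec M l)) + t • ((0 : ℝ), bvec M l)) := by
    funext t
    rw [h.2, res_update hl, update_eq_affine hl]
    simp [Prod.add_def, Prod.smul_def]
  rw [hfun]
  have hL : HasDerivAt
      (fun t : ℝ => ((x, (res M p - res M p ⟨l, hl⟩ • bvec M l)) : ℝ × (Fin M → ℝ))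
        + t • ((0 : ℝ), bvec M l)) ((0 : ℝ), bvec M l) t₀ := by
    simpa using (((hasDerivAt_id t₀).smul_const ((0 : ℝ), bvec M l)).const_add
      ((x, (res M p - res M p ⟨l, hl⟩ • bvec M l)) : ℝ × (Fin M → ℝ)))
  have hG := ((h.1.differentiable (by simp)).differentiableAt
    (x := (x, (res M p - res M p ⟨l, hl⟩ • bvec M l)) + t₀ • ((0:ℝ), bvec M l))).hasFDerivAt
  have := hG.comp_hasDerivAt t₀ hL
  convert this using 2
  rfl
  rfl
  rfl
  rw [update_eq_affine hl]
  simp [Prod.add_def, Prod.smul_def]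

theorem pd_eq {F : Fn} {G} (h : Rep F M G) {l : ℕ} (hl : l < M) (x : ℝ) (p : ℕ → ℝ) :
    pd l F x p = fderiv ℝ G (x, res M p) (0, bvec M l) := by
  have := (hasDerivAt_p h hl x p (p l)).deriv
  rwa [show Function.update (res M p) ⟨l, hl⟩ (p l) = res M p from Function.update_eq_self _ _]
    at this

theorem hasDerivAt_p' {F : Fn} {G} (h : Rep F M G) {l : ℕ} (hl : l < M) (x : ℝ) (p : ℕ → ℝ) :
    HasDerivAt (fun t => F x (Function.update p l t)) (pd l F x p) (p l) := by
  rw [pd_eq h hl]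
  have := hasDerivAt_p h hl x p (p l)
  rwa [show Function.update (res M p) ⟨l, hl⟩ (p l) = res M p from Function.update_eq_self _ _]
    at this

theorem hasDerivAt_x {F : Fn} {G} (h : Rep F M G) (x : ℝ) (p : ℕ → ℝ) :
    HasDerivAt (fun t => F t p) (fderiv ℝ G (x, res M p) (1, 0)) x := by
  have hfun : (fun t => F t p) = fun t => G (t, res M p) := by
    funext t; rw [h.2]
  rw [hfun]
  have hL : HasDerivAt (fun t : ℝ => ((t, res M p) : ℝ × (Fin M → ℝ)))
      ((1 : ℝ), (0 : Fin M → ℝ)) x := HasDerivAt.prodMk (hasDerivAt_id x) (hasDerivAt_const x _)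
  have hG := ((h.1.differentiable (by simp)).differentiableAt (x := (x, res M p))).hasFDerivAt
  exact hG.comp_hasDerivAt x hL

theorem pdx_eq {F : Fn} {G} (h : Rep F M G) (x : ℝ) (p : ℕ → ℝ) :
    pdx F x p = fderiv ℝ G (x, res M p) (1, 0) := (hasDerivAt_x h x p).deriv

theorem hasDerivAt_x' {F : Fn} {G} (h : Rep F M G) (x : ℝ) (p : ℕ → ℝ) :
    HasDerivAt (fun t => F t p) (pdx F x p) x := by
  rw [pdx_eq h]; exact hasDerivAt_x h x p

theorem contDiff_fderiv_apply {G : ℝ × (Fin M → ℝ) → ℝ} (hG : ContDiff ℝ (⊤ : ℕ∞) G)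
    (w : ℝ × (Fin M → ℝ)) : ContDiff ℝ (⊤ : ℕ∞) (fun v => fderiv ℝ G v w) :=
  (hG.fderiv_right (by simp)).clm_apply contDiff_const

theorem Rep.pd {F : Fn} {G} (h : Rep F M G) {l : ℕ} (hl : l < M) :
    Rep (pd l F) M (fun v => fderiv ℝ G v (0, bvec M l)) := by
  refine ⟨contDiff_fderiv_apply h.1 _, fun x p => pd_eq h hl x p⟩

theorem Rep.pdx {F : Fn} {G} (h : Rep F M G) :
    Rep (pdx F) M (fun v => fderiv ℝ G v (1, 0)) := by
  refine ⟨contDiff_fderiv_apply h.1 _, fun x p => pdx_eq h x p⟩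

theorem fderiv_fderiv_apply {G : ℝ × (Fin M → ℝ) → ℝ} (hG : ContDiff ℝ (⊤ : ℕ∞) G)
    (z u w : ℝ × (Fin M → ℝ)) :
    fderiv ℝ (fun v => fderiv ℝ G v w) z u = fderiv ℝ (fderiv ℝ G) z u w := by
  have hd : DifferentiableAt ℝ (fderiv ℝ G) z :=
    ((hG.fderiv_right (m := (⊤ : ℕ∞)) (by simp)).differentiable (by simp)).differentiableAt
  rw [fderiv_clm_apply hd (differentiableAt_const w)]
  simp

theorem fderiv_apply_symm {G : ℝ × (Fin M → ℝ) → ℝ} (hG : ContDiff ℝ (⊤ : ℕ∞) G)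
    (z u w : ℝ × (Fin M → ℝ)) :
    fderiv ℝ (fun v => fderiv ℝ G v w) z u = fderiv ℝ (fun v => fderiv ℝ G v u) z w := by
  rw [fderiv_fderiv_apply hG, fderiv_fderiv_apply hG]
  exact hG.contDiffAt.isSymmSndFDerivAt (by rw [minSmoothness_of_isRCLikeNormedField]; exact WithTop.coe_le_coe.mpr le_top) u w

theorem pd_pd_comm {F : Fn} {G} (h : Rep F M G) {a b : ℕ} (ha : a < M) (hb : b < M)
    (x : ℝ) (p : ℕ → ℝ) : pd a (pd b F) x p = pd b (pd a F) x p := by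
  rw [pd_eq (h.pd hb) ha, pd_eq (h.pd ha) hb, fderiv_apply_symm h.1]

theorem pd_pdx_comm {F : Fn} {G} (h : Rep F M G) {a : ℕ} (ha : a < M)
    (x : ℝ) (p : ℕ → ℝ) : pd a (pdx F) x p = pdx (pd a F) x p := by
  rw [pd_eq h.pdx ha, pdx_eq (h.pd ha), fderiv_apply_symm h.1]

noncomputable def coordE (M i : ℕ) (v : ℝ × (Fin M → ℝ)) : ℝ :=
  if h : i < M then v.2 ⟨i, h⟩ else 0

theorem contDiff_coordE (M i : ℕ) : ContDiff ℝ (⊤ : ℕ∞) (coordE M i) := by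
  unfold coordE
  split
  · exact (ContinuousLinearMap.proj (R := ℝ) (φ := fun _ : Fin M => ℝ) _).contDiff.comp
      contDiff_snd
  · exact contDiff_const

theorem coordE_res {i : ℕ} (hi : i < M) (x : ℝ) (p : ℕ → ℝ) :
    coordE M i (x, res M p) = p i := by
  simp [coordE, hi, res]

theorem Rep.D {F : Fn} {G} (h : Rep F M G) {m : ℕ} (hm : m < M) :
    Rep (_root_.D m F) M (fun v => fderiv ℝ G v (1, 0) +
      ∑ k ∈ Finset.range m, coordE M (k + 1) v * fderiv ℝ G v (0, bvec M k)) := by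
  constructor
  · exact (contDiff_fderiv_apply h.1 _).add (ContDiff.sum fun k _ =>
      (contDiff_coordE M (k + 1)).mul (contDiff_fderiv_apply h.1 _))
  · intro x p
    show _root_.pdx F x p + _ = _
    rw [pdx_eq h]
    congr 1
    refine Finset.sum_congr rfl fun k hk => ?_
    have hk' : k < m := Finset.mem_range.1 hk
    rw [pd_eq h (lt_of_lt_of_le hk' hm.le) x p, coordE_res (by omega)]

/-- `F` has a smooth finite-dimensional representation with `M` variables. -/
def Sm (F : Fn) (M : ℕ) : Prop := ∃ G, Rep F M G

theorem Sm.pd {F : Fn} (h : Sm F M) {l : ℕ} (hl : l < M) : Sm (_root_.pd l F) M :=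
  ⟨_, h.choose_spec.pd hl⟩

theorem Sm.D {F : Fn} (h : Sm F M) {m : ℕ} (hm : m < M) : Sm (_root_.D m F) M :=
  ⟨_, h.choose_spec.D hm⟩

theorem Sm.iterD {F : Fn} (h : Sm F M) {m : ℕ} (hm : m < M) (k : ℕ) :
    Sm ((_root_.D m)^[k] F) M := by
  induction k with
  | zero => exact h
  | succ k ih => rw [Function.iterate_succ_apply']; exact ih.D hm

theorem pd_sum {ι : Type*} (s : Finset ι) (A : ι → Fn) (hA : ∀ i ∈ s, Sm (A i) M)
    (c : ι → ℝ) {l : ℕ} (hl : l < M) (x : ℝ) (p : ℕ → ℝ) :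
    pd l (fun x p => ∑ i ∈ s, c i * A i x p) x p = ∑ i ∈ s, c i * pd l (A i) x p := by
  have h : HasDerivAt (fun t => ∑ i ∈ s, c i * A i x (Function.update p l t))
      (∑ i ∈ s, c i * pd l (A i) x p) (p l) :=
    HasDerivAt.fun_sum fun i hi =>
      (hasDerivAt_p' (hA i hi).choose_spec hl x p).const_mul (c i)
  exact h.deriv

theorem pdx_sum {ι : Type*} (s : Finset ι) (A : ι → Fn) (hA : ∀ i ∈ s, Sm (A i) M)
    (c : ι → ℝ) (x : ℝ) (p : ℕ → ℝ) :
    pdx (fun x p => ∑ i ∈ s, c i * A i x p) x p = ∑ i ∈ s, c i * pdx (A i) x p := by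
  have h : HasDerivAt (fun t => ∑ i ∈ s, c i * A i t p)
      (∑ i ∈ s, c i * pdx (A i) x p) x :=
    HasDerivAt.fun_sum fun i hi =>
      (hasDerivAt_x' (hA i hi).choose_spec x p).const_mul (c i)
  exact h.deriv

theorem D_sum {ι : Type*} (s : Finset ι) (A : ι → Fn) (hA : ∀ i ∈ s, Sm (A i) M)
    (c : ι → ℝ) {m : ℕ} (hm : m ≤ M) (x : ℝ) (p : ℕ → ℝ) :
    D m (fun x p => ∑ i ∈ s, c i * A i x p) x p = ∑ i ∈ s, c i * D m (A i) x p := by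
  show pdx _ x p + ∑ k ∈ Finset.range m, p (k + 1) * pd k _ x p = _
  rw [pdx_sum s A hA c x p]
  have h1 : ∀ k ∈ Finset.range m,
      p (k + 1) * pd k (fun x p => ∑ i ∈ s, c i * A i x p) x p
        = ∑ i ∈ s, c i * (p (k + 1) * pd k (A i) x p) := by
    intro k hk
    rw [pd_sum s A hA c (lt_of_lt_of_le (Finset.mem_range.1 hk) hm) x p, Finset.mul_sum]
    exact Finset.sum_congr rfl fun i _ => by ring
  rw [Finset.sum_congr rfl h1, Finset.sum_comm, ← Finset.sum_add_distrib]
  refine Finset.sum_congr rfl fun i _ => ?_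
  show _ = c i * (pdx (A i) x p + ∑ k ∈ Finset.range m, p (k + 1) * pd k (A i) x p)
  rw [mul_add, Finset.mul_sum]

theorem pd_D_step {F : Fn} {G} (h : Rep F M G) {m n : ℕ} (hm : m < M) (hn : n ≤ m)
    (x : ℝ) (p : ℕ → ℝ) :
    pd n (D m F) x p =
      D m (pd n F) x p + (if n = 0 then 0 else pd (n - 1) F x p) := by
  have hnM : n < M := lt_of_le_of_lt hn hm
  have hterm : ∀ k ∈ Finset.range m,
      HasDerivAt (fun t => Function.update p n t (k + 1) * pd k F x (Function.update p n t))
        ((if k + 1 = n then pd k F x p else 0) + p (k + 1) * pd n (pd k F) x p) (p n) := by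
    intro k hk
    have hkM : k < M := lt_trans (Finset.mem_range.1 hk) hm
    have hg : HasDerivAt (fun t => pd k F x (Function.update p n t))
        (pd n (pd k F) x p) (p n) := hasDerivAt_p' (h.pd hkM) hnM x p
    by_cases hkn : k + 1 = n
    · have hupd : ∀ t : ℝ, Function.update p n t (k + 1) = t := fun t => by
        rw [hkn]; simp
      have hmul := (hasDerivAt_id (p n)).mul hg
      simp only [hupd, id_eq]
      have hval : pd k F x (Function.update p n (p n)) = pd k F x p := by
        rw [Function.update_eq_self]
      rw [if_pos hkn, ← hkn] at *
      convert hmul using 1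
      rfl
      rfl
      rfl
      rw [Function.update_eq_self]
      simp only [id_eq]
      ring
    · have hupd : ∀ t : ℝ, Function.update p n t (k + 1) = p (k + 1) := fun t => by
        rw [Function.update_apply, if_neg hkn]
      simp only [hupd]
      rw [if_neg hkn, zero_add]
      exact hg.const_mul (p (k + 1))
  have hx : HasDerivAt (fun t => pdx F x (Function.update p n t))
      (pd n (pdx F) x p) (p n) := hasDerivAt_p' h.pdx hnM x p
  have hsum := hx.add (HasDerivAt.fun_sum hterm)
  have hL : pd n (D m F) x p = pd n (pdx F) x p +
      ∑ k ∈ Finset.range m,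
        ((if k + 1 = n then pd k F x p else 0) + p (k + 1) * pd n (pd k F) x p) :=
    hsum.deriv
  rw [hL, Finset.sum_add_distrib, pd_pdx_comm h hnM]
  have hcomm : ∀ k ∈ Finset.range m, p (k + 1) * pd n (pd k F) x p
      = p (k + 1) * pd k (pd n F) x p := fun k hk => by
    rw [pd_pd_comm h hnM (lt_trans (Finset.mem_range.1 hk) hm)]
  rw [Finset.sum_congr rfl hcomm]
  have hguard : ∑ k ∈ Finset.range m, (if k + 1 = n then pd k F x p else 0)
      = if n = 0 then 0 else pd (n - 1) F x p := by
    cases n with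
    | zero => simp
    | succ n' =>
      have : ∀ k, (k + 1 = n' + 1) = (k = n') := fun k => by
        simp [Nat.succ_inj]
      simp only [this]
      rw [Finset.sum_ite_eq' (Finset.range m) n' (fun k => pd k F x p)]
      rw [if_pos (Finset.mem_range.2 (by omega)), if_neg (Nat.succ_ne_zero n')]
      simp
  rw [hguard]
  show _ = pdx (pd n F) x p + _ + _
  ring

theorem binom_step (T : ℕ → ℝ) (k n' : ℕ) :
    (∑ j ∈ Finset.range (n' + 2), (k.choose j : ℝ) * T j) +
      ∑ j ∈ Finset.range (n' + 1), (k.choose j : ℝ) * T (j + 1)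
    = ∑ j ∈ Finset.range (n' + 2), ((k + 1).choose j : ℝ) * T j := by
  rw [Finset.sum_range_succ' (fun j => (k.choose j : ℝ) * T j) (n' + 1),
    Finset.sum_range_succ' (fun j => ((k + 1).choose j : ℝ) * T j) (n' + 1)]
  have hc : ∀ j ∈ Finset.range (n' + 1), ((k + 1).choose (j + 1) : ℝ) * T (j + 1)
      = (k.choose (j + 1) : ℝ) * T (j + 1) + (k.choose j : ℝ) * T (j + 1) := by
    intro j _
    rw [Nat.choose_succ_succ]
    push_cast
    ring
  rw [Finset.sum_congr rfl hc, Finset.sum_add_distrib]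
  simp only [Nat.choose_zero_right, Nat.cast_one]
  ring

theorem key {F : Fn} (hF : Sm F M) {m : ℕ} (hm : m < M) (k : ℕ) :
    ∀ n, n ≤ m → ∀ (x : ℝ) (p : ℕ → ℝ), pd n ((D m)^[k] F) x p
      = ∑ j ∈ Finset.range (n + 1),
          (k.choose j : ℝ) * ((D m)^[k - j] (pd (n - j) F)) x p := by
  induction k with
  | zero =>
    intro n hn x p
    rw [Finset.sum_eq_single_of_mem 0 (Finset.mem_range.2 (Nat.succ_pos n))
      (fun j _ hj0 => by rw [Nat.choose_eq_zero_of_lt (by omega)]; simp)]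
    simp
  | succ k ih =>
    intro n hn x p
    obtain ⟨Gk, hGk⟩ := hF.iterD hm k
    rw [Function.iterate_succ_apply', pd_D_step hGk hm hn x p]
    have hfun : pd n ((D m)^[k] F) = fun x p => ∑ j ∈ Finset.range (n + 1),
        (k.choose j : ℝ) * ((D m)^[k - j] (pd (n - j) F)) x p :=
      funext fun x => funext fun p => ih n hn x p
    rw [hfun]
    rw [D_sum (Finset.range (n + 1)) (fun j => (D m)^[k - j] (pd (n - j) F))
      (fun j _ => (hF.pd (show n - j < M by omega)).iterD hm _)
      (fun j => (k.choose j : ℝ)) hm.le x p]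
    have hstep : ∀ j ∈ Finset.range (n + 1),
        (k.choose j : ℝ) * D m ((D m)^[k - j] (pd (n - j) F)) x p
          = (k.choose j : ℝ) * ((D m)^[(k + 1) - j] (pd (n - j) F)) x p := by
      intro j _
      rcases le_or_gt j k with hjk | hjk
      · rw [← Function.iterate_succ_apply' (D m) (k - j), Nat.succ_sub hjk]
      · rw [Nat.choose_eq_zero_of_lt hjk]; simp
    rw [Finset.sum_congr rfl hstep]
    cases n with
    | zero =>
      simp
    | succ n' =>
      rw [if_neg (Nat.succ_ne_zero n'), Nat.add_sub_cancel, ih n' (by omega) x p]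
      have h2 : ∀ j ∈ Finset.range (n' + 1),
          (k.choose j : ℝ) * ((D m)^[k - j] (pd (n' - j) F)) x p
            = (k.choose j : ℝ) * ((D m)^[(k + 1) - (j + 1)] (pd ((n' + 1) - (j + 1)) F)) x p := by
        intro j _
        rw [Nat.succ_sub_succ, Nat.succ_sub_succ]
      rw [Finset.sum_congr rfl h2]
      exact binom_step (fun j => ((D m)^[(k + 1) - j] (pd ((n' + 1) - j) F)) x p) k n'


theorem sm_of_smoothFn {F : Fn} (hF : SmoothFn F) (m : ℕ) : ∃ M, m < M ∧ Sm F M := by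
  obtain ⟨M0, hdep, hsm⟩ := hF
  have hle : M0 ≤ max M0 (m + 1) := le_max_left _ _
  refine ⟨max M0 (m + 1), by omega, ⟨fun v =>
    (fun v0 : ℝ × (Fin M0 → ℝ) => F v0.1 (fun i => if h : i < M0 then v0.2 ⟨i, h⟩ else 0))
      (v.1, fun i => v.2 (Fin.castLE hle i)), ?_, ?_⟩⟩
  · exact hsm.comp (contDiff_fst.prodMk (contDiff_pi.mpr fun i =>
      (ContinuousLinearMap.proj (R := ℝ) (φ := fun _ : Fin (max M0 (m + 1)) => ℝ)
        (Fin.castLE hle i)).contDiff.comp contDiff_snd))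
  · intro x p
    apply hdep
    intro i hi
    simp [res, hi]

end Aux

/-- Commutating with powers:
`∂_n ∘ D_m^k = Σ_{j=0}^{min(n,k)} C(k,j) D_m^{k-j} ∂_{n-j}` for `m ≥ n`. -/
theorem pd_D_pow_comm (k m n : ℕ) (hnm : n ≤ m) (F : Fn) (hF : SmoothFn F)
    (x : ℝ) (p : ℕ → ℝ) :
    pd n ((D m)^[k] F) x p =
      ∑ j ∈ Finset.range (min n k + 1),
        (k.choose j : ℝ) * ((D m)^[k - j] (pd (n - j) F)) x p := by
  
  obtain ⟨M, hmM, hsm⟩ := Aux.sm_of_smoothFn hF m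
  have hmain := Aux.key hsm hmM k n hnm x p
  rw [hmain]
  refine (Finset.sum_subset (Finset.range_subset_range.2 (by omega)) ?_).symm
  intro j hj hj'
  have h1 : j < n + 1 := Finset.mem_range.1 hj
  have h2 : ¬ j < min n k + 1 := fun h => hj' (Finset.mem_range.2 h)
  have : k < j := by omega
  rw [Nat.choose_eq_zero_of_lt this]
  simp
end

section
/- For all integers m > k ≥ 1 and every smooth function F of (x, p_0, p_1, …) depending on finitely many variables, one has D_m^k F = Σ_{I : ‖I‖ ≤ k} a_I^{(k)} · p_m^{|I|} · D_{m−1}^{k−‖I‖} (∂^I F), where the sum runs over multi-indices I = (i_{m−1}, …, i_0) of nonnegative integers with ‖I‖ ≤ k, and a_I^{(k)} := k! / ( ‖I‖* · I! · (k−‖I‖)! ). -/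
/-- Iterated partial derivative `∂^I = ∂_{m-1}^{i_{m-1}} ∘ ⋯ ∘ ∂_0^{i_0}`, where the
multi-index `I : Fin m → ℕ` records `I j = i_j` (the exponent of `∂_j`). -/
noncomputable def pdMulti (m : ℕ) (I : Fin m → ℕ) (F : Fn) : Fn :=
  (List.finRange m).foldl (fun G j => (pd j.val)^[I j] G) F

/-- The weighted additive norm `‖I‖ = Σ_{j=1}^m j · i_{m-j}`. -/
def wnorm (m : ℕ) (I : Fin m → ℕ) : ℕ := ∑ j : Fin m, (m - (j : ℕ)) * I j

/-- The absolute value `|I| = Σ i_j`. -/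
def anorm (m : ℕ) (I : Fin m → ℕ) : ℕ := ∑ j : Fin m, I j

/-- The coefficient `a_I^{(k)} = k! / (‖I‖* · I! · (k - ‖I‖)!)`,
where `‖I‖* = Π_{j=1}^m (j!)^{i_{m-j}}` and `I! = Π i_j!`. -/
noncomputable def coeffA (m k : ℕ) (I : Fin m → ℕ) : ℝ :=
  (k.factorial : ℝ) /
    ((∏ j : Fin m, ((m - (j : ℕ)).factorial : ℝ) ^ I j) *
      (∏ j : Fin m, ((I j).factorial : ℝ)) *
      ((k - wnorm m I).factorial : ℝ))

open scoped ContDiff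

namespace DExp

variable {N : ℕ}

/-- `F` is represented by the smooth function `f` of `N+1` variables. -/
def Rep (N : ℕ) (F : Fn) (f : ℝ × (Fin N → ℝ) → ℝ) : Prop :=
  ContDiff ℝ ∞ f ∧ ∀ (x : ℝ) (p : ℕ → ℝ), F x p = f (x, fun i => p i)

def Sm (N : ℕ) (F : Fn) : Prop := ∃ f, Rep N F f

/-- coordinate direction vector -/
noncomputable def vc (N k : ℕ) (h : k < N) : ℝ × (Fin N → ℝ) :=
  (0, Pi.single (⟨k, h⟩ : Fin N) 1)

noncomputable def vx (N : ℕ) : ℝ × (Fin N → ℝ) := (1, 0)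

lemma infle : (∞ : WithTop ℕ∞) + 1 ≤ ∞ := by exact_mod_cast le_top
lemma onele : (1 : WithTop ℕ∞) ≤ ∞ := by exact_mod_cast le_top

section basic
variable {F G : Fn} {f g : ℝ × (Fin N → ℝ) → ℝ}

lemma Rep.congr (h : Rep N G f) (e : ∀ x p, F x p = G x p) : Rep N F f :=
  ⟨h.1, fun x p => (e x p).trans (h.2 x p)⟩

lemma update_fin (p : ℕ → ℝ) {k : ℕ} (hk : k < N) (t : ℝ) :
    (fun i : Fin N => Function.update p k t i) =
      Function.update (fun i : Fin N => p i) ⟨k, hk⟩ t := by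
  funext i
  rw [Function.update_apply, Function.update_apply]
  by_cases h : i = (⟨k, hk⟩ : Fin N)
  · rw [if_pos h, if_pos (by rw [h])]
  · rw [if_neg h, if_neg (by simpa [Fin.ext_iff] using h)]

lemma hasDerivAt_curve {k : ℕ} (hk : k < N) (p : ℕ → ℝ) (x t₀ : ℝ) :
    HasDerivAt (fun t => ((x, Function.update (fun i : Fin N => p i) ⟨k, hk⟩ t) :
      ℝ × (Fin N → ℝ))) (vc N k hk) t₀ := by
  apply HasDerivAt.prodMk (hasDerivAt_const _ _)
  rw [hasDerivAt_pi]
  intro i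
  by_cases h : i = (⟨k, hk⟩ : Fin N)
  · subst h
    simp only [Function.update_self, vc, Pi.single_eq_same]
    exact hasDerivAt_id _
  · simp only [Function.update_of_ne h, vc, Pi.single_eq_of_ne h]
    exact hasDerivAt_const _ _

lemma Rep.hasDerivAt_pd (h : Rep N F f) {k : ℕ} (hk : k < N) (x : ℝ) (p : ℕ → ℝ) :
    HasDerivAt (fun t => F x (Function.update p k t))
      (fderiv ℝ f (x, fun i => p i) (vc N k hk)) (p k) := by
  have e : (fun t => F x (Function.update p k t)) =
      fun t => f (x, Function.update (fun i : Fin N => p i) ⟨k, hk⟩ t) := by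
    funext t; rw [h.2, update_fin p hk]
  rw [e]
  have h2 := hasDerivAt_curve (N := N) hk p x (p k)
  have h3 := (((h.1.differentiable (by simp)) _).hasFDerivAt).comp_hasDerivAt _ h2
  simpa only [show Function.update (fun i : Fin N => p ↑i) ⟨k, hk⟩ (p k) =
    fun i : Fin N => p ↑i from Function.update_eq_self _ _, Function.comp_def] using h3

lemma Rep.hasDerivAt_pdx (h : Rep N F f) (x : ℝ) (p : ℕ → ℝ) :
    HasDerivAt (fun t => F t p) (fderiv ℝ f (x, fun i => p i) (vx N)) x := by
  have e : (fun t => F t p) = fun t => f (t, fun i : Fin N => p i) := by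
    funext t; rw [h.2]
  rw [e]
  refine (((h.1.differentiable (by simp)) _).hasFDerivAt).comp_hasDerivAt _ ?_
  exact (hasDerivAt_id x).prodMk (hasDerivAt_const _ _)

lemma Rep.pd_eq (h : Rep N F f) {k : ℕ} (hk : k < N) (x : ℝ) (p : ℕ → ℝ) :
    pd k F x p = fderiv ℝ f (x, fun i => p i) (vc N k hk) :=
  (h.hasDerivAt_pd hk x p).deriv

lemma Rep.pdx_eq (h : Rep N F f) (x : ℝ) (p : ℕ → ℝ) :
    pdx F x p = fderiv ℝ f (x, fun i => p i) (vx N) :=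
  (h.hasDerivAt_pdx x p).deriv

lemma Rep.pd (h : Rep N F f) {k : ℕ} (hk : k < N) :
    Rep N (pd k F) (fun v => fderiv ℝ f v (vc N k hk)) :=
  ⟨(ContinuousLinearMap.apply ℝ ℝ (vc N k hk)).contDiff.comp (h.1.fderiv_right infle),
    fun x p => h.pd_eq hk x p⟩

lemma Rep.pdx (h : Rep N F f) :
    Rep N (pdx F) (fun v => fderiv ℝ f v (vx N)) :=
  ⟨(ContinuousLinearMap.apply ℝ ℝ (vx N)).contDiff.comp (h.1.fderiv_right infle),
    fun x p => h.pdx_eq x p⟩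

lemma Rep.add (h : Rep N F f) (h' : Rep N G g) :
    Rep N (fun x p => F x p + G x p) (fun v => f v + g v) :=
  ⟨h.1.add h'.1, fun x p => by show F x p + G x p = _; rw [h.2, h'.2]⟩

lemma Rep.const_mul (h : Rep N F f) (c : ℝ) :
    Rep N (fun x p => c * F x p) (fun v => c * f v) :=
  ⟨contDiff_const.mul h.1, fun x p => by show c * F x p = _; rw [h.2]⟩

lemma Rep.coord_pow_mul (h : Rep N F f) (c : ℝ) {j : ℕ} (hj : j < N) (a : ℕ) :
    Rep N (fun x p => c * p j ^ a * F x p)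
      (fun v => c * v.2 ⟨j, hj⟩ ^ a * f v) :=
  ⟨(contDiff_const.mul (((ContinuousLinearMap.proj (⟨j, hj⟩ : Fin N)).contDiff.comp
      contDiff_snd).pow a)).mul h.1,
    fun x p => by show c * p j ^ a * F x p = _; rw [h.2]⟩

lemma Rep.sum {ι : Type*} [DecidableEq ι] (s : Finset ι) (G : ι → Fn)
    (g : ι → (ℝ × (Fin N → ℝ) → ℝ)) (h : ∀ i ∈ s, Rep N (G i) (g i)) :
    Rep N (fun x p => ∑ i ∈ s, G i x p) (fun v => ∑ i ∈ s, g i v) :=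
  ⟨ContDiff.sum fun i hi => (h i hi).1,
    fun x p => by
      show ∑ i ∈ s, G i x p = _
      exact Finset.sum_congr rfl fun i hi => (h i hi).2 x p⟩

/-- second-derivative formula -/
lemma fderiv_fderiv_apply (hf : ContDiff ℝ ∞ f) (z a b : ℝ × (Fin N → ℝ)) :
    fderiv ℝ (fun v => fderiv ℝ f v b) z a = fderiv ℝ (fderiv ℝ f) z a b := by
  have h1 : DifferentiableAt ℝ (fderiv ℝ f) z :=
    ((hf.fderiv_right infle).differentiable (by simp)) z
  have := fderiv_clm_apply (c := fderiv ℝ f) (u := fun _ => b) h1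
    (differentiableAt_const _)
  rw [show (fun v => fderiv ℝ f v b) = fun y => (fderiv ℝ f y) ((fun _ => b) y) from rfl,
    this]
  simp

lemma fderiv_fderiv_symm (hf : ContDiff ℝ ∞ f) (z a b : ℝ × (Fin N → ℝ)) :
    fderiv ℝ (fderiv ℝ f) z a b = fderiv ℝ (fderiv ℝ f) z b a := by
  have hd : ∀ y, HasFDerivAt f (fderiv ℝ f y) y :=
    fun y => ((hf.differentiable (by simp)) y).hasFDerivAt
  have h2 : HasFDerivAt (fderiv ℝ f) (fderiv ℝ (fderiv ℝ f) z) z :=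
    (((hf.fderiv_right infle).differentiable (by simp)) z).hasFDerivAt
  exact second_derivative_symmetric hd h2 a b

lemma Rep.pd_pd_eq (h : Rep N F f) {i j : ℕ} (hi : i < N) (hj : j < N)
    (x : ℝ) (p : ℕ → ℝ) :
    _root_.pd i (_root_.pd j F) x p =
      fderiv ℝ (fderiv ℝ f) (x, fun i => p i) (vc N i hi) (vc N j hj) := by
  rw [(h.pd hj).pd_eq hi x p, fderiv_fderiv_apply h.1]

lemma Rep.pd_pdx_eq (h : Rep N F f) {j : ℕ} (hj : j < N) (x : ℝ) (p : ℕ → ℝ) :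
    _root_.pd j (_root_.pdx F) x p =
      fderiv ℝ (fderiv ℝ f) (x, fun i => p i) (vc N j hj) (vx N) := by
  rw [h.pdx.pd_eq hj x p, fderiv_fderiv_apply h.1]

lemma Rep.pdx_pd_eq (h : Rep N F f) {j : ℕ} (hj : j < N) (x : ℝ) (p : ℕ → ℝ) :
    _root_.pdx (_root_.pd j F) x p =
      fderiv ℝ (fderiv ℝ f) (x, fun i => p i) (vx N) (vc N j hj) := by
  rw [(h.pd hj).pdx_eq x p, fderiv_fderiv_apply h.1]

end basic

section smclosure
variable {F G : Fn}

lemma Sm.congr (h : Sm N G) (e : ∀ x p, F x p = G x p) : Sm N F :=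
  ⟨h.choose, h.choose_spec.congr e⟩

lemma Sm.pd (h : Sm N F) {k : ℕ} (hk : k < N) : Sm N (_root_.pd k F) :=
  ⟨_, h.choose_spec.pd hk⟩

lemma Sm.pdx (h : Sm N F) : Sm N (_root_.pdx F) := ⟨_, h.choose_spec.pdx⟩

lemma Sm.add (h : Sm N F) (h' : Sm N G) : Sm N (fun x p => F x p + G x p) :=
  ⟨_, h.choose_spec.add h'.choose_spec⟩

lemma Sm.const_mul (h : Sm N F) (c : ℝ) : Sm N (fun x p => c * F x p) :=
  ⟨_, h.choose_spec.const_mul c⟩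

lemma Sm.coord_pow_mul (h : Sm N F) (c : ℝ) {j : ℕ} (hj : j < N) (a : ℕ) :
    Sm N (fun x p => c * p j ^ a * F x p) :=
  ⟨_, h.choose_spec.coord_pow_mul c hj a⟩

lemma Sm.coord_mul (h : Sm N F) {j : ℕ} (hj : j < N) :
    Sm N (fun x p => p j * F x p) := by
  refine (h.coord_pow_mul 1 hj 1).congr fun x p => ?_
  ring

lemma Sm.sum {ι : Type*} [DecidableEq ι] (s : Finset ι) (G : ι → Fn)
    (h : ∀ i ∈ s, Sm N (G i)) : Sm N (fun x p => ∑ i ∈ s, G i x p) := by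
  choose g hg using h
  classical
  refine ⟨fun v => ∑ i ∈ s.attach, g i.1 i.2 v, ?_, ?_⟩
  · exact ContDiff.sum fun i _ => (hg i.1 i.2).1
  · intro x p
    show ∑ i ∈ s, G i x p = _
    rw [← Finset.sum_attach s (fun i => G i x p)]
    exact Finset.sum_congr rfl fun i _ => (hg i.1 i.2).2 x p

lemma Sm.D (h : Sm N F) {n : ℕ} (hn : n < N) : Sm N (_root_.D n F) := by
  have : Sm N (fun x p => ∑ k ∈ Finset.range n,
      (fun x p => p (k+1) * _root_.pd k F x p) x p) := by
    refine Sm.sum _ _ fun k hk => ?_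
    have hkn : k < n := Finset.mem_range.1 hk
    have hk' : k < N := lt_trans hkn hn
    exact Sm.coord_mul (h.pd hk') (j := k + 1) (by omega)
  exact (h.pdx.add this).congr fun x p => rfl

lemma Sm.iterD (h : Sm N F) {n : ℕ} (hn : n < N) (j : ℕ) : Sm N ((_root_.D n)^[j] F) := by
  induction j with
  | zero => exact h
  | succ j ih => rw [Function.iterate_succ_apply']; exact Sm.D ih hn

end smclosure

section rules
variable {F G : Fn}

lemma Sm.hasDerivAt (hF : Sm N F) {k : ℕ} (hk : k < N) (x : ℝ) (p : ℕ → ℝ) :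
    HasDerivAt (fun t => F x (Function.update p k t)) (_root_.pd k F x p) (p k) := by
  obtain ⟨f, hf⟩ := hF
  rw [hf.pd_eq hk x p]
  exact hf.hasDerivAt_pd hk x p

lemma Sm.hasDerivAtx (hF : Sm N F) (x : ℝ) (p : ℕ → ℝ) :
    HasDerivAt (fun t => F t p) (_root_.pdx F x p) x := by
  obtain ⟨f, hf⟩ := hF
  rw [hf.pdx_eq x p]
  exact hf.hasDerivAt_pdx x p

lemma pd_add (hF : Sm N F) (hG : Sm N G) {k : ℕ} (hk : k < N) (x : ℝ) (p : ℕ → ℝ) :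
    pd k (fun x p => F x p + G x p) x p = pd k F x p + pd k G x p :=
  ((hF.hasDerivAt hk x p).add (hG.hasDerivAt hk x p)).deriv

lemma pdx_add (hF : Sm N F) (hG : Sm N G) (x : ℝ) (p : ℕ → ℝ) :
    pdx (fun x p => F x p + G x p) x p = pdx F x p + pdx G x p :=
  ((hF.hasDerivAtx x p).add (hG.hasDerivAtx x p)).deriv

lemma pd_sum {ι : Type*} (s : Finset ι) (G : ι → Fn) (hG : ∀ i ∈ s, Sm N (G i))
    {k : ℕ} (hk : k < N) (x : ℝ) (p : ℕ → ℝ) :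
    pd k (fun x p => ∑ i ∈ s, G i x p) x p = ∑ i ∈ s, pd k (G i) x p :=
  (HasDerivAt.fun_sum fun i hi => (hG i hi).hasDerivAt hk x p).deriv

lemma pdx_sum {ι : Type*} (s : Finset ι) (G : ι → Fn) (hG : ∀ i ∈ s, Sm N (G i))
    (x : ℝ) (p : ℕ → ℝ) :
    pdx (fun x p => ∑ i ∈ s, G i x p) x p = ∑ i ∈ s, pdx (G i) x p :=
  (HasDerivAt.fun_sum fun i hi => (hG i hi).hasDerivAtx x p).deriv

lemma pd_const_mul (c : ℝ) (k : ℕ) (x : ℝ) (p : ℕ → ℝ) :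
    pd k (fun x p => c * F x p) x p = c * pd k F x p :=
  deriv_const_mul_field c

lemma pdx_const_mul (c : ℝ) (x : ℝ) (p : ℕ → ℝ) :
    pdx (fun x p => c * F x p) x p = c * pdx F x p :=
  deriv_const_mul_field c

lemma pd_coord_mul_ne {k j : ℕ} (hkj : k ≠ j) (x : ℝ) (p : ℕ → ℝ) :
    pd k (fun x p => p j * F x p) x p = p j * pd k F x p := by
  show deriv (fun t => Function.update p k t j * F x (Function.update p k t)) (p k) = _
  have e : (fun t => Function.update p k t j * F x (Function.update p k t)) =
      fun t => p j * F x (Function.update p k t) := by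
    funext t; rw [Function.update_of_ne (Ne.symm hkj)]
  rw [e, deriv_const_mul_field]
  rfl

lemma pd_coord_pow_mul (c : ℝ) (a : ℕ) {k j : ℕ} (hkj : k ≠ j) (x : ℝ) (p : ℕ → ℝ) :
    pd k (fun x p => c * p j ^ a * F x p) x p = c * p j ^ a * pd k F x p := by
  show deriv (fun t => c * Function.update p k t j ^ a * F x (Function.update p k t)) (p k) = _
  have e : (fun t => c * Function.update p k t j ^ a * F x (Function.update p k t)) =
      fun t => (c * p j ^ a) * F x (Function.update p k t) := by
    funext t; rw [Function.update_of_ne (Ne.symm hkj)]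
  rw [e, deriv_const_mul_field]
  rfl

lemma pdx_coord_pow_mul (c : ℝ) (a j : ℕ) (x : ℝ) (p : ℕ → ℝ) :
    pdx (fun x p => c * p j ^ a * F x p) x p = c * p j ^ a * pdx F x p :=
  deriv_const_mul_field _

lemma pd_coord_mul_same (hF : Sm N F) {q : ℕ} (hq : q < N) (x : ℝ) (p : ℕ → ℝ) :
    pd q (fun x p => p q * F x p) x p = F x p + p q * pd q F x p := by
  have h1 : HasDerivAt (fun t : ℝ => Function.update p q t q) 1 (p q) := by
    simp only [Function.update_self]; exact hasDerivAt_id _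
  have H := h1.mul (hF.hasDerivAt hq x p)
  have H2 : HasDerivAt (fun t => Function.update p q t q * F x (Function.update p q t))
      (F x p + p q * pd q F x p) (p q) := by
    simpa [Function.update_eq_self, Function.update_self, Pi.mul_def] using H
  exact H2.deriv

lemma D_sum {ι : Type*} (s : Finset ι) (G : ι → Fn) (hG : ∀ i ∈ s, Sm N (G i))
    {n : ℕ} (hn : n < N) (x : ℝ) (p : ℕ → ℝ) :
    D n (fun x p => ∑ i ∈ s, G i x p) x p = ∑ i ∈ s, D n (G i) x p := by
  show pdx (fun x p => ∑ i ∈ s, G i x p) x p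
      + ∑ k ∈ Finset.range n, p (k+1) * pd k (fun x p => ∑ i ∈ s, G i x p) x p = _
  rw [pdx_sum s G hG x p]
  have e2 : ∀ k ∈ Finset.range n,
      p (k+1) * pd k (fun x p => ∑ i ∈ s, G i x p) x p
        = ∑ i ∈ s, p (k+1) * pd k (G i) x p := by
    intro k hk
    rw [pd_sum s G hG (lt_trans (Finset.mem_range.1 hk) hn) x p, Finset.mul_sum]
  rw [Finset.sum_congr rfl e2, Finset.sum_comm, ← Finset.sum_add_distrib]
  rfl

lemma D_const_mul (c : ℝ) (n : ℕ) (x : ℝ) (p : ℕ → ℝ) :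
    D n (fun x p => c * F x p) x p = c * D n F x p := by
  show pdx (fun x p => c * F x p) x p
      + ∑ k ∈ Finset.range n, p (k+1) * pd k (fun x p => c * F x p) x p
      = c * (pdx F x p + ∑ k ∈ Finset.range n, p (k+1) * pd k F x p)
  rw [pdx_const_mul, mul_add, Finset.mul_sum]
  congr 1
  refine Finset.sum_congr rfl fun k _ => ?_
  rw [pd_const_mul]
  ring

lemma D_coord_pow_mul (c : ℝ) (a : ℕ) {n j : ℕ} (hnj : n ≤ j) (x : ℝ) (p : ℕ → ℝ) :
    D n (fun x p => c * p j ^ a * F x p) x p = c * p j ^ a * D n F x p := by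
  show pdx (fun x p => c * p j ^ a * F x p) x p
      + ∑ k ∈ Finset.range n, p (k+1) * pd k (fun x p => c * p j ^ a * F x p) x p
      = c * p j ^ a * (pdx F x p + ∑ k ∈ Finset.range n, p (k+1) * pd k F x p)
  rw [pdx_coord_pow_mul, mul_add, Finset.mul_sum]
  congr 1
  refine Finset.sum_congr rfl fun k hk => ?_
  rw [pd_coord_pow_mul c a (by have := Finset.mem_range.1 hk; omega) x p]
  ring

lemma D_split {m : ℕ} (hm : 1 ≤ m) (F : Fn) (x : ℝ) (p : ℕ → ℝ) :
    D m F x p = D (m-1) F x p + p m * pd (m-1) F x p := by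
  obtain ⟨m', rfl⟩ : ∃ m', m = m' + 1 := ⟨m - 1, by omega⟩
  show pdx F x p + ∑ k ∈ Finset.range (m'+1), p (k+1) * pd k F x p = _
  rw [Finset.sum_range_succ]
  show _ = pdx F x p + ∑ k ∈ Finset.range (m'+1-1), p (k+1) * pd k F x p
      + p (m'+1) * pd (m'+1-1) F x p
  simp only [Nat.add_sub_cancel]
  ring

lemma pd_comm (hF : Sm N F) {i j : ℕ} (hi : i < N) (hj : j < N) (x : ℝ) (p : ℕ → ℝ) :
    pd i (pd j F) x p = pd j (pd i F) x p := by
  obtain ⟨f, hf⟩ := hF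
  rw [hf.pd_pd_eq hi hj x p, hf.pd_pd_eq hj hi x p, fderiv_fderiv_symm hf.1]

lemma pd_pdx_comm (hF : Sm N F) {j : ℕ} (hj : j < N) (x : ℝ) (p : ℕ → ℝ) :
    pd j (pdx F) x p = pdx (pd j F) x p := by
  obtain ⟨f, hf⟩ := hF
  rw [hf.pd_pdx_eq hj x p, hf.pdx_pd_eq hj x p, fderiv_fderiv_symm hf.1]

/-- The basic commutator relation `[∂_q, D_n] = ∂_{q-1}` for `1 ≤ q ≤ n`. -/
lemma pd_D (hG : Sm N G) {q n : ℕ} (hq1 : 1 ≤ q) (hqn : q ≤ n) (hnN : n < N)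
    (x : ℝ) (p : ℕ → ℝ) :
    pd q (D n G) x p = D n (pd q G) x p + pd (q-1) G x p := by
  have hqN : q < N := lt_of_le_of_lt hqn hnN
  have e : D n G = fun x p => pdx G x p
      + (fun x p => ∑ k ∈ Finset.range n,
          (fun k => fun (x : ℝ) (p : ℕ → ℝ) => p (k+1) * pd k G x p) k x p) x p := rfl
  rw [e, pd_add hG.pdx (Sm.sum _ _ fun k hk => Sm.coord_mul
      (hG.pd (lt_trans (Finset.mem_range.1 hk) hnN)) (j := k+1)
      (by have := Finset.mem_range.1 hk; omega)) hqN x p]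
  rw [pd_sum _ _ (fun k hk => Sm.coord_mul
      (hG.pd (lt_trans (Finset.mem_range.1 hk) hnN)) (j := k+1)
      (by have := Finset.mem_range.1 hk; omega)) hqN x p]
  have e2 : ∀ k ∈ Finset.range n,
      pd q (fun (x : ℝ) (p : ℕ → ℝ) => p (k+1) * pd k G x p) x p
        = (if q = k + 1 then pd k G x p else 0) + p (k+1) * pd k (pd q G) x p := by
    intro k hk
    have hkN : k < N := lt_trans (Finset.mem_range.1 hk) hnN
    by_cases hqk : q = k + 1
    · rw [if_pos hqk]
      subst hqk
      rw [pd_coord_mul_same (hG.pd hkN) hqN x p, pd_comm hG hqN hkN x p]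
    · rw [if_neg hqk, pd_coord_mul_ne hqk x p, pd_comm hG hqN hkN x p]
      ring
  rw [Finset.sum_congr rfl e2, Finset.sum_add_distrib]
  have e3 : ∑ k ∈ Finset.range n, (if q = k + 1 then pd k G x p else 0)
      = pd (q-1) G x p := by
    rw [Finset.sum_eq_single_of_mem (q-1) (Finset.mem_range.2 (by omega))]
    · rw [if_pos (by omega)]
    · intro b _ hb
      rw [if_neg (by omega)]
  rw [e3, pd_pdx_comm hG hqN x p]
  show _ = (pdx (pd q G) x p + ∑ k ∈ Finset.range n, p (k+1) * pd k (pd q G) x p) + _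
  ring

/-- Iterated commutator: `∂_q ∘ D_n^j = Σ_r C(j,r) D_n^{j-r} ∘ ∂_{q-r}` for `j < q ≤ n`. -/
lemma pd_D_iter (hG : Sm N G) {n : ℕ} (hnN : n < N) :
    ∀ (j q : ℕ), j < q → q ≤ n → ∀ (x : ℝ) (p : ℕ → ℝ),
    pd q ((D n)^[j] G) x p
      = ∑ r ∈ Finset.range (j+1),
          (j.choose r : ℝ) * ((D n)^[j-r] (pd (q-r) G)) x p := by
  intro j
  induction j with
  | zero =>
    intro q _ _ x p
    simp
  | succ j ih =>
    intro q hjq hqn x p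
    rw [Function.iterate_succ_apply']
    rw [pd_D (hG.iterD hnN j) (by omega) hqn hnN x p]
    -- first piece: D n (pd q ((D n)^[j] G))
    have hIH : pd q ((D n)^[j] G) = fun x p => ∑ r ∈ Finset.range (j+1),
        (fun r => fun (x : ℝ) (p : ℕ → ℝ) =>
          (j.choose r : ℝ) * ((D n)^[j-r] (pd (q-r) G)) x p) r x p := by
      funext x p
      exact ih q (by omega) hqn x p
    have hsm : ∀ r ∈ Finset.range (j+1), Sm N (fun (x : ℝ) (p : ℕ → ℝ) =>
        (j.choose r : ℝ) * ((D n)^[j-r] (pd (q-r) G)) x p) := by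
      intro r _
      exact ((hG.pd (by omega)).iterD hnN (j-r)).const_mul _
    rw [hIH, D_sum _ _ hsm hnN x p]
    have e1 : ∀ r ∈ Finset.range (j+1),
        D n (fun (x : ℝ) (p : ℕ → ℝ) =>
          (j.choose r : ℝ) * ((D n)^[j-r] (pd (q-r) G)) x p) x p
        = (j.choose r : ℝ) * ((D n)^[j+1-r] (pd (q-r) G)) x p := by
      intro r hr
      rw [D_const_mul]
      have : (D n) ((D n)^[j-r] (pd (q-r) G)) = (D n)^[j+1-r] (pd (q-r) G) := by
        have e4 : j + 1 - r = (j - r) + 1 := by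
          have := Finset.mem_range.1 hr
          omega
        rw [e4, Function.iterate_succ_apply']
      rw [this]
    rw [Finset.sum_congr rfl e1]
    -- second piece: pd (q-1) ((D n)^[j] G)
    rw [ih (q-1) (by omega) (by omega) x p]
    have e2 : ∀ r ∈ Finset.range (j+1),
        (j.choose r : ℝ) * ((D n)^[j-r] (pd (q-1-r) G)) x p
        = (j.choose r : ℝ) * ((D n)^[j-r] (pd (q-(r+1)) G)) x p := by
      intro r hr
      have h' : q - 1 - r = q - (r+1) := by omega
      rw [h']
    rw [Finset.sum_congr rfl e2]
    -- now combine with Pascal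
    rw [Finset.sum_range_succ' (fun r => ((j+1).choose r : ℝ)
      * ((D n)^[j+1-r] (pd (q-r) G)) x p) (j+1)]
    have e3 : ∀ r ∈ Finset.range (j+1),
        (((j+1).choose (r+1) : ℕ) : ℝ) * ((D n)^[j+1-(r+1)] (pd (q-(r+1)) G)) x p
        = (j.choose (r+1) : ℝ) * ((D n)^[j+1-(r+1)] (pd (q-(r+1)) G)) x p
          + (j.choose r : ℝ) * ((D n)^[j-r] (pd (q-(r+1)) G)) x p := by
      intro r hr
      rw [Nat.choose_succ_succ j r,
        show j + 1 - (r+1) = j - r from by omega]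
      push_cast
      ring
    rw [Finset.sum_congr rfl e3, Finset.sum_add_distrib]
    have e5 : (∑ r ∈ Finset.range (j+1),
        (j.choose (r+1) : ℝ) * ((D n)^[j+1-(r+1)] (pd (q-(r+1)) G)) x p)
        + (((j+1).choose 0 : ℕ) : ℝ) * ((D n)^[j+1-0] (pd (q-0) G)) x p
        = ∑ r ∈ Finset.range (j+1),
            (j.choose r : ℝ) * ((D n)^[j+1-r] (pd (q-r) G)) x p := by
      have h0 : (((j+1).choose 0 : ℕ) : ℝ) * ((D n)^[j+1-0] (pd (q-0) G)) x p
          = (j.choose 0 : ℝ) * ((D n)^[j+1-0] (pd (q-0) G)) x p := by norm_num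
      rw [h0, ← Finset.sum_range_succ' (fun r => (j.choose r : ℝ)
        * ((D n)^[j+1-r] (pd (q-r) G)) x p) (j+1)]
      rw [Finset.sum_range_succ]
      simp
    rw [← e5]
    push_cast
    ring

end rules

section multi
variable {F G : Fn}

lemma Sm.iterPd (h : Sm N F) {k : ℕ} (hk : k < N) (a : ℕ) : Sm N ((_root_.pd k)^[a] F) := by
  induction a with
  | zero => exact h
  | succ a ih => rw [Function.iterate_succ_apply']; exact Sm.pd ih hk

lemma pd_iterPd_comm (hG : Sm N G) {i j : ℕ} (hi : i < N) (hj : j < N) (a : ℕ) :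
    pd j ((pd i)^[a] G) = (pd i)^[a] (pd j G) := by
  induction a generalizing G hG with
  | zero => rfl
  | succ a ih =>
    rw [Function.iterate_succ_apply, Function.iterate_succ_apply,
      ih (hG.pd hi)]
    congr 1
    funext x p
    exact pd_comm hG hj hi x p

variable {m : ℕ}

lemma sm_foldl (hmN : m ≤ N) (I : Fin m → ℕ) (l : List (Fin m)) :
    ∀ G : Fn, Sm N G → Sm N (l.foldl (fun G j => (pd j.val)^[I j] G) G) := by
  induction l with
  | nil => exact fun G hG => hG
  | cons a t ih =>
    intro G hG
    exact ih _ (hG.iterPd (lt_of_lt_of_le a.isLt hmN) (I a))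

lemma foldl_pd_comm (hmN : m ≤ N) (I : Fin m → ℕ) {q : ℕ} (hq : q < N)
    (l : List (Fin m)) :
    ∀ G : Fn, Sm N G →
      pd q (l.foldl (fun G j => (pd j.val)^[I j] G) G)
        = l.foldl (fun G j => (pd j.val)^[I j] G) (pd q G) := by
  induction l with
  | nil => exact fun G _ => rfl
  | cons a t ih =>
    intro G hG
    have haN : (a : ℕ) < N := lt_of_lt_of_le a.isLt hmN
    show pd q (t.foldl _ ((pd a.val)^[I a] G)) = t.foldl _ ((pd a.val)^[I a] (pd q G))
    rw [ih _ (hG.iterPd haN (I a)), pd_iterPd_comm hG haN hq (I a)]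

lemma foldl_congr {I I' : Fin m → ℕ} (l : List (Fin m)) (h : ∀ j ∈ l, I j = I' j) :
    ∀ G : Fn, l.foldl (fun G j => (pd j.val)^[I j] G) G
      = l.foldl (fun G j => (pd j.val)^[I' j] G) G := by
  induction l with
  | nil => exact fun G => rfl
  | cons a t ih =>
    intro G
    show t.foldl _ ((pd a.val)^[I a] G) = t.foldl _ ((pd a.val)^[I' a] G)
    rw [h a List.mem_cons_self, ih fun j hj => h j (List.mem_cons_of_mem a hj)]

lemma foldl_update (hmN : m ≤ N) (I : Fin m → ℕ) (q : Fin m) (l : List (Fin m)) :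
    ∀ G : Fn, Sm N G → l.Nodup → q ∈ l →
      l.foldl (fun G j => (pd j.val)^[Function.update I q (I q + 1) j] G) G
        = pd q.val (l.foldl (fun G j => (pd j.val)^[I j] G) G) := by
  induction l with
  | nil => intro G _ _ h; exact absurd h List.not_mem_nil
  | cons a t ih =>
    intro G hG hnd hq
    have hqN : (q : ℕ) < N := lt_of_lt_of_le q.isLt hmN
    have haN : (a : ℕ) < N := lt_of_lt_of_le a.isLt hmN
    by_cases h : a = q
    · subst h
      have hat : a ∉ t := (List.nodup_cons.1 hnd).1
      show t.foldl _ ((pd a.val)^[Function.update I a (I a + 1) a] G) = _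
      rw [Function.update_self]
      have e1 : (pd a.val)^[I a + 1] G = (pd a.val)^[I a] (pd a.val G) :=
        Function.iterate_succ_apply _ _ _
      have h' : ∀ j ∈ t, Function.update I a (I a + 1) j = I j := by
        intro j hj
        exact Function.update_of_ne (fun hj' => hat (by rwa [hj'] at hj)) _ I
      rw [e1, foldl_congr t h']
      show _ = pd a.val (t.foldl _ ((pd a.val)^[I a] G))
      rw [foldl_pd_comm hmN I haN t _ (hG.iterPd haN (I a))]
      congr 1
      rw [← Function.iterate_succ_apply, Function.iterate_succ_apply']
    · have hqt : q ∈ t := by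
        rcases List.mem_cons.1 hq with h' | h'
        · exact absurd h'.symm h
        · exact h'
      show t.foldl _ ((pd a.val)^[Function.update I q (I q + 1) a] G) = _
      rw [Function.update_of_ne h]
      exact ih _ (hG.iterPd haN (I a)) (List.nodup_cons.1 hnd).2 hqt

lemma Sm.pdMulti (hF : Sm N F) (hmN : m ≤ N) (I : Fin m → ℕ) :
    Sm N (_root_.pdMulti m I F) :=
  sm_foldl hmN I _ F hF

lemma pdMulti_update (hF : Sm N F) (hmN : m ≤ N) (I : Fin m → ℕ) (q : Fin m) :
    pdMulti m (Function.update I q (I q + 1)) F = pd q.val (pdMulti m I F) :=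
  foldl_update hmN I q (List.finRange m) F hF (List.nodup_finRange m)
    (List.mem_finRange q)

lemma pdMulti_zero (F : Fn) : pdMulti m (fun _ => 0) F = F := by
  show (List.finRange m).foldl _ F = F
  generalize List.finRange m = l
  induction l generalizing F with
  | nil => rfl
  | cons a t ih => exact ih F

end multi

section weights
variable {m : ℕ}

lemma single_le_wnorm (I : Fin m → ℕ) (q : Fin m) :
    (m - (q : ℕ)) * I q ≤ wnorm m I := by
  unfold wnorm
  exact Finset.single_le_sum (f := fun j : Fin m => (m - (j : ℕ)) * I j)
    (fun _ _ => Nat.zero_le _) (Finset.mem_univ q)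

lemma wnorm_update_add (I : Fin m → ℕ) (q : Fin m) :
    wnorm m (Function.update I q (I q + 1)) = wnorm m I + (m - (q : ℕ)) := by
  unfold wnorm
  have e : (fun j : Fin m => (m - (j : ℕ)) * Function.update I q (I q + 1) j)
      = Function.update (fun j : Fin m => (m - (j : ℕ)) * I j) q
          ((m - (q : ℕ)) * (I q + 1)) := by
    funext j
    by_cases h : j = q
    · subst h; rw [Function.update_self, Function.update_self]
    · rw [Function.update_of_ne h, Function.update_of_ne h]
  rw [show (∑ j : Fin m, (m - (j : ℕ)) * Function.update I q (I q + 1) j)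
      = ∑ j : Fin m, Function.update (fun j : Fin m => (m - (j : ℕ)) * I j) q
          ((m - (q : ℕ)) * (I q + 1)) j from by rw [← e]]
  rw [Finset.sum_update_of_mem (Finset.mem_univ q),
    ← Finset.add_sum_erase _ _ (Finset.mem_univ q),
    Finset.sdiff_singleton_eq_erase]
  ring

lemma anorm_update_add (I : Fin m → ℕ) (q : Fin m) :
    anorm m (Function.update I q (I q + 1)) = anorm m I + 1 := by
  unfold anorm
  rw [show (∑ j : Fin m, Function.update I q (I q + 1) j)
      = ∑ j : Fin m, Function.update I q (I q + 1) j from rfl]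
  rw [Finset.sum_update_of_mem (Finset.mem_univ q),
    ← Finset.add_sum_erase _ _ (Finset.mem_univ q),
    Finset.sdiff_singleton_eq_erase]
  ring

lemma update_sub_add {I : Fin m → ℕ} {q : Fin m} (hq : 1 ≤ I q) :
    Function.update (Function.update I q (I q - 1)) q
      (Function.update I q (I q - 1) q + 1) = I := by
  rw [Function.update_self, Function.update_idem]
  have : I q - 1 + 1 = I q := by omega
  rw [this, Function.update_eq_self]

lemma mem_piFilter_iff {k K : ℕ} (hkK : k ≤ K) {I : Fin m → ℕ} :
    I ∈ (Fintype.piFinset fun _ : Fin m => Finset.range (K + 1)).filter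
        (fun I => wnorm m I ≤ k) ↔ wnorm m I ≤ k := by
  rw [Finset.mem_filter]
  constructor
  · exact fun h => h.2
  · intro h
    refine ⟨Fintype.mem_piFinset.2 fun j => Finset.mem_range.2 ?_, h⟩
    have h1 := le_trans (single_le_wnorm I j) h
    have h2 : 1 ≤ m - (j : ℕ) := by have := j.isLt; omega
    have : I j ≤ (m - (j : ℕ)) * I j := Nat.le_mul_of_pos_left _ (by omega)
    omega

end weights

section coeff
variable {m : ℕ}

lemma prodA_ne_zero (I : Fin m → ℕ) :
    (∏ j : Fin m, ((m - (j : ℕ)).factorial : ℝ) ^ I j) ≠ 0 :=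
  Finset.prod_ne_zero_iff.2 fun j _ =>
    pow_ne_zero _ (Nat.cast_ne_zero.2 (Nat.factorial_ne_zero _))

lemma prodB_ne_zero (I : Fin m → ℕ) :
    (∏ j : Fin m, ((I j).factorial : ℝ)) ≠ 0 :=
  Finset.prod_ne_zero_iff.2 fun j _ => Nat.cast_ne_zero.2 (Nat.factorial_ne_zero _)

lemma fact_cast_ne_zero (n : ℕ) : ((n.factorial : ℕ) : ℝ) ≠ 0 :=
  Nat.cast_ne_zero.2 (Nat.factorial_ne_zero _)

lemma coeff_term (k : ℕ) (J : Fin m → ℕ) (q : Fin m) (hq : 1 ≤ J q)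
    (hw : wnorm m J ≤ k + 1) :
    coeffA m k (Function.update J q (J q - 1))
      * (((k - (wnorm m J - (m - (q : ℕ)))).choose (m - (q : ℕ) - 1) : ℕ) : ℝ)
    = (((m - (q : ℕ)) * J q : ℕ) : ℝ) * (k.factorial : ℝ)
      / ((∏ j : Fin m, ((m - (j : ℕ)).factorial : ℝ) ^ J j)
        * (∏ j : Fin m, ((J j).factorial : ℝ))
        * ((k + 1 - wnorm m J).factorial : ℝ)) := by
  set s := m - (q : ℕ) with hs
  set w := wnorm m J with hwdef
  set J' := Function.update J q (J q - 1) with hJ'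
  have hs1 : 1 ≤ s := by have := q.isLt; omega
  have hsw : s ≤ w := le_trans (Nat.le_mul_of_pos_right s (by omega)) (single_le_wnorm J q)
  -- wnorm of J'
  have hw' : wnorm m J' = w - s := by
    have h1 := wnorm_update_add J' q
    rw [update_sub_add hq] at h1
    have : (m - (q : ℕ)) = s := rfl
    omega
  -- product A relation
  have hA : (∏ j : Fin m, ((m - (j : ℕ)).factorial : ℝ) ^ J j)
      = (s.factorial : ℝ) * ∏ j : Fin m, ((m - (j : ℕ)).factorial : ℝ) ^ J' j := by
    have e : (fun j : Fin m => ((m - (j : ℕ)).factorial : ℝ) ^ J' j)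
        = Function.update (fun j : Fin m => ((m - (j : ℕ)).factorial : ℝ) ^ J j) q
            ((s.factorial : ℝ) ^ (J q - 1)) := by
      funext j
      by_cases h : j = q
      · subst h; rw [Function.update_self]
        show ((m - (j : ℕ)).factorial : ℝ) ^ (Function.update J j (J j - 1) j) = _
        rw [Function.update_self]
      · rw [Function.update_of_ne h]
        show ((m - (j : ℕ)).factorial : ℝ) ^ (Function.update J q (J q - 1) j) = _
        rw [Function.update_of_ne h]
    rw [show (∏ j : Fin m, ((m - (j : ℕ)).factorial : ℝ) ^ J' j)
        = ∏ j : Fin m, Function.update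
            (fun j : Fin m => ((m - (j : ℕ)).factorial : ℝ) ^ J j) q
            ((s.factorial : ℝ) ^ (J q - 1)) j from by rw [← e]]
    rw [Finset.prod_update_of_mem (Finset.mem_univ q),
      ← Finset.mul_prod_erase _ _ (Finset.mem_univ q),
      Finset.sdiff_singleton_eq_erase]
    have hpow : ((s.factorial : ℝ)) ^ (J q) = (s.factorial : ℝ) * ((s.factorial : ℝ)) ^ (J q - 1) := by
      conv_lhs => rw [show J q = (J q - 1) + 1 from by omega]
      rw [pow_succ]
      ring
    rw [hpow]
    ring
  -- product B relation
  have hB : (∏ j : Fin m, ((J j).factorial : ℝ))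
      = (J q : ℝ) * ∏ j : Fin m, ((J' j).factorial : ℝ) := by
    have e : (fun j : Fin m => ((J' j).factorial : ℝ))
        = Function.update (fun j : Fin m => ((J j).factorial : ℝ)) q
            (((J q - 1).factorial : ℝ)) := by
      funext j
      by_cases h : j = q
      · subst h
        show (((Function.update J j (J j - 1)) j).factorial : ℝ) = _
        rw [Function.update_self, Function.update_self]
      · show (((Function.update J q (J q - 1)) j).factorial : ℝ) = _
        rw [Function.update_of_ne h, Function.update_of_ne h]
    rw [show (∏ j : Fin m, ((J' j).factorial : ℝ))
        = ∏ j : Fin m, Function.update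
            (fun j : Fin m => ((J j).factorial : ℝ)) q
            (((J q - 1).factorial : ℝ)) j from by rw [← e]]
    rw [Finset.prod_update_of_mem (Finset.mem_univ q),
      ← Finset.mul_prod_erase _ _ (Finset.mem_univ q),
      Finset.sdiff_singleton_eq_erase]
    have hfq : ((J q).factorial : ℝ) = (J q : ℝ) * ((J q - 1).factorial : ℝ) := by
      have hn : (J q).factorial = (J q) * (J q - 1).factorial := by
        conv_lhs => rw [show J q = (J q - 1) + 1 from by omega]
        rw [Nat.factorial_succ]
        congr 1
        omega
      rw [hn]
      push_cast
      ring
    rw [hfq]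
    ring
  -- the choose function
  have hr : s - 1 ≤ k - (w - s) := by omega
  have h2 : k - (w - s) - (s - 1) = k + 1 - w := by omega
  rw [Nat.cast_choose ℝ hr, h2]
  -- s! = s * (s-1)!
  have hsf : (s.factorial : ℝ) = (s : ℝ) * ((s - 1).factorial : ℝ) := by
    have hn : s.factorial = s * (s - 1).factorial := by
      conv_lhs => rw [show s = (s - 1) + 1 from by omega]
      rw [Nat.factorial_succ]
      congr 1
      omega
    rw [hn]
    push_cast
    ring
  -- unfold coeffA
  show (k.factorial : ℝ) /
      ((∏ j : Fin m, ((m - (j : ℕ)).factorial : ℝ) ^ J' j) *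
        (∏ j : Fin m, ((J' j).factorial : ℝ)) *
        ((k - wnorm m J').factorial : ℝ)) * _ = _
  rw [hw', hA, hB, hsf]
  have hA0 := prodA_ne_zero (m := m) J'
  have hB0 := prodB_ne_zero (m := m) J'
  have hf1 := fact_cast_ne_zero (k - (w - s))
  have hf2 := fact_cast_ne_zero (s - 1)
  have hf3 := fact_cast_ne_zero (k + 1 - w)
  have hsr : (s : ℝ) ≠ 0 := Nat.cast_ne_zero.2 (by omega)
  have hJr : (J q : ℝ) ≠ 0 := Nat.cast_ne_zero.2 (by omega)
  push_cast
  field_simp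

lemma coeff_step (k : ℕ) (J : Fin m → ℕ) (hw : wnorm m J ≤ k + 1) :
    coeffA m (k+1) J
      = (if wnorm m J ≤ k then coeffA m k J else 0)
        + ∑ q ∈ Finset.univ.filter (fun q : Fin m => 1 ≤ J q),
            coeffA m k (Function.update J q (J q - 1))
              * (((k - (wnorm m J - (m - (q : ℕ)))).choose (m - (q : ℕ) - 1) : ℕ) : ℝ) := by
  rw [Finset.sum_congr rfl (fun q hq => coeff_term k J q (Finset.mem_filter.1 hq).2 hw)]
  rw [← Finset.sum_div, ← Finset.sum_mul]
  have hsum : (∑ q ∈ Finset.univ.filter (fun q : Fin m => 1 ≤ J q),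
      (((m - (q : ℕ)) * J q : ℕ) : ℝ)) = (wnorm m J : ℝ) := by
    rw [← Nat.cast_sum]
    congr 1
    have hfil := Finset.sum_filter_of_ne (s := (Finset.univ : Finset (Fin m)))
      (p := fun q : Fin m => 1 ≤ J q)
      (f := fun q : Fin m => (m - (q : ℕ)) * J q)
      (fun q _ h => Nat.pos_of_ne_zero (fun h0 => h (by show (m - (q:ℕ)) * J q = 0; rw [h0, mul_zero])))
    rw [hfil]
    rfl
  rw [hsum]
  have hA0 := prodA_ne_zero (m := m) J
  have hB0 := prodB_ne_zero (m := m) J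
  by_cases hwk : wnorm m J ≤ k
  · rw [if_pos hwk]
    show ((k+1).factorial : ℝ) /
        ((∏ j : Fin m, ((m - (j : ℕ)).factorial : ℝ) ^ J j) *
          (∏ j : Fin m, ((J j).factorial : ℝ)) *
          ((k + 1 - wnorm m J).factorial : ℝ))
      = (k.factorial : ℝ) /
        ((∏ j : Fin m, ((m - (j : ℕ)).factorial : ℝ) ^ J j) *
          (∏ j : Fin m, ((J j).factorial : ℝ)) *
          ((k - wnorm m J).factorial : ℝ)) + _
    rw [show k + 1 - wnorm m J = (k - wnorm m J) + 1 from by omega,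
      Nat.factorial_succ ((k - wnorm m J)), Nat.factorial_succ k]
    have hf0 := fact_cast_ne_zero (k - wnorm m J)
    have hkw : ((k - wnorm m J : ℕ) : ℝ) = (k : ℝ) - (wnorm m J : ℝ) :=
      Nat.cast_sub hwk
    have hwle : (wnorm m J : ℝ) ≤ (k : ℝ) := by exact_mod_cast hwk
    push_cast [hkw]
    have hpos : (k : ℝ) - (wnorm m J : ℝ) + 1 ≠ 0 := by
      have : (0:ℝ) < (k : ℝ) - (wnorm m J : ℝ) + 1 := by linarith
      exact ne_of_gt this
    field_simp
    ring
  · rw [if_neg hwk]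
    have hw1 : wnorm m J = k + 1 := by omega
    show ((k+1).factorial : ℝ) /
        ((∏ j : Fin m, ((m - (j : ℕ)).factorial : ℝ) ^ J j) *
          (∏ j : Fin m, ((J j).factorial : ℝ)) *
          ((k + 1 - wnorm m J).factorial : ℝ)) = _
    rw [hw1, Nat.sub_self, Nat.factorial_zero, Nat.factorial_succ k]
    push_cast
    ring

end coeff

section main
variable {N : ℕ}

lemma main_expansion {m : ℕ} (F : Fn) (hmN : m < N) (hF : Sm N F) :
    ∀ k, k < m →
      (_root_.D m)^[k] F = fun x p =>
        ∑ I ∈ (Fintype.piFinset fun _ : Fin m => Finset.range (k + 1)) |>.filter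
            (fun I => wnorm m I ≤ k),
          coeffA m k I * p m ^ anorm m I *
            ((_root_.D (m - 1))^[k - wnorm m I] (_root_.pdMulti m I F)) x p := by
  intro k
  induction k with
  | zero =>
    intro hk
    funext x p
    have hset : (Fintype.piFinset fun _ : Fin m => Finset.range (0 + 1)).filter
        (fun I => wnorm m I ≤ 0) = {fun _ => 0} := by
      apply Finset.eq_singleton_iff_unique_mem.2
      constructor
      · rw [mem_piFilter_iff le_rfl]
        simp [wnorm]
      · intro I hI
        rw [mem_piFilter_iff le_rfl] at hI
        funext j
        have h1 := le_trans (single_le_wnorm I j) hI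
        have h2 : 1 ≤ m - (j : ℕ) := by have := j.isLt; omega
        have h3 : I j ≤ (m - (j : ℕ)) * I j := Nat.le_mul_of_pos_left _ (by omega)
        omega
    rw [hset, Finset.sum_singleton, pdMulti_zero]
    have hc : coeffA m 0 (fun _ => 0) = 1 := by
      unfold coeffA wnorm
      simp
    have ha : anorm m (fun _ => 0) = 0 := by unfold anorm; simp
    have hw : wnorm m (fun _ => 0) = 0 := by unfold wnorm; simp
    rw [hc, ha, hw]
    simp
  | succ k ih =>
    intro hk1
    have hk : k < m := by omega
    have hm1 : 1 ≤ m := by omega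
    have hmle : m ≤ N := le_of_lt hmN
    have hm1N : m - 1 < N := by omega
    have hfin : ∀ r : ℕ, m - 1 - r < m :=
      fun r => lt_of_le_of_lt (Nat.sub_le _ _) (Nat.sub_lt (by omega) one_pos)
    funext x p
    -- the index sets
    set SSk := (Fintype.piFinset fun _ : Fin m => Finset.range (k + 1)).filter
      (fun I => wnorm m I ≤ k) with hSSk
    -- term function
    set gI : (Fin m → ℕ) → Fn := fun I => fun x p =>
      coeffA m k I * p m ^ anorm m I *
        ((_root_.D (m - 1))^[k - wnorm m I] (_root_.pdMulti m I F)) x p with hgI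
    have hpt : (_root_.D m)^[k] F = fun x p => ∑ I ∈ SSk, gI I x p := ih hk
    have hsm : ∀ I ∈ SSk, Sm N (gI I) := by
      intro I _
      exact Sm.coord_pow_mul (Sm.iterD (hF.pdMulti hmle I) hm1N _) _ hmN _
    rw [Function.iterate_succ_apply', hpt, D_sum SSk gI hsm hmN x p]
    -- per-term expansion
    have hterm : ∀ I ∈ SSk, _root_.D m (gI I) x p =
        coeffA m k I * p m ^ anorm m I *
          ((_root_.D (m - 1))^[(k - wnorm m I) + 1] (_root_.pdMulti m I F)) x p
        + ∑ r ∈ Finset.range (k - wnorm m I + 1),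
            coeffA m k I * ((k - wnorm m I).choose r : ℝ) * p m ^ (anorm m I + 1) *
              ((_root_.D (m - 1))^[k - wnorm m I - r]
                (_root_.pdMulti m (Function.update I ⟨m - 1 - r, hfin r⟩
                  (I ⟨m - 1 - r, hfin r⟩ + 1)) F)) x p := by
      intro I hI
      have hwI : wnorm m I ≤ k := (mem_piFilter_iff le_rfl).1 hI
      show _root_.D m (fun x p => coeffA m k I * p m ^ anorm m I *
          ((_root_.D (m - 1))^[k - wnorm m I] (_root_.pdMulti m I F)) x p) x p = _
      rw [D_coord_pow_mul (F := (_root_.D (m - 1))^[k - wnorm m I] (_root_.pdMulti m I F))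
        (coeffA m k I) (anorm m I) (le_refl m) x p]
      rw [D_split hm1 ((_root_.D (m - 1))^[k - wnorm m I] (_root_.pdMulti m I F)) x p]
      have hDs : _root_.D (m - 1) ((_root_.D (m - 1))^[k - wnorm m I] (_root_.pdMulti m I F))
          = (_root_.D (m - 1))^[(k - wnorm m I) + 1] (_root_.pdMulti m I F) :=
        (Function.iterate_succ_apply' _ _ _).symm
      rw [hDs]
      rw [pd_D_iter (hF.pdMulti hmle I) hm1N (k - wnorm m I) (m - 1)
        (by omega) (le_refl (m - 1)) x p]
      have hupd : ∀ r ∈ Finset.range (k - wnorm m I + 1),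
          ((k - wnorm m I).choose r : ℝ) *
            ((_root_.D (m - 1))^[k - wnorm m I - r]
              (_root_.pd (m - 1 - r) (_root_.pdMulti m I F))) x p
          = ((k - wnorm m I).choose r : ℝ) *
            ((_root_.D (m - 1))^[k - wnorm m I - r]
              (_root_.pdMulti m (Function.update I ⟨m - 1 - r, hfin r⟩
                (I ⟨m - 1 - r, hfin r⟩ + 1)) F)) x p := by
        intro r _
        rw [pdMulti_update hF hmle I ⟨m - 1 - r, hfin r⟩]
      rw [Finset.sum_congr rfl hupd, mul_add]
      congr 1
      rw [Finset.mul_sum, Finset.mul_sum]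
      refine Finset.sum_congr rfl fun r _ => ?_
      rw [pow_succ]
      ring
    rw [Finset.sum_congr rfl hterm, Finset.sum_add_distrib]
    -- now transform the RHS (goal's right side)
    have hff : ((Fintype.piFinset fun _ : Fin m => Finset.range (k + 1 + 1)).filter
        (fun I => wnorm m I ≤ k + 1)).filter (fun I => wnorm m I ≤ k) = SSk := by
      ext I
      rw [Finset.mem_filter, hSSk]
      constructor
      · rintro ⟨_, h2⟩
        exact (mem_piFilter_iff le_rfl).2 h2
      · intro h
        have hw := (mem_piFilter_iff le_rfl).1 h
        exact ⟨(mem_piFilter_iff (by omega)).2 (by omega), hw⟩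
    have hRHS : ∑ J ∈ (Fintype.piFinset fun _ : Fin m => Finset.range (k + 1 + 1)).filter
          (fun J => wnorm m J ≤ k + 1),
        coeffA m (k+1) J * p m ^ anorm m J *
          ((_root_.D (m - 1))^[k + 1 - wnorm m J] (_root_.pdMulti m J F)) x p
        = (∑ I ∈ SSk, coeffA m k I * p m ^ anorm m I *
            ((_root_.D (m - 1))^[(k - wnorm m I) + 1] (_root_.pdMulti m I F)) x p)
          + ∑ I ∈ SSk, ∑ r ∈ Finset.range (k - wnorm m I + 1),
              coeffA m k I * ((k - wnorm m I).choose r : ℝ) * p m ^ (anorm m I + 1) *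
                ((_root_.D (m - 1))^[k - wnorm m I - r]
                  (_root_.pdMulti m (Function.update I ⟨m - 1 - r, hfin r⟩
                    (I ⟨m - 1 - r, hfin r⟩ + 1)) F)) x p := by
      have hsplit : ∀ J ∈ (Fintype.piFinset fun _ : Fin m =>
            Finset.range (k + 1 + 1)).filter (fun J => wnorm m J ≤ k + 1),
          coeffA m (k+1) J * p m ^ anorm m J *
            ((_root_.D (m - 1))^[k + 1 - wnorm m J] (_root_.pdMulti m J F)) x p
          = (if wnorm m J ≤ k then coeffA m k J * p m ^ anorm m J *
              ((_root_.D (m - 1))^[k + 1 - wnorm m J] (_root_.pdMulti m J F)) x p else 0)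
            + ∑ q ∈ Finset.univ.filter (fun q : Fin m => 1 ≤ J q),
                coeffA m k (Function.update J q (J q - 1))
                  * (((k - (wnorm m J - (m - (q : ℕ)))).choose (m - (q : ℕ) - 1) : ℕ) : ℝ)
                  * p m ^ anorm m J *
                  ((_root_.D (m - 1))^[k + 1 - wnorm m J] (_root_.pdMulti m J F)) x p := by
        intro J hJ
        have hwJ : wnorm m J ≤ k + 1 := (mem_piFilter_iff le_rfl).1 hJ
        rw [coeff_step k J hwJ, add_mul, add_mul, Finset.sum_mul, Finset.sum_mul,
          ite_mul, ite_mul, zero_mul, zero_mul]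
      rw [Finset.sum_congr rfl hsplit, Finset.sum_add_distrib]
      congr 1
      · -- the diagonal part
        rw [← Finset.sum_filter, hff]
        refine Finset.sum_congr rfl fun I hI => ?_
        have hwI : wnorm m I ≤ k := (mem_piFilter_iff le_rfl).1 hI
        rw [show k + 1 - wnorm m I = (k - wnorm m I) + 1 from by omega]
      · -- the off-diagonal part, reindexed
        rw [Finset.sum_sigma', Finset.sum_sigma']
        refine Finset.sum_nbij'
          (fun (b : Σ _ : Fin m → ℕ, Fin m) =>
            (⟨Function.update b.1 b.2 (b.1 b.2 - 1), m - 1 - (b.2 : ℕ)⟩ : Σ _ : Fin m → ℕ, ℕ))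
          (fun (a : Σ _ : Fin m → ℕ, ℕ) =>
            (⟨Function.update a.1 ⟨m - 1 - a.2, hfin a.2⟩
                (a.1 ⟨m - 1 - a.2, hfin a.2⟩ + 1),
              (⟨m - 1 - a.2, hfin a.2⟩ : Fin m)⟩ : Σ _ : Fin m → ℕ, Fin m))
          ?_ ?_ ?_ ?_ ?_
        · -- membership forward : (J, q) ↦ (J - e_q, m-1-q) lands in SSk-sigma
          rintro ⟨J, q⟩ hb
          dsimp only
          rw [Finset.mem_sigma] at hb
          obtain ⟨hJ, hq⟩ := hb
          have hwJ : wnorm m J ≤ k + 1 := (mem_piFilter_iff le_rfl).1 hJ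
          have hJq : 1 ≤ J q := (Finset.mem_filter.1 hq).2
          have hrel := wnorm_update_add (Function.update J q (J q - 1)) q
          rw [update_sub_add hJq] at hrel
          have hsq : 1 ≤ m - (q : ℕ) := by have := q.isLt; omega
          have hsle : m - (q : ℕ) ≤ wnorm m J :=
            le_trans (Nat.le_mul_of_pos_right _ (by omega)) (single_le_wnorm J q)
          rw [Finset.mem_sigma]
          dsimp only
          constructor
          · rw [hSSk, mem_piFilter_iff le_rfl]
            omega
          · rw [Finset.mem_range]
            omega
        · -- membership backward
          rintro ⟨I, r⟩ ha
          dsimp only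
          rw [Finset.mem_sigma] at ha
          dsimp only at ha
          obtain ⟨hI, hr⟩ := ha
          have hwI : wnorm m I ≤ k := (mem_piFilter_iff le_rfl).1 hI
          have hrr : r ≤ k - wnorm m I := by
            have := Finset.mem_range.1 hr; omega
          have hrel := wnorm_update_add I ⟨m - 1 - r, hfin r⟩
          rw [Finset.mem_sigma]
          dsimp only
          constructor
          · rw [mem_piFilter_iff le_rfl]
            have : (((⟨m - 1 - r, hfin r⟩ : Fin m)) : ℕ) = m - 1 - r := rfl
            omega
          · rw [Finset.mem_filter]
            refine ⟨Finset.mem_univ _, ?_⟩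
            rw [Function.update_self]
            omega
        · -- left inverse on (J,q) side
          rintro ⟨J, q⟩ hb
          rw [Finset.mem_sigma] at hb
          dsimp only at hb
          obtain ⟨hJ, hq⟩ := hb
          have hJq : 1 ≤ J q := (Finset.mem_filter.1 hq).2
          have hqm : (q : ℕ) < m := q.isLt
          dsimp only
          have hq' : (⟨m - 1 - (m - 1 - (q : ℕ)), hfin _⟩ : Fin m) = q := by
            apply Fin.ext
            show m - 1 - (m - 1 - (q : ℕ)) = (q : ℕ)
            omega
          rw [hq', update_sub_add hJq]
        · -- right inverse on (I,r) side
          rintro ⟨I, r⟩ ha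
          rw [Finset.mem_sigma] at ha
          dsimp only at ha
          obtain ⟨hI, hr⟩ := ha
          have hwI : wnorm m I ≤ k := (mem_piFilter_iff le_rfl).1 hI
          have hrr : r ≤ k - wnorm m I := by
            have := Finset.mem_range.1 hr; omega
          dsimp only
          rw [Function.update_self, Nat.add_sub_cancel, Function.update_idem,
            Function.update_eq_self]
          refine Sigma.ext rfl (heq_of_eq ?_)
          show m - 1 - (m - 1 - r) = r
          omega
        · -- value equality
          rintro ⟨J, q⟩ hb
          rw [Finset.mem_sigma] at hb
          dsimp only at hb
          obtain ⟨hJ, hq⟩ := hb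
          have hwJ : wnorm m J ≤ k + 1 := (mem_piFilter_iff le_rfl).1 hJ
          have hJq : 1 ≤ J q := (Finset.mem_filter.1 hq).2
          have hqm : (q : ℕ) < m := q.isLt
          have hsq : 1 ≤ m - (q : ℕ) := by omega
          dsimp only
          have hq' : (⟨m - 1 - (m - 1 - (q : ℕ)), hfin _⟩ : Fin m) = q := by
            apply Fin.ext
            show m - 1 - (m - 1 - (q : ℕ)) = (q : ℕ)
            omega
          rw [hq', update_sub_add hJq]
          have hrel : wnorm m J
              = wnorm m (Function.update J q (J q - 1)) + (m - (q : ℕ)) := by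
            conv_lhs => rw [← update_sub_add hJq]
            exact wnorm_update_add _ q
          have e3 : anorm m J = anorm m (Function.update J q (J q - 1)) + 1 := by
            conv_lhs => rw [← update_sub_add hJq]
            exact anorm_update_add _ q
          have e1 : k - (wnorm m J - (m - (q : ℕ)))
              = k - wnorm m (Function.update J q (J q - 1)) := by omega
          have e2 : m - (q : ℕ) - 1 = m - 1 - (q : ℕ) := by omega
          have e4 : k + 1 - wnorm m J
              = k - wnorm m (Function.update J q (J q - 1)) - (m - 1 - (q : ℕ)) := by
            omega
          simp only [e1, e2, e3, e4]
    rw [hRHS]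
  
end main

end DExp

namespace DExp

lemma smoothUpTo_sm {F : Fn} {M : ℕ} (h : SmoothUpTo F M) {N : ℕ} (hMN : M ≤ N) :
    Sm N F := by
  obtain ⟨hdep, hsmooth⟩ := h
  refine ⟨fun v : ℝ × (Fin N → ℝ) =>
    F v.1 (fun i => if hi : i < M then v.2 ⟨i, lt_of_lt_of_le hi hMN⟩ else 0), ?_, ?_⟩
  · have hπ : ContDiff ℝ ∞ (fun v : ℝ × (Fin N → ℝ) =>
        ((v.1, fun i : Fin M => v.2 ⟨i.1, lt_of_lt_of_le i.2 hMN⟩) : ℝ × (Fin M → ℝ))) :=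
      contDiff_fst.prodMk (contDiff_pi.2 fun i =>
        contDiff_pi.mp (contDiff_snd : ContDiff ℝ ∞ (Prod.snd : ℝ × (Fin N → ℝ) → Fin N → ℝ)) ⟨i.1, lt_of_lt_of_le i.2 hMN⟩)
    exact (hsmooth.of_le (by simp)).comp hπ
  · intro x p
    exact hdep x p _ (fun i hi => by rw [dif_pos hi])

end DExp

/-- Main terms of a power: for `m > k ≥ 1`,
`D_m^k = Σ_{‖I‖ ≤ k} a_I^{(k)} p_m^{|I|} D_{m-1}^{k - ‖I‖} ∂^I`.
(Every multi-index `I ≥ 0` with `‖I‖ ≤ k` has all entries `≤ k`, since each weight is `≥ 1`;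
hence the finite sum below ranges over exactly these multi-indices.) -/
theorem D_pow_expansion (m k : ℕ) (hk : 1 ≤ k) (hkm : k < m) (F : Fn) (hF : SmoothFn F)
    (x : ℝ) (p : ℕ → ℝ) :
    (D m)^[k] F x p =
      ∑ I ∈ (Fintype.piFinset fun _ : Fin m => Finset.range (k + 1)) |>.filter
          (fun I => wnorm m I ≤ k),
        coeffA m k I * p m ^ anorm m I *
          ((D (m - 1))^[k - wnorm m I] (pdMulti m I F)) x p := by
  obtain ⟨M, hM⟩ := hF
  have hmN : m < max M (m + 1) := lt_of_lt_of_le (Nat.lt_succ_self m) (le_max_right _ _)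
  have hrep : DExp.Sm (max M (m + 1)) F := DExp.smoothUpTo_sm hM (le_max_left _ _)
  have hmain := DExp.main_expansion F hmN hrep k hkm
  exact congrFun (congrFun hmain x) p
end

section
/- For all integers m ≥ n ≥ 1 and every smooth function F of (x, p_0, p_1, …) depending on finitely many variables, one has the telescoping identity E_m^n (D_m F) = (−1)^n D_m^{n+1} (∂_n F). -/
/-! ### Auxiliary development -/

namespace EDAux

open Function

/-- Finite-dimensional representation of an `Fn`. -/
noncomputable def fdrep (M : ℕ) (F : Fn) : ℝ × (Fin M → ℝ) → ℝ :=
  fun v => F v.1 (fun i => if h : i < M then v.2 ⟨i, h⟩ else 0)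

lemma fdrep_eq {F : Fn} {M : ℕ} (hF : FnDependsOn F M) (x : ℝ) (p : ℕ → ℝ) :
    F x p = fdrep M F (x, fun i : Fin M => p i) :=
  hF x p _ (fun i hi => by simp [hi])

lemma line_update (M : ℕ) (x : ℝ) (c : Fin M → ℝ) (k : Fin M) (t : ℝ) :
    HasDerivAt (fun s : ℝ => ((x, Function.update c k s) : ℝ × (Fin M → ℝ)))
      ((0 : ℝ), Pi.single k (1 : ℝ)) t := by
  have h : (fun s : ℝ => ((x, Function.update c k s) : ℝ × (Fin M → ℝ)))
      = fun s => ((x, Function.update c k 0) : ℝ × (Fin M → ℝ))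
          + s • ((0 : ℝ), Pi.single k (1 : ℝ)) := by
    funext s
    refine Prod.ext (by simp) ?_
    funext i
    rcases eq_or_ne i k with rfl | hik
    · simp
    · simp [Function.update_of_ne hik, Pi.single_apply, hik]
  rw [h]
  have H : HasDerivAt (fun s : ℝ => s • (((0 : ℝ), Pi.single k (1:ℝ)) : ℝ × (Fin M → ℝ)))
      (((0 : ℝ), Pi.single k (1:ℝ)) : ℝ × (Fin M → ℝ)) t := by
    simpa using (hasDerivAt_id t).smul_const (((0 : ℝ), Pi.single k (1:ℝ)) : ℝ × (Fin M → ℝ))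
  exact H.const_add _

lemma line_x (M : ℕ) (c : Fin M → ℝ) (t : ℝ) :
    HasDerivAt (fun s : ℝ => ((s, c) : ℝ × (Fin M → ℝ)))
      ((1 : ℝ), (0 : Fin M → ℝ)) t := by
  have h : (fun s : ℝ => ((s, c) : ℝ × (Fin M → ℝ)))
      = fun s => ((0, c) : ℝ × (Fin M → ℝ)) + s • ((1 : ℝ), (0 : Fin M → ℝ)) := by
    funext s
    refine Prod.ext (by simp) (by simp)
  rw [h]
  have H : HasDerivAt (fun s : ℝ => s • (((1 : ℝ), (0 : Fin M → ℝ)) : ℝ × (Fin M → ℝ)))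
      (((1 : ℝ), (0 : Fin M → ℝ)) : ℝ × (Fin M → ℝ)) t := by
    simpa using (hasDerivAt_id t).smul_const (((1 : ℝ), (0 : Fin M → ℝ)) : ℝ × (Fin M → ℝ))
  exact H.const_add _

lemma update_repr {F : Fn} {M : ℕ} (hdep : FnDependsOn F M) (x : ℝ) (p : ℕ → ℝ)
    {k : ℕ} (hk : k < M) (t : ℝ) :
    F x (Function.update p k t)
      = fdrep M F (x, Function.update (fun i : Fin M => p i) ⟨k, hk⟩ t) := by
  rw [fdrep_eq hdep]
  have h := Function.update_comp_eq_of_injective p Fin.val_injective (⟨k, hk⟩ : Fin M) t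
  exact congrArg (fun c => fdrep M F (x, c)) h

/-- The coordinate along which we differentiate, as a direction vector. -/
noncomputable def wvec (M : ℕ) (k : Fin M) : ℝ × (Fin M → ℝ) := ((0 : ℝ), Pi.single k 1)

lemma hasDerivAt_update {F : Fn} {M : ℕ} (hF : SmoothUpTo F M) {k : ℕ} (hk : k < M)
    (x : ℝ) (p : ℕ → ℝ) (t : ℝ) :
    HasDerivAt (fun s => F x (Function.update p k s))
      (fderiv ℝ (fdrep M F) (x, Function.update (fun i : Fin M => p i) ⟨k, hk⟩ t)
        (wvec M ⟨k, hk⟩)) t := by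
  have h : (fun s => F x (Function.update p k s))
      = (fun v => fdrep M F v) ∘
          (fun s : ℝ => ((x, Function.update (fun i : Fin M => p i) ⟨k, hk⟩ s)
            : ℝ × (Fin M → ℝ))) := by
    funext s; exact update_repr hF.1 x p hk s
  rw [h]
  exact ((hF.2.differentiable (by simp) _).hasFDerivAt).comp_hasDerivAt t
    (line_update M x _ ⟨k, hk⟩ t)

lemma update_self_repr {M : ℕ} (p : ℕ → ℝ) {k : ℕ} (hk : k < M) :
    Function.update (fun i : Fin M => p i) ⟨k, hk⟩ (p k) = fun i : Fin M => p i := by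
  have : (fun i : Fin M => p i) (⟨k, hk⟩ : Fin M) = p k := rfl
  rw [← this, Function.update_eq_self]

lemma pd_eq_fderiv {F : Fn} {M : ℕ} (hF : SmoothUpTo F M) {k : ℕ} (hk : k < M)
    (x : ℝ) (p : ℕ → ℝ) :
    pd k F x p = fderiv ℝ (fdrep M F) (x, fun i : Fin M => p i) (wvec M ⟨k, hk⟩) := by
  have h := hasDerivAt_update hF hk x p (p k)
  rw [update_self_repr p hk] at h
  exact h.deriv

lemma hasDerivAt_pd {F : Fn} {M : ℕ} (hF : SmoothUpTo F M) (k : ℕ)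
    (x : ℝ) (p : ℕ → ℝ) :
    HasDerivAt (fun s => F x (Function.update p k s)) (pd k F x p) (p k) := by
  by_cases hk : k < M
  · have h := hasDerivAt_update hF hk x p (p k)
    rw [update_self_repr p hk] at h
    rwa [pd_eq_fderiv hF hk]
  · have hconst : (fun s => F x (Function.update p k s)) = fun _ => F x p := by
      funext s
      exact hF.1 x _ p (fun i hi => Function.update_of_ne (by omega) _ _)
    have h0 : pd k F x p = 0 := by
      unfold pd; rw [hconst]; exact deriv_const _ _
    rw [h0, hconst]
    exact hasDerivAt_const _ _

lemma pd_of_le {F : Fn} {M : ℕ} (hdep : FnDependsOn F M) {k : ℕ} (hk : M ≤ k) :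
    pd k F = fun _ _ => 0 := by
  funext x p
  have hconst : (fun s => F x (Function.update p k s)) = fun _ => F x p := by
    funext s
    exact hdep x _ p (fun i hi => Function.update_of_ne (by omega) _ _)
  unfold pd; rw [hconst]; exact deriv_const _ _

lemma hasDerivAt_x {F : Fn} {M : ℕ} (hF : SmoothUpTo F M) (x : ℝ) (p : ℕ → ℝ) :
    HasDerivAt (fun t => F t p) (pdx F x p) x := by
  have h : (fun t => F t p)
      = (fun v => fdrep M F v) ∘ (fun s : ℝ => ((s, fun i : Fin M => p i)
          : ℝ × (Fin M → ℝ))) := by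
    funext s; exact fdrep_eq hF.1 s p
  have key : ∀ t : ℝ, HasDerivAt (fun t => F t p)
      (fderiv ℝ (fdrep M F) (t, fun i : Fin M => p i) ((1 : ℝ), (0 : Fin M → ℝ))) t := by
    intro t
    rw [h]
    exact ((hF.2.differentiable (by simp) _).hasFDerivAt).comp_hasDerivAt t (line_x M _ t)
  have := (key x).deriv
  rw [show pdx F x p = deriv (fun t => F t p) x from rfl, this]
  exact (this ▸ key x)

lemma pdx_eq_fderiv {F : Fn} {M : ℕ} (hF : SmoothUpTo F M) (x : ℝ) (p : ℕ → ℝ) :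
    pdx F x p = fderiv ℝ (fdrep M F) (x, fun i : Fin M => p i)
      ((1 : ℝ), (0 : Fin M → ℝ)) := by
  have h : (fun t => F t p)
      = (fun v => fdrep M F v) ∘ (fun s : ℝ => ((s, fun i : Fin M => p i)
          : ℝ × (Fin M → ℝ))) := by
    funext s; exact fdrep_eq hF.1 s p
  have key : HasDerivAt (fun t => F t p)
      (fderiv ℝ (fdrep M F) (x, fun i : Fin M => p i) ((1 : ℝ), (0 : Fin M → ℝ))) x := by
    rw [h]
    exact ((hF.2.differentiable (by simp) _).hasFDerivAt).comp_hasDerivAt x (line_x M _ x)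
  exact key.deriv

lemma fdrep_pt {M : ℕ} (v : ℝ × (Fin M → ℝ)) :
    ((v.1, fun i : Fin M => (fun j : ℕ => if h : j < M then v.2 ⟨j, h⟩ else 0) (i : ℕ))
      : ℝ × (Fin M → ℝ)) = v := by
  refine Prod.ext rfl ?_
  funext i
  simp [i.isLt]

lemma fdrep_pd {F : Fn} {M : ℕ} (hF : SmoothUpTo F M) {k : ℕ} (hk : k < M) :
    fdrep M (pd k F) = fun v => fderiv ℝ (fdrep M F) v (wvec M ⟨k, hk⟩) := by
  funext v
  show pd k F v.1 _ = _
  rw [pd_eq_fderiv hF hk, fdrep_pt v]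

lemma fdrep_pdx {F : Fn} {M : ℕ} (hF : SmoothUpTo F M) :
    fdrep M (pdx F) = fun v => fderiv ℝ (fdrep M F) v ((1 : ℝ), (0 : Fin M → ℝ)) := by
  funext v
  show pdx F v.1 _ = _
  rw [pdx_eq_fderiv hF, fdrep_pt v]

lemma smoothUpTo_zero {M : ℕ} : SmoothUpTo (fun _ _ => (0 : ℝ)) M :=
  ⟨fun _ _ _ _ => rfl, by rw [show (fun v : ℝ × (Fin M → ℝ) =>
    (fun (_ : ℝ) (_ : ℕ → ℝ) => (0:ℝ)) v.1 (fun i => if h : i < M then v.2 ⟨i, h⟩ else 0))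
      = fun _ => (0:ℝ) from rfl]; exact contDiff_const⟩

lemma contDiff_fderiv_apply {M : ℕ} {g : ℝ × (Fin M → ℝ) → ℝ} (hg : ContDiff ℝ (⊤ : ℕ∞) g)
    (w : ℝ × (Fin M → ℝ)) :
    ContDiff ℝ (⊤ : ℕ∞) (fun v => fderiv ℝ g v w) :=
  (ContinuousLinearMap.apply ℝ ℝ w).contDiff.comp (hg.fderiv_right (by simp))

lemma smoothUpTo_pd {F : Fn} {M : ℕ} (hF : SmoothUpTo F M) (k : ℕ) :
    SmoothUpTo (_root_.pd k F) M := by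
  by_cases hk : k < M
  · constructor
    · intro x p q hpq
      unfold _root_.pd
      have hfun : ∀ t, F x (Function.update p k t) = F x (Function.update q k t) := by
        intro t
        refine hF.1 x _ _ (fun i hi => ?_)
        rcases eq_or_ne i k with rfl | h
        · simp
        · simp [Function.update_of_ne h, hpq i hi]
      rw [funext hfun, hpq k hk]
    · rw [show (fun v : ℝ × (Fin M → ℝ) =>
          _root_.pd k F v.1 (fun i => if h : i < M then v.2 ⟨i, h⟩ else 0))
            = fdrep M (_root_.pd k F)
          from rfl, fdrep_pd hF hk]
      exact contDiff_fderiv_apply hF.2 _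
  · rw [pd_of_le hF.1 (le_of_not_gt hk)]
    exact smoothUpTo_zero

lemma smoothUpTo_pdx {F : Fn} {M : ℕ} (hF : SmoothUpTo F M) :
    SmoothUpTo (_root_.pdx F) M := by
  constructor
  · intro x p q hpq
    unfold _root_.pdx
    have hfun : ∀ t, F t p = F t q := fun t => hF.1 t p q hpq
    rw [funext hfun]
  · rw [show (fun v : ℝ × (Fin M → ℝ) =>
        _root_.pdx F v.1 (fun i => if h : i < M then v.2 ⟨i, h⟩ else 0))
          = fdrep M (_root_.pdx F)
        from rfl, fdrep_pdx hF]
    exact contDiff_fderiv_apply hF.2 _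

lemma fderiv_fderiv_apply {M : ℕ} {g : ℝ × (Fin M → ℝ) → ℝ} (hg : ContDiff ℝ (⊤ : ℕ∞) g)
    (pt u w : ℝ × (Fin M → ℝ)) :
    fderiv ℝ (fun v => fderiv ℝ g v w) pt u = fderiv ℝ (fderiv ℝ g) pt u w := by
  rw [fderiv_clm_apply ((hg.fderiv_right (m := 1) (WithTop.coe_le_coe.mpr le_top)).differentiable one_ne_zero pt)
    (differentiableAt_const w)]
  simp

lemma snd_symm {M : ℕ} {g : ℝ × (Fin M → ℝ) → ℝ} (hg : ContDiff ℝ (⊤ : ℕ∞) g)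
    (pt u w : ℝ × (Fin M → ℝ)) :
    fderiv ℝ (fderiv ℝ g) pt u w = fderiv ℝ (fderiv ℝ g) pt w u :=
  (hg.contDiffAt.isSymmSndFDerivAt (by rw [minSmoothness_of_isRCLikeNormedField]; exact WithTop.coe_le_coe.mpr (le_top : (2 : ℕ∞) ≤ ⊤))).eq u w

lemma pd_zero {k : ℕ} : pd k (fun _ _ => (0:ℝ)) = fun _ _ => 0 :=
  pd_of_le (M := 0) (show FnDependsOn (fun _ _ => (0:ℝ)) 0 from fun _ _ _ _ => rfl)
    (Nat.zero_le _)

lemma pdx_zero : pdx (fun _ _ => (0:ℝ)) = fun _ _ => 0 := by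
  funext x p
  show deriv (fun _ => (0:ℝ)) x = 0
  rw [deriv_const]

lemma fdrep_contDiff {F : Fn} {M : ℕ} (hF : SmoothUpTo F M) :
    ContDiff ℝ (⊤ : ℕ∞) (fdrep M F) := hF.2

lemma pd_pd_comm {F : Fn} {M : ℕ} (hF : SmoothUpTo F M) (j k : ℕ) :
    pd j (pd k F) = pd k (pd j F) := by
  by_cases hk : k < M
  · by_cases hj : j < M
    · funext x p
      rw [pd_eq_fderiv (smoothUpTo_pd hF k) hj, pd_eq_fderiv (smoothUpTo_pd hF j) hk,
        fdrep_pd hF hk, fdrep_pd hF hj,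
        fderiv_fderiv_apply (fdrep_contDiff hF), fderiv_fderiv_apply (fdrep_contDiff hF),
        snd_symm (fdrep_contDiff hF)]
    · rw [pd_of_le (smoothUpTo_pd hF k).1 (le_of_not_gt hj),
        pd_of_le hF.1 (le_of_not_gt hj), pd_zero]
  · rw [pd_of_le (smoothUpTo_pd hF j).1 (le_of_not_gt hk),
      pd_of_le hF.1 (le_of_not_gt hk), pd_zero]

lemma pdx_pd_comm {F : Fn} {M : ℕ} (hF : SmoothUpTo F M) (k : ℕ) :
    pd k (pdx F) = pdx (pd k F) := by
  by_cases hk : k < M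
  · funext x p
    rw [pd_eq_fderiv (smoothUpTo_pdx hF) hk, pdx_eq_fderiv (smoothUpTo_pd hF k),
      fdrep_pdx hF, fdrep_pd hF hk,
      fderiv_fderiv_apply (fdrep_contDiff hF), fderiv_fderiv_apply (fdrep_contDiff hF),
      snd_symm (fdrep_contDiff hF)]
  · rw [pd_of_le (smoothUpTo_pdx hF).1 (le_of_not_gt hk), pd_of_le hF.1 (le_of_not_gt hk), pdx_zero]

lemma smoothUpTo_mono {F : Fn} {M M' : ℕ} (hF : SmoothUpTo F M) (hMM' : M ≤ M') :
    SmoothUpTo F M' := by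
  refine ⟨fun x p q hpq => hF.1 x p q (fun i hi => hpq i (lt_of_lt_of_le hi hMM')), ?_⟩
  have hrep : (fun v : ℝ × (Fin M' → ℝ) =>
      F v.1 (fun i => if h : i < M' then v.2 ⟨i, h⟩ else 0))
      = fun v => fdrep M F (v.1, fun i : Fin M => v.2 (Fin.castLE hMM' i)) := by
    funext v
    refine hF.1 _ _ _ (fun i hi => ?_)
    have hi' : i < M' := lt_of_lt_of_le hi hMM'
    simp [hi, hi', Fin.castLE]
  rw [hrep]
  refine hF.2.comp (contDiff_fst.prodMk (contDiff_pi.mpr fun i => ?_))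
  exact (ContinuousLinearMap.proj (R := ℝ) (φ := fun _ : Fin M' => ℝ)
    (Fin.castLE hMM' i)).contDiff.comp contDiff_snd

lemma smoothUpTo_add {F G : Fn} {M : ℕ} (hF : SmoothUpTo F M) (hG : SmoothUpTo G M) :
    SmoothUpTo (fun x p => F x p + G x p) M := by
  refine ⟨fun x p q hpq => ?_, hF.2.add hG.2⟩
  show F x p + G x p = F x q + G x q
  rw [hF.1 x p q hpq, hG.1 x p q hpq]

lemma smoothUpTo_mul {F G : Fn} {M : ℕ} (hF : SmoothUpTo F M) (hG : SmoothUpTo G M) :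
    SmoothUpTo (fun x p => F x p * G x p) M := by
  refine ⟨fun x p q hpq => ?_, hF.2.mul hG.2⟩
  show F x p * G x p = F x q * G x q
  rw [hF.1 x p q hpq, hG.1 x p q hpq]

lemma smoothUpTo_coord {M j : ℕ} (hj : j < M) :
    SmoothUpTo (fun _ p => p j) M := by
  refine ⟨fun x p q hpq => hpq j hj, ?_⟩
  have : (fun v : ℝ × (Fin M → ℝ) =>
      (fun (_ : ℝ) (p : ℕ → ℝ) => p j) v.1 (fun i => if h : i < M then v.2 ⟨i, h⟩ else 0))
      = fun v => v.2 ⟨j, hj⟩ := by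
    funext v; simp [hj]
  rw [this]
  exact (ContinuousLinearMap.proj (R := ℝ) (φ := fun _ : Fin M => ℝ)
    (⟨j, hj⟩ : Fin M)).contDiff.comp contDiff_snd

lemma smoothUpTo_sum {ι : Type*} {M : ℕ} (s : Finset ι) (f : ι → Fn)
    (h : ∀ i ∈ s, SmoothUpTo (f i) M) :
    SmoothUpTo (fun x p => ∑ i ∈ s, f i x p) M := by
  classical
  induction s using Finset.induction_on with
  | empty => simpa using (smoothUpTo_zero (M := M))
  | @insert a s' ha ih =>
    have : (fun x p => ∑ i ∈ insert a s', f i x p)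
        = fun x p => f a x p + ∑ i ∈ s', f i x p := by
      funext x p; rw [Finset.sum_insert ha]
    rw [this]
    exact smoothUpTo_add (h a (Finset.mem_insert_self a s'))
      (ih fun i hi => h i (Finset.mem_insert_of_mem hi))

lemma smoothUpTo_D {F : Fn} {M m : ℕ} (hF : SmoothUpTo F M) (hm : m < M) :
    SmoothUpTo (D m F) M := by
  have hrw : D m F = fun x p => _root_.pdx F x p
      + ∑ k ∈ Finset.range m, (fun x p => p (k + 1) * _root_.pd k F x p) x p := rfl
  rw [hrw]
  refine smoothUpTo_add (smoothUpTo_pdx hF) (smoothUpTo_sum _ _ fun k hk => ?_)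
  exact smoothUpTo_mul (smoothUpTo_coord (by
    have := Finset.mem_range.mp hk; omega)) (smoothUpTo_pd hF k)

lemma pd_add {F G : Fn} {M : ℕ} (hF : SmoothUpTo F M) (hG : SmoothUpTo G M) (k : ℕ) :
    pd k (fun x p => F x p + G x p) = fun x p => pd k F x p + pd k G x p := by
  funext x p
  exact ((hasDerivAt_pd hF k x p).add (hasDerivAt_pd hG k x p)).deriv

lemma pdx_add {F G : Fn} {M : ℕ} (hF : SmoothUpTo F M) (hG : SmoothUpTo G M) :
    pdx (fun x p => F x p + G x p) = fun x p => pdx F x p + pdx G x p := by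
  funext x p
  exact ((hasDerivAt_x hF x p).add (hasDerivAt_x hG x p)).deriv

lemma D_add {F G : Fn} {M m : ℕ} (hF : SmoothUpTo F M) (hG : SmoothUpTo G M) :
    D m (fun x p => F x p + G x p) = fun x p => D m F x p + D m G x p := by
  funext x p
  show pdx (fun x p => F x p + G x p) x p
      + ∑ k ∈ Finset.range m, p (k+1) * pd k (fun x p => F x p + G x p) x p = _
  rw [pdx_add hF hG]
  have hsum : ∀ k ∈ Finset.range m,
      p (k+1) * pd k (fun x p => F x p + G x p) x p
        = p (k+1) * pd k F x p + p (k+1) * pd k G x p := by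
    intro k _
    rw [pd_add hF hG k]
    ring
  rw [Finset.sum_congr rfl hsum, Finset.sum_add_distrib]
  show _ = (pdx F x p + ∑ k ∈ Finset.range m, p (k+1) * pd k F x p)
      + (pdx G x p + ∑ k ∈ Finset.range m, p (k+1) * pd k G x p)
  ring

lemma D_iter_add {F G : Fn} {M m : ℕ} (hF : SmoothUpTo F M) (hG : SmoothUpTo G M)
    (hm : m < M) (k : ℕ) :
    (D m)^[k] (fun x p => F x p + G x p)
      = fun x p => (D m)^[k] F x p + (D m)^[k] G x p := by
  induction k generalizing F G hF hG with
  | zero => rfl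
  | succ k ih =>
    rw [Function.iterate_succ_apply, D_add hF hG,
      ih (smoothUpTo_D hF hm) (smoothUpTo_D hG hm),
      Function.iterate_succ_apply, Function.iterate_succ_apply]

lemma pd_D {F : Fn} {M m : ℕ} (hF : SmoothUpTo F M) (hm : m < M) {k : ℕ} (hk : k ≤ m) :
    pd k (D m F)
      = fun x p => D m (pd k F) x p + (if 1 ≤ k then pd (k - 1) F x p else 0) := by
  funext x p
  have hterm : ∀ j ∈ Finset.range m,
      HasDerivAt (fun t =>
          (Function.update p k t) (j + 1) * pd j F x (Function.update p k t))
        ((if j + 1 = k then pd j F x p else 0) + p (j + 1) * pd k (pd j F) x p) (p k) := by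
    intro j _
    by_cases hjk : j + 1 = k
    · subst hjk
      have heq : (fun t =>
          (Function.update p (j+1) t) (j + 1) * pd j F x (Function.update p (j+1) t))
          = fun t => t * pd j F x (Function.update p (j+1) t) := by
        funext t; rw [Function.update_self]
      rw [heq]
      have h1 := (hasDerivAt_id' (p (j+1))).fun_mul
        (hasDerivAt_pd (smoothUpTo_pd hF j) (j+1) x p)
      simpa [Function.update_eq_self] using h1
    · have heq : (fun t =>
          (Function.update p k t) (j + 1) * pd j F x (Function.update p k t))
          = fun t => p (j + 1) * pd j F x (Function.update p k t) := by
        funext t; rw [Function.update_of_ne hjk]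
      rw [heq]
      have h1 := (hasDerivAt_pd (smoothUpTo_pd hF j) k x p).const_mul (p (j+1))
      simpa [hjk] using h1
  have hx : HasDerivAt (fun t => pdx F x (Function.update p k t))
      (pd k (pdx F) x p) (p k) :=
    hasDerivAt_pd (smoothUpTo_pdx hF) k x p
  have htot := hx.add (HasDerivAt.fun_sum hterm)
  have hder : pd k (D m F) x p = pd k (pdx F) x p
      + ∑ j ∈ Finset.range m,
          ((if j + 1 = k then pd j F x p else 0) + p (j + 1) * pd k (pd j F) x p) :=
    htot.deriv
  rw [hder, pdx_pd_comm hF k, Finset.sum_add_distrib]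
  have h2 : ∀ j ∈ Finset.range m,
      p (j + 1) * pd k (pd j F) x p = p (j + 1) * pd j (pd k F) x p := by
    intro j _
    rw [← pd_pd_comm hF j k]
  rw [Finset.sum_congr rfl h2]
  have h3 : ∑ j ∈ Finset.range m, (if j + 1 = k then pd j F x p else 0)
      = if 1 ≤ k then pd (k - 1) F x p else 0 := by
    cases k with
    | zero => simp
    | succ k' =>
      have hk' : k' < m := by omega
      have : ∀ j ∈ Finset.range m, (if j + 1 = k' + 1 then pd j F x p else 0)
          = if j = k' then pd j F x p else 0 := by
        intro j _
        simp [Nat.add_right_cancel_iff]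
      rw [Finset.sum_congr rfl this, Finset.sum_ite_eq' (Finset.range m) k']
      simp [hk']
  rw [h3]
  show _ = (pdx (pd k F) x p + ∑ j ∈ Finset.range m, p (j + 1) * pd j (pd k F) x p) + _
  ring

end EDAux

/-- Telescoping sum: `E_m^n ∘ D_m = (-1)^n D_m^{n+1} ∘ ∂_n` for `m ≥ n ≥ 1`. -/
theorem E_D_telescope (m n : ℕ) (hn : 1 ≤ n) (hnm : n ≤ m) (F : Fn) (hF : SmoothFn F)
    (x : ℝ) (p : ℕ → ℝ) :
    E m n (D m F) x p = (-1 : ℝ) ^ n * ((D m)^[n + 1] (pd n F) x p) := by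
  classical
  obtain ⟨M0, hF0⟩ := hF
  have hFM : SmoothUpTo F (max M0 (m + 1)) := EDAux.smoothUpTo_mono hF0 (le_max_left _ _)
  have hm : m < max M0 (m + 1) := lt_of_lt_of_le (Nat.lt_succ_self m) (le_max_right _ _)
  have hterm : ∀ k, k ≤ m →
      ((D m)^[k] (pd k (D m F))) x p
        = (D m)^[k + 1] (pd k F) x p
          + (if 1 ≤ k then (D m)^[k] (pd (k - 1) F) x p else 0) := by
    intro k hk
    rw [EDAux.pd_D hFM hm hk]
    by_cases h1 : 1 ≤ k
    · have hfun : (fun x p => D m (pd k F) x p + (if 1 ≤ k then pd (k - 1) F x p else 0))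
          = fun x p => D m (pd k F) x p + pd (k - 1) F x p := by
        simp [h1]
      rw [hfun, EDAux.D_iter_add (EDAux.smoothUpTo_D (EDAux.smoothUpTo_pd hFM k) hm)
        (EDAux.smoothUpTo_pd hFM (k - 1)) hm k, if_pos h1,
        ← Function.iterate_succ_apply]
    · have hk0 : k = 0 := by omega
      subst hk0
      simp
  set b : ℕ → ℝ := fun k => (D m)^[k + 1] (pd k F) x p with hb
  have hE : E m n (D m F) x p
      = ∑ k ∈ Finset.range (n + 1),
          ((-1 : ℝ) ^ k * b k
            + (-1 : ℝ) ^ k * (if 1 ≤ k then (D m)^[k] (pd (k - 1) F) x p else 0)) := by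
    show ∑ k ∈ Finset.range (n + 1), (-1 : ℝ) ^ k * ((D m)^[k] (pd k (D m F))) x p = _
    refine Finset.sum_congr rfl fun k hkmem => ?_
    have hk : k ≤ m := le_trans (Nat.lt_succ_iff.mp (Finset.mem_range.mp hkmem)) hnm
    rw [hterm k hk, mul_add]
  rw [hE, Finset.sum_add_distrib]
  have hsecond : ∑ k ∈ Finset.range (n + 1),
      (-1 : ℝ) ^ k * (if 1 ≤ k then (D m)^[k] (pd (k - 1) F) x p else 0)
      = - ∑ k ∈ Finset.range n, (-1 : ℝ) ^ k * b k := by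
    rw [Finset.sum_range_succ'
      (fun k => (-1 : ℝ) ^ k * (if 1 ≤ k then (D m)^[k] (pd (k - 1) F) x p else 0)) n]
    have hc : ∀ k ∈ Finset.range n,
        (-1 : ℝ) ^ (k + 1) * (if 1 ≤ k + 1 then (D m)^[k + 1] (pd (k + 1 - 1) F) x p else 0)
          = -((-1 : ℝ) ^ k * b k) := by
      intro k _
      rw [if_pos (Nat.le_add_left 1 k), Nat.add_sub_cancel, pow_succ, hb]
      ring
    rw [Finset.sum_congr rfl hc]
    simp
  rw [hsecond, Finset.sum_range_succ]
  ring
end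

section
/- (Theorem A, sufficiency.) Let R_2(x, p_0, p_1, p_2), f_1(x, p_0, p_1), f_0(x, p_0) and N_1(x, p_0, p_1) be arbitrary smooth functions, and define f_3 := ∂_2 R_2 · p_3^2 + 2 D_2 R_2 · p_3 − e^{R_2} ( E_2^2 ∫^{p_2}∫ e^{−R_2} + f_1 p_2 − E_1^1 ∫^{p_1}∫ f_1 + f_0 ), ρ_2 := e^{−R_2}, and L_2 := ∫^{p_2}∫ e^{−R_2} − ∫^{p_1}∫ f_1 + ∫^{p_0} f_0 + D_2 N_1. Then ρ_2 > 0 everywhere and ρ_2 · (p_4 − f_3) = E_4^2 L_2 holds identically in (x, p_0, p_1, p_2, p_3, p_4). -/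
/-! ### Auxiliary development for the proof -/

open intervalIntegral MeasureTheory Set

set_option synthInstance.maxHeartbeats 1000000
set_option maxHeartbeats 1000000
set_option linter.unusedVariables false
set_option linter.unusedSectionVars false

section Primitive

variable {E : Type} [NormedAddCommGroup E] [NormedSpace ℝ E] [ProperSpace E]


theorem hasFDerivAt_primitive {F : Type} [NormedAddCommGroup F] [NormedSpace ℝ F]
    [CompleteSpace F] {f : E × ℝ → F} (hf : ContDiff ℝ 1 f) (v₀ : E) (y₀ : ℝ) :
    HasFDerivAt (fun q : E × ℝ => ∫ t in (0:ℝ)..q.2, f (q.1, t))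
      (((∫ t in (0:ℝ)..y₀, ((fderiv ℝ f (v₀, t)).comp (ContinuousLinearMap.inl ℝ E ℝ))).comp
          (ContinuousLinearMap.fst ℝ E ℝ)) +
        (ContinuousLinearMap.snd ℝ E ℝ).smulRight (f (v₀, y₀))) (v₀, y₀) := by
  have hfc : Continuous f := hf.continuous
  have hfd : Differentiable ℝ f := hf.differentiable one_ne_zero
  have hcfd : Continuous (fderiv ℝ f) := hf.continuous_fderiv one_ne_zero
  have hcint : ∀ (v : E) (a b : ℝ), IntervalIntegrable (fun t => f (v, t)) volume a b :=
    fun v a b => (hfc.comp (continuous_const.prodMk continuous_id)).intervalIntegrable a b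
  -- Part A : derivative in the parameter with fixed endpoints
  have hg : Continuous fun q : E × ℝ => (fderiv ℝ f q).comp (ContinuousLinearMap.inl ℝ E ℝ) :=
    hcfd.clm_comp continuous_const
  obtain ⟨M, hM⟩ := ((isCompact_closedBall v₀ 1).prod isCompact_uIcc).exists_bound_of_continuousOn
    (f := fun q : E × ℝ => (fderiv ℝ f q).comp (ContinuousLinearMap.inl ℝ E ℝ))
    hg.continuousOn
  have HA : HasFDerivAt (fun v : E => ∫ t in (0:ℝ)..y₀, f (v, t))
      (∫ t in (0:ℝ)..y₀, ((fderiv ℝ f (v₀, t)).comp (ContinuousLinearMap.inl ℝ E ℝ))) v₀ := by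
    apply intervalIntegral.hasFDerivAt_integral_of_dominated_of_fderiv_le
      (F := fun v t => f (v, t))
      (F' := fun v t => (fderiv ℝ f (v, t)).comp (ContinuousLinearMap.inl ℝ E ℝ))
      (bound := fun _ => M) (Metric.ball_mem_nhds v₀ one_pos)
    · exact Filter.Eventually.of_forall fun v =>
        ((hfc.comp (continuous_const.prodMk continuous_id)).aestronglyMeasurable)
    · exact hcint v₀ 0 y₀
    · exact (hg.comp (continuous_const.prodMk continuous_id)).aestronglyMeasurable
    · refine Filter.Eventually.of_forall fun t ht x hx => hM (x, t) ⟨?_, ?_⟩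
      · exact Metric.ball_subset_closedBall hx
      · exact uIoc_subset_uIcc ht
    · exact intervalIntegrable_const
    · refine Filter.Eventually.of_forall fun t ht x _ => ?_
      exact ((hfd (x, t)).hasFDerivAt).comp x (hasFDerivAt_prodMk_left x t)
  -- Part B : derivative of the moving-endpoint piece
  have HB : HasFDerivAt (fun q : E × ℝ => ∫ t in y₀..q.2, f (q.1, t))
      ((ContinuousLinearMap.snd ℝ E ℝ).smulRight (f (v₀, y₀))) (v₀, y₀) := by
    rw [hasFDerivAt_iff_isLittleO_nhds_zero]
    rw [Asymptotics.isLittleO_iff]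
    intro c hc
    obtain ⟨δ, hδ, hball⟩ := Metric.continuousAt_iff.1 (hfc.continuousAt (x := (v₀, y₀))) c hc
    have hev : ∀ᶠ h : E × ℝ in nhds 0, ‖h‖ < δ := by
      have : Metric.ball (0 : E × ℝ) δ ∈ nhds (0 : E × ℝ) := Metric.ball_mem_nhds _ hδ
      filter_upwards [this] with h hh
      simpa [dist_eq_norm] using hh
    filter_upwards [hev] with h hh
    have hint1 : IntervalIntegrable (fun t => f (v₀ + h.1, t)) volume y₀ (y₀ + h.2) :=
      hcint _ _ _
    have key : (∫ t in y₀..(y₀ + h.2), f ((v₀ + h.1), t)) - (h.2) • f (v₀, y₀)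
        = ∫ t in y₀..(y₀ + h.2), (f ((v₀ + h.1), t) - f (v₀, y₀)) := by
      rw [intervalIntegral.integral_sub hint1 intervalIntegrable_const,
        intervalIntegral.integral_const]
      simp
    have hbd : ∀ t ∈ Set.uIoc y₀ (y₀ + h.2), ‖f ((v₀ + h.1), t) - f (v₀, y₀)‖ ≤ c := by
      intro t ht
      have ht' : |t - y₀| ≤ |h.2| := by
        rcases le_total y₀ (y₀ + h.2) with hle | hle
        · rw [uIoc_of_le hle] at ht
          rw [abs_le]
          constructor <;> nlinarith [abs_nonneg h.2, le_abs_self h.2, neg_abs_le h.2, ht.1, ht.2]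
        · rw [uIoc_of_ge hle] at ht
          rw [abs_le]
          constructor <;> nlinarith [abs_nonneg h.2, le_abs_self h.2, neg_abs_le h.2, ht.1, ht.2]
      have hdist : dist ((v₀ + h.1), t) (v₀, y₀) < δ := by
        rw [Prod.dist_eq]
        have h1 : dist (v₀ + h.1) v₀ = ‖h.1‖ := by simp [dist_eq_norm]
        have h2 : dist t y₀ = |t - y₀| := by rw [Real.dist_eq]
        have hn1 : ‖h.1‖ ≤ ‖h‖ := norm_fst_le h
        have hn2 : |h.2| ≤ ‖h‖ := norm_snd_le h
        rw [h1, h2]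
        exact max_lt (lt_of_le_of_lt hn1 hh) (lt_of_le_of_lt (le_trans ht' hn2) hh)
      rw [← dist_eq_norm]
      exact le_of_lt (hball hdist)
    calc ‖(∫ t in y₀..(y₀ + h.2), f ((v₀ + h.1), t)) - (∫ t in y₀..y₀, f (v₀, t))
          - ((ContinuousLinearMap.snd ℝ E ℝ).smulRight (f (v₀, y₀))) h‖
        = ‖(∫ t in y₀..(y₀ + h.2), f ((v₀ + h.1), t)) - (h.2) • f (v₀, y₀)‖ := by
          simp [ContinuousLinearMap.smulRight_apply]
      _ = ‖∫ t in y₀..(y₀ + h.2), (f ((v₀ + h.1), t) - f (v₀, y₀))‖ := by rw [key]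
      _ ≤ c * |y₀ + h.2 - y₀| := intervalIntegral.norm_integral_le_of_norm_le_const hbd
      _ ≤ c * ‖h‖ := by
          apply mul_le_mul_of_nonneg_left _ (le_of_lt hc)
          simpa using norm_snd_le h
  -- combine
  have hsplit : (fun q : E × ℝ => ∫ t in (0:ℝ)..q.2, f (q.1, t))
      = fun q : E × ℝ => (∫ t in (0:ℝ)..y₀, f (q.1, t)) + ∫ t in y₀..q.2, f (q.1, t) := by
    funext q
    rw [intervalIntegral.integral_add_adjacent_intervals (hcint _ _ _) (hcint _ _ _)]
  rw [hsplit]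
  exact (HA.comp (v₀, y₀) (hasFDerivAt_fst)).add HB

theorem contDiff_primitive : ∀ (n : ℕ) {F : Type} [NormedAddCommGroup F] [NormedSpace ℝ F]
    [CompleteSpace F] (f : E × ℝ → F), (∀ m : ℕ, ContDiff ℝ m f) →
    ContDiff ℝ n (fun q : E × ℝ => ∫ t in (0:ℝ)..q.2, f (q.1, t)) := by
  intro n
  induction n with
  | zero =>
    intro F _ _ _ f hf
    rw [show ((0:ℕ):WithTop ℕ∞) = 0 by norm_cast, contDiff_zero]
    have hd : Differentiable ℝ (fun q : E × ℝ => ∫ t in (0:ℝ)..q.2, f (q.1, t)) := by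
      intro q
      have := (hasFDerivAt_primitive (hf 1) q.1 q.2).differentiableAt
      simpa using this
    exact hd.continuous
  | succ n ih =>
    intro F _ _ _ f hf
    have hd : Differentiable ℝ (fun q : E × ℝ => ∫ t in (0:ℝ)..q.2, f (q.1, t)) := by
      intro q
      have := (hasFDerivAt_primitive (hf 1) q.1 q.2).differentiableAt
      simpa using this
    have hcast : ((n + 1 : ℕ) : WithTop ℕ∞) = (n : WithTop ℕ∞) + 1 := by push_cast; ring
    rw [hcast, contDiff_succ_iff_fderiv]
    refine ⟨hd, by simp, ?_⟩
    have hfd : fderiv ℝ (fun q : E × ℝ => ∫ t in (0:ℝ)..q.2, f (q.1, t))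
        = fun q : E × ℝ =>
          (((∫ t in (0:ℝ)..q.2, ((fderiv ℝ f (q.1, t)).comp (ContinuousLinearMap.inl ℝ E ℝ))).comp
            (ContinuousLinearMap.fst ℝ E ℝ)) +
          (ContinuousLinearMap.snd ℝ E ℝ).smulRight (f q)) := by
      funext q
      have := (hasFDerivAt_primitive (hf 1) q.1 q.2).fderiv
      simpa using this
    rw [hfd]
    apply ContDiff.add
    · have hg : ∀ m : ℕ, ContDiff ℝ m
          (fun q : E × ℝ => (fderiv ℝ f (q.1, q.2)).comp (ContinuousLinearMap.inl ℝ E ℝ)) := by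
        intro m
        have h1 : ContDiff ℝ m (fderiv ℝ f) :=
          (hf (m + 1)).fderiv_right (by push_cast; exact le_rfl)
        exact h1.clm_comp contDiff_const
      have := (ih (fun q : E × ℝ =>
          (fderiv ℝ f (q.1, q.2)).comp (ContinuousLinearMap.inl ℝ E ℝ)) hg)
      exact this.clm_comp contDiff_const
    · have : ContDiff ℝ n fun q : E × ℝ =>
          (ContinuousLinearMap.smulRightL ℝ (E × ℝ) F (ContinuousLinearMap.snd ℝ E ℝ)) (f q) :=
        ((ContinuousLinearMap.smulRightL ℝ (E × ℝ) F
          (ContinuousLinearMap.snd ℝ E ℝ)).contDiff).comp (hf n)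
      exact this


end Primitive

/-! ## truncation to 5 variables -/

abbrev V : Type := ℝ × (Fin 5 → ℝ)

def ext5 (q : Fin 5 → ℝ) : ℕ → ℝ := fun i => if h : i < 5 then q ⟨i, h⟩ else 0

def tr (F : Fn) : V → ℝ := fun v => F v.1 (ext5 v.2)

def emb (x : ℝ) (p : ℕ → ℝ) : V := (x, fun i => p i)

/-- unit vector in direction `p k` -/
def uv (k : ℕ) : V := ((0 : ℝ), fun i : Fin 5 => if (i : ℕ) = k then (1 : ℝ) else 0)

def ux : V := ((1 : ℝ), (0 : Fin 5 → ℝ))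

def Nice (F : Fn) : Prop := FnDependsOn F 5 ∧ ∀ n : ℕ, ContDiff ℝ n (tr F)

lemma tr_emb {F : Fn} (hF : FnDependsOn F 5) (x : ℝ) (p : ℕ → ℝ) :
    tr F (emb x p) = F x p := by
  apply hF
  intro i hi
  simp [ext5, emb, hi]

lemma emb_ext5 (v : V) : emb v.1 (ext5 v.2) = v := by
  refine Prod.ext rfl ?_
  funext i
  simp [emb, ext5, i.isLt]

lemma emb_update {x : ℝ} {p : ℕ → ℝ} {k : ℕ} (hk : k < 5) (t : ℝ) :
    emb x (Function.update p k t) = emb x p + (t - p k) • uv k := by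
  refine Prod.ext (by simp [emb, uv]) ?_
  funext i
  simp only [emb, uv, Prod.snd_add, Prod.smul_snd, Pi.add_apply, Pi.smul_apply,
    Function.update_apply, smul_eq_mul]
  by_cases h : (i : ℕ) = k
  · simp [h]
  · simp [h]

lemma emb_x (x t : ℝ) (p : ℕ → ℝ) : emb t p = emb x p + (t - x) • ux := by
  refine Prod.ext (by simp [emb, ux]) ?_
  funext i
  simp [emb, ux]

/-! ## HasDerivAt for pd and pdx -/

lemma hasDerivAt_pd {F : Fn} (hF : Nice F) (k : ℕ) (x : ℝ) (p : ℕ → ℝ) :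
    HasDerivAt (fun t => F x (Function.update p k t)) (pd k F x p) (p k) := by
  rcases lt_or_ge k 5 with hk | hk
  · have hfun : (fun t => F x (Function.update p k t))
        = fun t => tr F (emb x p + (t - p k) • uv k) := by
      funext t
      rw [← tr_emb hF.1, emb_update hk]
    have hpath : HasDerivAt (fun t : ℝ => emb x p + (t - p k) • uv k) (uv k) (p k) := by
      have h1 : HasDerivAt (fun t : ℝ => t - p k) 1 (p k) :=
        (hasDerivAt_id (p k)).sub_const (p k)
      have h2 := (h1.smul_const (uv k)).const_add (emb x p)
      simpa using h2
    have hdF : HasFDerivAt (tr F) (fderiv ℝ (tr F) (emb x p)) (emb x p) :=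
      (((hF.2 1).differentiable (by norm_cast)) (emb x p)).hasFDerivAt
    have hdF' : HasFDerivAt (tr F) (fderiv ℝ (tr F) (emb x p)) (emb x p + ((p k) - p k) • uv k) := by
      simpa using hdF
    have hcomp := hdF'.comp_hasDerivAt (p k) hpath
    rw [hfun]
    have : pd k F x p = fderiv ℝ (tr F) (emb x p) (uv k) := by
      unfold pd
      rw [hfun]
      exact hcomp.deriv
    rw [this]
    exact hcomp
  · have hfun : (fun t => F x (Function.update p k t)) = fun _ => F x p := by
      funext t
      apply hF.1
      intro i hi
      rw [Function.update_apply]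
      simp [show i ≠ k by omega]
    have : pd k F x p = 0 := by
      unfold pd; rw [hfun]; simp
    rw [this, hfun]
    exact hasDerivAt_const _ _

lemma hasDerivAt_pdx {F : Fn} (hF : Nice F) (x : ℝ) (p : ℕ → ℝ) :
    HasDerivAt (fun t => F t p) (pdx F x p) x := by
  have hfun : (fun t => F t p) = fun t => tr F (emb x p + (t - x) • ux) := by
    funext t
    rw [← tr_emb hF.1, emb_x x t p]
  have hpath : HasDerivAt (fun t : ℝ => emb x p + (t - x) • ux) ux x := by
    have h1 : HasDerivAt (fun t : ℝ => t - x) 1 x := (hasDerivAt_id x).sub_const x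
    have h2 := (h1.smul_const ux).const_add (emb x p)
    simpa using h2
  have hdF : HasFDerivAt (tr F) (fderiv ℝ (tr F) (emb x p)) (emb x p) :=
    (((hF.2 1).differentiable (by norm_cast)) (emb x p)).hasFDerivAt
  have hdF' : HasFDerivAt (tr F) (fderiv ℝ (tr F) (emb x p)) (emb x p + (x - x) • ux) := by
    simpa using hdF
  have hcomp := hdF'.comp_hasDerivAt x hpath
  rw [hfun]
  have : pdx F x p = fderiv ℝ (tr F) (emb x p) ux := by
    unfold pdx
    rw [hfun]
    exact hcomp.deriv
  rw [this]
  exact hcomp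

lemma pd_eq_fderiv {F : Fn} (hF : Nice F) {k : ℕ} (hk : k < 5) (x : ℝ) (p : ℕ → ℝ) :
    pd k F x p = fderiv ℝ (tr F) (emb x p) (uv k) := by
  have hfun : (fun t => F x (Function.update p k t))
      = fun t => tr F (emb x p + (t - p k) • uv k) := by
    funext t
    rw [← tr_emb hF.1, emb_update hk]
  have hpath : HasDerivAt (fun t : ℝ => emb x p + (t - p k) • uv k) (uv k) (p k) := by
    have h1 : HasDerivAt (fun t : ℝ => t - p k) 1 (p k) := (hasDerivAt_id (p k)).sub_const (p k)
    have h2 := (h1.smul_const (uv k)).const_add (emb x p)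
    simpa using h2
  have hdF : HasFDerivAt (tr F) (fderiv ℝ (tr F) (emb x p)) (emb x p) :=
    (((hF.2 1).differentiable (by norm_cast)) (emb x p)).hasFDerivAt
  have hdF' : HasFDerivAt (tr F) (fderiv ℝ (tr F) (emb x p)) (emb x p + ((p k) - p k) • uv k) := by
    simpa using hdF
  have hcomp := hdF'.comp_hasDerivAt (p k) hpath
  unfold pd
  rw [hfun]
  exact hcomp.deriv

lemma pdx_eq_fderiv {F : Fn} (hF : Nice F) (x : ℝ) (p : ℕ → ℝ) :
    pdx F x p = fderiv ℝ (tr F) (emb x p) ux := by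
  have hfun : (fun t => F t p) = fun t => tr F (emb x p + (t - x) • ux) := by
    funext t
    rw [← tr_emb hF.1, emb_x x t p]
  have hpath : HasDerivAt (fun t : ℝ => emb x p + (t - x) • ux) ux x := by
    have h1 : HasDerivAt (fun t : ℝ => t - x) 1 x := (hasDerivAt_id x).sub_const x
    have h2 := (h1.smul_const ux).const_add (emb x p)
    simpa using h2
  have hdF : HasFDerivAt (tr F) (fderiv ℝ (tr F) (emb x p)) (emb x p) :=
    (((hF.2 1).differentiable (by norm_cast)) (emb x p)).hasFDerivAt
  have hdF' : HasFDerivAt (tr F) (fderiv ℝ (tr F) (emb x p)) (emb x p + (x - x) • ux) := by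
    simpa using hdF
  have hcomp := hdF'.comp_hasDerivAt x hpath
  unfold pdx
  rw [hfun]
  exact hcomp.deriv

/-! ## Nice closure -/

lemma nice_congr {A B : Fn} (h : ∀ x p, A x p = B x p) (hA : Nice A) : Nice B := by
  have hfun : B = A := by funext x p; rw [h]
  rw [hfun]; exact hA

lemma nice_pd {F : Fn} (hF : Nice F) (k : ℕ) : Nice (pd k F) := by
  rcases lt_or_ge k 5 with hk | hk
  · constructor
    · intro x p q hpq
      rw [pd_eq_fderiv hF hk, pd_eq_fderiv hF hk]
      have : emb x p = emb x q := by
        refine Prod.ext rfl ?_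
        funext i
        exact hpq i i.isLt
      rw [this]
    · intro n
      have htr : tr (pd k F) = fun v => fderiv ℝ (tr F) v (uv k) := by
        funext v
        show pd k F v.1 (ext5 v.2) = _
        rw [pd_eq_fderiv hF hk, emb_ext5]
      rw [htr]
      have h1 : ContDiff ℝ n (fderiv ℝ (tr F)) :=
        (hF.2 (n + 1)).fderiv_right (by push_cast; exact le_rfl)
      exact h1.clm_apply contDiff_const
  · have : ∀ x p, (0 : ℝ) = pd k F x p := by
      intro x p
      have hfun : (fun t => F x (Function.update p k t)) = fun _ => F x p := by
        funext t
        apply hF.1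
        intro i hi
        rw [Function.update_apply]
        simp [show i ≠ k by omega]
      unfold pd
      rw [hfun]; simp
    have h0 : Nice (fun (_ : ℝ) (_ : ℕ → ℝ) => (0:ℝ)) := by
      constructor
      · intro _ _ _ _; rfl
      · intro _; exact contDiff_const
    exact nice_congr (A := fun (_ : ℝ) (_ : ℕ → ℝ) => (0:ℝ)) this h0

lemma nice_pdx {F : Fn} (hF : Nice F) : Nice (pdx F) := by
  constructor
  · intro x p q hpq
    rw [pdx_eq_fderiv hF, pdx_eq_fderiv hF]
    have : emb x p = emb x q := by
      refine Prod.ext rfl ?_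
      funext i
      exact hpq i i.isLt
    rw [this]
  · intro n
    have htr : tr (pdx F) = fun v => fderiv ℝ (tr F) v ux := by
      funext v
      show pdx F v.1 (ext5 v.2) = _
      rw [pdx_eq_fderiv hF, emb_ext5]
    rw [htr]
    have h1 : ContDiff ℝ n (fderiv ℝ (tr F)) :=
      (hF.2 (n + 1)).fderiv_right (by push_cast; exact le_rfl)
    exact h1.clm_apply contDiff_const

lemma nice_add {A B : Fn} (hA : Nice A) (hB : Nice B) : Nice (fun x p => A x p + B x p) := by
  constructor
  · intro x p q h; exact congrArg₂ (· + ·) (hA.1 x p q h) (hB.1 x p q h)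
  · intro n; exact (hA.2 n).add (hB.2 n)

lemma nice_sub {A B : Fn} (hA : Nice A) (hB : Nice B) : Nice (fun x p => A x p - B x p) := by
  constructor
  · intro x p q h; exact congrArg₂ (· - ·) (hA.1 x p q h) (hB.1 x p q h)
  · intro n; exact (hA.2 n).sub (hB.2 n)

lemma nice_mul {A B : Fn} (hA : Nice A) (hB : Nice B) : Nice (fun x p => A x p * B x p) := by
  constructor
  · intro x p q h; exact congrArg₂ (· * ·) (hA.1 x p q h) (hB.1 x p q h)
  · intro n; exact (hA.2 n).mul (hB.2 n)

lemma contDiff_coord {j : ℕ} (hj : j < 5) (n : ℕ) :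
    ContDiff ℝ n (fun v : V => ext5 v.2 j) := by
  have : (fun v : V => ext5 v.2 j) = fun v : V => v.2 ⟨j, hj⟩ := by
    funext v; simp [ext5, hj]
  rw [this]
  exact contDiff_pi.1 contDiff_snd (⟨j, hj⟩ : Fin 5)

lemma nice_coord_mul {B : Fn} (hB : Nice B) {j : ℕ} (hj : j < 5) :
    Nice (fun x p => p j * B x p) := by
  constructor
  · intro x p q h; exact congrArg₂ (· * ·) (h j hj) (hB.1 x p q h)
  · intro n
    show ContDiff ℝ n fun v : V => ext5 v.2 j * tr B v
    exact (contDiff_coord hj n).mul (hB.2 n)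

lemma nice_negExp {F : Fn} (hF : Nice F) : Nice (fun x p => Real.exp (-F x p)) := by
  constructor
  · intro x p q h; exact congrArg (fun y => Real.exp (-y)) (hF.1 x p q h)
  · intro n
    exact Real.contDiff_exp.comp (hF.2 n).neg

/-! ## Clairaut -/

lemma tr_pd {F : Fn} (hF : Nice F) {k : ℕ} (hk : k < 5) :
    tr (pd k F) = fun v => fderiv ℝ (tr F) v (uv k) := by
  funext v
  show pd k F v.1 (ext5 v.2) = _
  rw [pd_eq_fderiv hF hk, emb_ext5]

lemma tr_pdx {F : Fn} (hF : Nice F) :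
    tr (pdx F) = fun v => fderiv ℝ (tr F) v ux := by
  funext v
  show pdx F v.1 (ext5 v.2) = _
  rw [pdx_eq_fderiv hF, emb_ext5]

lemma fderiv_swap {F : Fn} (hF : Nice F) (x : ℝ) (p : ℕ → ℝ) (w w' : V) :
    fderiv ℝ (fun v => fderiv ℝ (tr F) v w') (emb x p) w
      = fderiv ℝ (fun v => fderiv ℝ (tr F) v w) (emb x p) w' := by
  have hdiff : Differentiable ℝ (tr F) := (hF.2 1).differentiable (by norm_cast)
  have hdf : Differentiable ℝ (fderiv ℝ (tr F)) :=
    ((hF.2 2).fderiv_right (m := 1) (by norm_cast)).differentiable (by norm_cast)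
  have h1 : ∀ (w'' : V), fderiv ℝ (fun v => fderiv ℝ (tr F) v w'') (emb x p)
      = (ContinuousLinearMap.apply ℝ ℝ w'').comp (fderiv ℝ (fderiv ℝ (tr F)) (emb x p)) := by
    intro w''
    have hc := ((ContinuousLinearMap.apply ℝ ℝ w'').hasFDerivAt
      (x := fderiv ℝ (tr F) (emb x p))).comp (emb x p) (hdf (emb x p)).hasFDerivAt
    exact hc.fderiv
  rw [h1 w', h1 w]
  simp only [ContinuousLinearMap.coe_comp', Function.comp_apply,
    ContinuousLinearMap.apply_apply]
  exact second_derivative_symmetric (fun y => (hdiff y).hasFDerivAt)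
    (hdf (emb x p)).hasFDerivAt w w'

lemma pd_pd_comm {F : Fn} (hF : Nice F) {j k : ℕ} (hj : j < 5) (hk : k < 5)
    (x : ℝ) (p : ℕ → ℝ) : pd j (pd k F) x p = pd k (pd j F) x p := by
  rw [pd_eq_fderiv (nice_pd hF k) hj, pd_eq_fderiv (nice_pd hF j) hk,
    tr_pd hF hk, tr_pd hF hj]
  exact fderiv_swap hF x p (uv j) (uv k)

lemma pd_pdx_comm {F : Fn} (hF : Nice F) {k : ℕ} (hk : k < 5)
    (x : ℝ) (p : ℕ → ℝ) : pd k (pdx F) x p = pdx (pd k F) x p := by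
  rw [pd_eq_fderiv (nice_pdx hF) hk, pdx_eq_fderiv (nice_pd hF k),
    tr_pdx hF, tr_pd hF hk]
  exact fderiv_swap hF x p (uv k) ux


/-! ## FnDependsOn lemmas -/

lemma dep_mono {F : Fn} {M M' : ℕ} (h : FnDependsOn F M) (hMM' : M ≤ M') : FnDependsOn F M' :=
  fun x p q hpq => h x p q fun i hi => hpq i (lt_of_lt_of_le hi hMM')

lemma dep_pd {F : Fn} {M : ℕ} (hF : FnDependsOn F M) (k : ℕ) : FnDependsOn (pd k F) M := by
  intro x p q hpq
  unfold pd
  have hfun : (fun t => F x (Function.update p k t)) = fun t => F x (Function.update q k t) := by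
    funext t
    apply hF
    intro i hi
    rw [Function.update_apply, Function.update_apply]
    by_cases h : i = k
    · simp [h]
    · simp [h, hpq i hi]
  rw [hfun]
  rcases lt_or_ge k M with hk | hk
  · rw [hpq k hk]
  · have hconst : (fun t => F x (Function.update q k t)) = fun _ => F x q := by
      funext t
      apply hF
      intro i hi
      rw [Function.update_apply]
      simp [show i ≠ k by omega]
    rw [hconst]
    simp

lemma dep_pdx {F : Fn} {M : ℕ} (hF : FnDependsOn F M) : FnDependsOn (pdx F) M := by
  intro x p q hpq
  unfold pdx
  have hfun : (fun t => F t p) = fun t => F t q := by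
    funext t; exact hF t p q hpq
  rw [hfun]

lemma dep_pint {F : Fn} {M : ℕ} (hF : FnDependsOn F M) {k : ℕ} (hk : k < M) :
    FnDependsOn (pint k F) M := by
  intro x p q hpq
  unfold pint
  rw [hpq k hk]
  congr 1
  funext t
  apply hF
  intro i hi
  rw [Function.update_apply, Function.update_apply]
  by_cases h : i = k
  · simp [h]
  · simp [h, hpq i hi]

lemma pd_of_dep {F : Fn} {M : ℕ} (hF : FnDependsOn F M) {k : ℕ} (hk : M ≤ k) :
    ∀ x p, pd k F x p = 0 := by
  intro x p
  unfold pd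
  have hconst : (fun t => F x (Function.update p k t)) = fun _ => F x p := by
    funext t
    apply hF
    intro i hi
    rw [Function.update_apply]
    simp [show i ≠ k by omega]
  rw [hconst]
  simp

/-! ## FTC and pint -/

lemma pd_pint {F : Fn} (hF : Nice F) {k : ℕ} (hk : k < 5) (x : ℝ) (p : ℕ → ℝ) :
    pd k (pint k F) x p = F x p := by
  unfold pd pint
  have hfun : (fun t => ∫ s in (0:ℝ)..(Function.update p k t k),
      F x (Function.update (Function.update p k t) k s))
      = fun t => ∫ s in (0:ℝ)..t, F x (Function.update p k s) := by
    funext t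
    rw [Function.update_self]
    congr 1
    funext s
    rw [Function.update_idem]
  show deriv (fun t => ∫ s in (0:ℝ)..(Function.update p k t k),
      F x (Function.update (Function.update p k t) k s)) (p k) = F x p
  rw [hfun]
  have hcont : Continuous (fun s => F x (Function.update p k s)) := by
    have : (fun s => F x (Function.update p k s))
        = fun s => tr F (emb x p + (s - p k) • uv k) := by
      funext s
      rw [← tr_emb hF.1, emb_update hk]
    rw [this]
    apply ((hF.2 0).continuous).comp
    continuity
  rw [Continuous.deriv_integral _ hcont 0 (p k)]
  rw [Function.update_eq_self]

lemma nice_pint {F : Fn} (hF : Nice F) {k : ℕ} (hk : k < 5) : Nice (pint k F) := by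
  constructor
  · exact dep_pint (dep_mono hF.1 (le_refl 5)) hk
  · intro n
    have htr : tr (pint k F) = fun v : V =>
        ∫ t in (0:ℝ)..(v.2 ⟨k, hk⟩), tr F (v.1, Function.update v.2 ⟨k, hk⟩ t) := by
      funext v
      show pint k F v.1 (ext5 v.2) = _
      unfold pint
      have h1 : ext5 v.2 k = v.2 ⟨k, hk⟩ := by simp [ext5, hk]
      rw [h1]
      congr 1
      funext t
      rw [← tr_emb hF.1]
      apply hF.1
      intro i hi
      simp only [emb, ext5]
      rw [Function.update_apply]
      by_cases h : i = k
      · subst h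
        simp [hi, Function.update_apply]
      · simp only [h, if_false, hi, dif_pos]
        rw [Function.update_apply]
        have : (⟨i, hi⟩ : Fin 5) ≠ ⟨k, hk⟩ := by
          intro hc
          apply h
          exact Fin.mk.inj_iff.1 hc
        simp [this, ext5, hi]
    rw [htr]
    have hint : ∀ m : ℕ, ContDiff ℝ m
        (fun q : V × ℝ => tr F (q.1.1, Function.update q.1.2 ⟨k, hk⟩ q.2)) := by
      intro m
      apply (hF.2 m).comp
      apply ContDiff.prodMk
      · exact contDiff_fst.comp contDiff_fst
      · rw [contDiff_pi]
        intro i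
        by_cases h : i = ⟨k, hk⟩
        · subst h
          have : (fun q : V × ℝ => Function.update q.1.2 ⟨k, hk⟩ q.2 ⟨k, hk⟩)
              = fun q : V × ℝ => q.2 := by
            funext q; simp
          rw [this]
          exact contDiff_snd
        · have : (fun q : V × ℝ => Function.update q.1.2 ⟨k, hk⟩ q.2 i)
              = fun q : V × ℝ => q.1.2 i := by
            funext q; simp [Function.update_apply, h]
          rw [this]
          exact (contDiff_pi.1 (contDiff_snd.comp contDiff_fst)) i
    have := (contDiff_primitive (E := V) n _ hint).comp
      (f := fun v : V => (v, v.2 ⟨k, hk⟩))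
      (contDiff_id.prodMk ((contDiff_pi.1 contDiff_snd) (⟨k, hk⟩ : Fin 5)))
    exact this

/-! ## pointwise derivative rules -/

section Rules
variable {A B : Fn} (x : ℝ) (p : ℕ → ℝ)

lemma pd_add (hA : Nice A) (hB : Nice B) (k : ℕ) :
    pd k (fun x p => A x p + B x p) x p = pd k A x p + pd k B x p :=
  ((hasDerivAt_pd hA k x p).add (hasDerivAt_pd hB k x p)).deriv

lemma pd_sub (hA : Nice A) (hB : Nice B) (k : ℕ) :
    pd k (fun x p => A x p - B x p) x p = pd k A x p - pd k B x p :=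
  ((hasDerivAt_pd hA k x p).sub (hasDerivAt_pd hB k x p)).deriv

lemma pdx_add (hA : Nice A) (hB : Nice B) :
    pdx (fun x p => A x p + B x p) x p = pdx A x p + pdx B x p :=
  ((hasDerivAt_pdx hA x p).add (hasDerivAt_pdx hB x p)).deriv

lemma pdx_sub (hA : Nice A) (hB : Nice B) :
    pdx (fun x p => A x p - B x p) x p = pdx A x p - pdx B x p :=
  ((hasDerivAt_pdx hA x p).sub (hasDerivAt_pdx hB x p)).deriv

lemma pd_coord_mul (hB : Nice B) {j k : ℕ} (hjk : j ≠ k) :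
    pd k (fun x p => p j * B x p) x p = p j * pd k B x p := by
  have h1 : ∀ t : ℝ, Function.update p k t j = p j := by
    intro t; rw [Function.update_apply]; simp [hjk]
  have h2 : HasDerivAt (fun t => Function.update p k t j * B x (Function.update p k t))
      (p j * pd k B x p) (p k) := by
    have := (hasDerivAt_pd hB k x p).const_mul (p j)
    apply this.congr_of_eventuallyEq
    filter_upwards with t
    rw [h1 t]
  exact h2.deriv

lemma pd_coord_mul_self (hB : Nice B) (k : ℕ) :
    pd k (fun x p => p k * B x p) x p = B x p + p k * pd k B x p := by
  have h2 : HasDerivAt (fun t => Function.update p k t k * B x (Function.update p k t))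
      (B x p + p k * pd k B x p) (p k) := by
    have h0 := (hasDerivAt_id (p k)).mul (hasDerivAt_pd hB k x p)
    have h1 : (1:ℝ) * B x (Function.update p k (p k)) + id (p k) * pd k B x p
        = B x p + p k * pd k B x p := by
      simp [Function.update_eq_self]
    rw [h1] at h0
    refine h0.congr_of_eventuallyEq ?_
    filter_upwards with t
    simp [Function.update_self]
  exact h2.deriv

lemma pdx_coord_mul (hB : Nice B) (j : ℕ) :
    pdx (fun x p => p j * B x p) x p = p j * pdx B x p :=
  ((hasDerivAt_pdx hB x p).const_mul (p j)).deriv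

lemma pd_congr {k : ℕ} (h : ∀ x p, A x p = B x p) :
    pd k A x p = pd k B x p := by
  unfold pd
  congr 1
  funext t
  rw [h]

lemma pdx_congr (h : ∀ x p, A x p = B x p) :
    pdx A x p = pdx B x p := by
  unfold pdx
  congr 1
  funext t
  rw [h]
end Rules

section DRules
variable {A B : Fn} (x : ℝ) (p : ℕ → ℝ)

lemma D_congr (m : ℕ) (h : ∀ x p, A x p = B x p) : D m A x p = D m B x p := by
  unfold D
  rw [pdx_congr x p h]
  congr 1
  apply Finset.sum_congr rfl
  intro k _
  rw [pd_congr x p h]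

lemma D4_eval (F : Fn) : D 4 F x p = pdx F x p + p 1 * pd 0 F x p + p 2 * pd 1 F x p
    + p 3 * pd 2 F x p + p 4 * pd 3 F x p := by
  show pdx F x p + ∑ k ∈ Finset.range 4, p (k + 1) * pd k F x p = _
  rw [Finset.sum_range_succ, Finset.sum_range_succ, Finset.sum_range_succ,
    Finset.sum_range_succ, Finset.sum_range_zero]
  ring

lemma D2_eval (F : Fn) : D 2 F x p = pdx F x p + p 1 * pd 0 F x p + p 2 * pd 1 F x p := by
  show pdx F x p + ∑ k ∈ Finset.range 2, p (k + 1) * pd k F x p = _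
  rw [Finset.sum_range_succ, Finset.sum_range_succ, Finset.sum_range_zero]
  ring

lemma D1_eval (F : Fn) : D 1 F x p = pdx F x p + p 1 * pd 0 F x p := by
  show pdx F x p + ∑ k ∈ Finset.range 1, p (k + 1) * pd k F x p = _
  rw [Finset.sum_range_succ, Finset.sum_range_zero]
  ring

lemma E42_eval (F : Fn) : E 4 2 F x p
    = pd 0 F x p - D 4 (pd 1 F) x p + D 4 (D 4 (pd 2 F)) x p := by
  show ∑ k ∈ Finset.range 3, (-1 : ℝ) ^ k * ((D 4)^[k] (pd k F)) x p = _
  rw [Finset.sum_range_succ, Finset.sum_range_succ, Finset.sum_range_succ,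
    Finset.sum_range_zero]
  show 0 + (-1:ℝ)^0 * (pd 0 F) x p + (-1:ℝ)^1 * (D 4 (pd 1 F)) x p
    + (-1:ℝ)^2 * (D 4 (D 4 (pd 2 F))) x p = _
  ring

lemma E22_eval (F : Fn) : E 2 2 F x p
    = pd 0 F x p - D 2 (pd 1 F) x p + D 2 (D 2 (pd 2 F)) x p := by
  show ∑ k ∈ Finset.range 3, (-1 : ℝ) ^ k * ((D 2)^[k] (pd k F)) x p = _
  rw [Finset.sum_range_succ, Finset.sum_range_succ, Finset.sum_range_succ,
    Finset.sum_range_zero]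
  show 0 + (-1:ℝ)^0 * (pd 0 F) x p + (-1:ℝ)^1 * (D 2 (pd 1 F)) x p
    + (-1:ℝ)^2 * (D 2 (D 2 (pd 2 F))) x p = _
  ring

lemma E11_eval (F : Fn) : E 1 1 F x p = pd 0 F x p - D 1 (pd 1 F) x p := by
  show ∑ k ∈ Finset.range 2, (-1 : ℝ) ^ k * ((D 1)^[k] (pd k F)) x p = _
  rw [Finset.sum_range_succ, Finset.sum_range_succ, Finset.sum_range_zero]
  show 0 + (-1:ℝ)^0 * (pd 0 F) x p + (-1:ℝ)^1 * (D 1 (pd 1 F)) x p = _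
  ring

lemma D_add (m : ℕ) (hA : Nice A) (hB : Nice B) :
    D m (fun x p => A x p + B x p) x p = D m A x p + D m B x p := by
  unfold D
  rw [pdx_add x p hA hB]
  have : ∀ k ∈ Finset.range m, p (k+1) * pd k (fun x p => A x p + B x p) x p
      = p (k+1) * pd k A x p + p (k+1) * pd k B x p := by
    intro k _
    rw [pd_add x p hA hB k]
    ring
  rw [Finset.sum_congr rfl this, Finset.sum_add_distrib]
  ring

lemma D_sub (m : ℕ) (hA : Nice A) (hB : Nice B) :
    D m (fun x p => A x p - B x p) x p = D m A x p - D m B x p := by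
  unfold D
  rw [pdx_sub x p hA hB]
  have : ∀ k ∈ Finset.range m, p (k+1) * pd k (fun x p => A x p - B x p) x p
      = p (k+1) * pd k A x p - p (k+1) * pd k B x p := by
    intro k _
    rw [pd_sub x p hA hB k]
    ring
  rw [Finset.sum_congr rfl this, Finset.sum_sub_distrib]
  ring

end DRules

section Exp
variable {R : Fn} (x : ℝ) (p : ℕ → ℝ)

lemma pd_negExp (hR : Nice R) (k : ℕ) :
    pd k (fun x p => Real.exp (-R x p)) x p = -(pd k R x p) * Real.exp (-R x p) := by
  have h := ((hasDerivAt_pd hR k x p).neg).exp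
  have : Real.exp (-R x (Function.update p k (p k))) * -pd k R x p
      = -(pd k R x p) * Real.exp (-R x p) := by
    rw [Function.update_eq_self]; ring
  rw [← this]
  exact h.deriv

lemma pdx_negExp (hR : Nice R) :
    pdx (fun x p => Real.exp (-R x p)) x p = -(pdx R x p) * Real.exp (-R x p) := by
  have h := ((hasDerivAt_pdx hR x p).neg).exp
  have : Real.exp (-R x p) * -pdx R x p = -(pdx R x p) * Real.exp (-R x p) := by ring
  rw [← this]
  exact h.deriv
end Exp

/-! ## more dep lemmas, SmoothUpTo transfer -/

lemma dep_add {A B : Fn} {M : ℕ} (hA : FnDependsOn A M) (hB : FnDependsOn B M) :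
    FnDependsOn (fun x p => A x p + B x p) M :=
  fun x p q h => congrArg₂ (· + ·) (hA x p q h) (hB x p q h)

lemma dep_sub {A B : Fn} {M : ℕ} (hA : FnDependsOn A M) (hB : FnDependsOn B M) :
    FnDependsOn (fun x p => A x p - B x p) M :=
  fun x p q h => congrArg₂ (· - ·) (hA x p q h) (hB x p q h)

lemma dep_coord_mul {B : Fn} {M : ℕ} (hB : FnDependsOn B M) {j : ℕ} (hj : j < M) :
    FnDependsOn (fun x p => p j * B x p) M :=
  fun x p q h => congrArg₂ (· * ·) (h j hj) (hB x p q h)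

lemma nice_of_smoothUpTo {F : Fn} {M : ℕ} (h : SmoothUpTo F M) (hM : M ≤ 5) : Nice F := by
  constructor
  · exact dep_mono h.1 hM
  · intro n
    have hsm : ContDiff ℝ n (fun v : ℝ × (Fin M → ℝ) =>
        F v.1 (fun i => if h : i < M then v.2 ⟨i, h⟩ else 0)) := h.2.of_le (by exact_mod_cast le_top)
    have heq : tr F = (fun v : ℝ × (Fin M → ℝ) =>
        F v.1 (fun i => if h : i < M then v.2 ⟨i, h⟩ else 0))
        ∘ (fun v : V => (v.1, fun i : Fin M => v.2 ⟨i.val, lt_of_lt_of_le i.isLt hM⟩)) := by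
      funext v
      show F v.1 (ext5 v.2) = _
      apply h.1
      intro i hi
      simp [ext5, dif_pos (lt_of_lt_of_le hi hM), dif_pos hi]
    rw [heq]
    apply hsm.comp
    apply contDiff_fst.prodMk
    rw [contDiff_pi]
    intro i
    exact contDiff_pi.1 contDiff_snd (⟨i.val, lt_of_lt_of_le i.isLt hM⟩ : Fin 5)

/-! ## split lemmas for common shapes -/

section Shapes
variable {A B C W0 W1 W2 : Fn} (x : ℝ) (p : ℕ → ℝ)

lemma pd_split4 (hA : Nice A) (hB : Nice B) (hC : Nice C) (hW : Nice W0) (k : ℕ) :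
    pd k (fun x p => A x p - B x p + C x p + W0 x p) x p
      = pd k A x p - pd k B x p + pd k C x p + pd k W0 x p := by
  rw [pd_add x p (A := fun x p => A x p - B x p + C x p) (B := W0)
      (nice_add (nice_sub hA hB) hC) hW k,
    pd_add x p (A := fun x p => A x p - B x p) (B := C) (nice_sub hA hB) hC k,
    pd_sub x p hA hB k]

lemma pd_shape0 (h0 : Nice W0) (h1 : Nice W1) (h2 : Nice W2) (k : ℕ) (hk : k ≠ 1 ∧ k ≠ 2) :
    pd k (fun x p => W0 x p + p 1 * W1 x p + p 2 * W2 x p) x p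
      = pd k W0 x p + p 1 * pd k W1 x p + p 2 * pd k W2 x p := by
  rw [pd_add x p (A := fun x p => W0 x p + p 1 * W1 x p) (B := fun x p => p 2 * W2 x p)
      (nice_add h0 (nice_coord_mul h1 (by norm_num))) (nice_coord_mul h2 (by norm_num)) k,
    pd_add x p (A := W0) (B := fun x p => p 1 * W1 x p) h0 (nice_coord_mul h1 (by norm_num)) k,
    pd_coord_mul x p h1 (Ne.symm hk.1), pd_coord_mul x p h2 (Ne.symm hk.2)]

lemma pd_shape1 (h0 : Nice W0) (h1 : Nice W1) (h2 : Nice W2) :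
    pd 1 (fun x p => W0 x p + p 1 * W1 x p + p 2 * W2 x p) x p
      = pd 1 W0 x p + (W1 x p + p 1 * pd 1 W1 x p) + p 2 * pd 1 W2 x p := by
  rw [pd_add x p (A := fun x p => W0 x p + p 1 * W1 x p) (B := fun x p => p 2 * W2 x p)
      (nice_add h0 (nice_coord_mul h1 (by norm_num))) (nice_coord_mul h2 (by norm_num)) 1,
    pd_add x p (A := W0) (B := fun x p => p 1 * W1 x p) h0 (nice_coord_mul h1 (by norm_num)) 1,
    pd_coord_mul_self x p h1 1, pd_coord_mul x p h2 (by norm_num)]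

lemma pd_shape2 (h0 : Nice W0) (h1 : Nice W1) (h2 : Nice W2) :
    pd 2 (fun x p => W0 x p + p 1 * W1 x p + p 2 * W2 x p) x p
      = pd 2 W0 x p + p 1 * pd 2 W1 x p + (W2 x p + p 2 * pd 2 W2 x p) := by
  rw [pd_add x p (A := fun x p => W0 x p + p 1 * W1 x p) (B := fun x p => p 2 * W2 x p)
      (nice_add h0 (nice_coord_mul h1 (by norm_num))) (nice_coord_mul h2 (by norm_num)) 2,
    pd_add x p (A := W0) (B := fun x p => p 1 * W1 x p) h0 (nice_coord_mul h1 (by norm_num)) 2,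
    pd_coord_mul x p h1 (by norm_num), pd_coord_mul_self x p h2 2]

lemma pdx_shape (h0 : Nice W0) (h1 : Nice W1) (h2 : Nice W2) :
    pdx (fun x p => W0 x p + p 1 * W1 x p + p 2 * W2 x p) x p
      = pdx W0 x p + p 1 * pdx W1 x p + p 2 * pdx W2 x p := by
  rw [pdx_add x p (A := fun x p => W0 x p + p 1 * W1 x p) (B := fun x p => p 2 * W2 x p)
      (nice_add h0 (nice_coord_mul h1 (by norm_num))) (nice_coord_mul h2 (by norm_num)),
    pdx_add x p (A := W0) (B := fun x p => p 1 * W1 x p) h0 (nice_coord_mul h1 (by norm_num)),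
    pdx_coord_mul x p h1 1, pdx_coord_mul x p h2 2]

lemma pdx_split4 (hA : Nice A) (hB : Nice B) (hC : Nice C) (hW : Nice W0) :
    pdx (fun x p => A x p - B x p + C x p + W0 x p) x p
      = pdx A x p - pdx B x p + pdx C x p + pdx W0 x p := by
  rw [pdx_add x p (A := fun x p => A x p - B x p + C x p) (B := W0)
      (nice_add (nice_sub hA hB) hC) hW,
    pdx_add x p (A := fun x p => A x p - B x p) (B := C) (nice_sub hA hB) hC,
    pdx_sub x p hA hB]

end Shapes


/-- (Theorem A, sufficiency.) For arbitrary smooth `R₂, f₁, f₀, N₁`,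
the functions `f₃`, `ρ₂`, `L₂` defined by (1.5) satisfy `ρ₂ > 0` and
`ρ₂ (p₄ - f₃) = E₄² L₂`. -/
theorem thmA_sufficiency (R f1 f0 N1 : Fn)
    (hR : SmoothUpTo R 3) (hf1 : SmoothUpTo f1 2) (hf0 : SmoothUpTo f0 1)
    (hN1 : SmoothUpTo N1 2) (f3 ρ L : Fn)
    (hf3 : ∀ x p, f3 x p = pd 2 R x p * p 3 ^ 2 + 2 * D 2 R x p * p 3 -
        Real.exp (R x p) * (E 2 2 (pint2 2 (negExpF R)) x p + f1 x p * p 2 -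
          E 1 1 (pint2 1 f1) x p + f0 x p))
    (hρ : ∀ x p, ρ x p = Real.exp (-R x p))
    (hL : ∀ x p, L x p = pint2 2 (negExpF R) x p - pint2 1 f1 x p + pint 0 f0 x p +
        D 2 N1 x p) :
    (∀ x p, 0 < ρ x p) ∧ ∀ x p, ρ x p * (p 4 - f3 x p) = E 4 2 L x p := by

  have nR : Nice R := nice_of_smoothUpTo hR (by norm_num)
  have nf1 : Nice f1 := nice_of_smoothUpTo hf1 (by norm_num)
  have nf0 : Nice f0 := nice_of_smoothUpTo hf0 (by norm_num)
  have nN1 : Nice N1 := nice_of_smoothUpTo hN1 (by norm_num)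
  have dR : FnDependsOn R 3 := hR.1
  have df1 : FnDependsOn f1 2 := hf1.1
  have df0 : FnDependsOn f0 1 := hf0.1
  have dN1 : FnDependsOn N1 2 := hN1.1
  have ng : Nice (negExpF R) := nice_negExp nR
  have dg : FnDependsOn (negExpF R) 3 := fun x p q h => congrArg (fun y => Real.exp (-y)) (dR x p q h)
  have nG1 : Nice (pint 2 (negExpF R)) := nice_pint ng (by norm_num)
  have dG1 : FnDependsOn (pint 2 (negExpF R)) 3 := dep_pint dg (by norm_num)
  have nG2 : Nice (pint2 2 (negExpF R)) := nice_pint nG1 (by norm_num)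
  have dG2 : FnDependsOn (pint2 2 (negExpF R)) 3 := dep_pint dG1 (by norm_num)
  have nF1 : Nice (pint 1 f1) := nice_pint nf1 (by norm_num)
  have dF1 : FnDependsOn (pint 1 f1) 2 := dep_pint df1 (by norm_num)
  have nF2 : Nice (pint2 1 f1) := nice_pint nF1 (by norm_num)
  have dF2 : FnDependsOn (pint2 1 f1) 2 := dep_pint dF1 (by norm_num)
  have nC0 : Nice (pint 0 f0) := nice_pint nf0 (by norm_num)
  have dC0 : FnDependsOn (pint 0 f0) 1 := dep_pint df0 (by norm_num)
  have nU : Nice (pd 1 N1) := nice_pd nN1 1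
  have dU : FnDependsOn (pd 1 N1) 2 := dep_pd dN1 1
  have nU0 : Nice (pd 0 N1) := nice_pd nN1 0
  have dU0 : FnDependsOn (pd 0 N1) 2 := dep_pd dN1 0
  have nXN : Nice (pdx N1) := nice_pdx nN1
  have dXN : FnDependsOn (pdx N1) 2 := dep_pdx dN1
  have nDNe : Nice (fun x p => pdx N1 x p + p 1 * pd 0 N1 x p + p 2 * pd 1 N1 x p) :=
    nice_add (nice_add nXN (nice_coord_mul nU0 (by norm_num))) (nice_coord_mul nU (by norm_num))
  have nKK : Nice (fun x p => pdx (pint 2 (negExpF R)) x p + p 1 * pd 0 (pint 2 (negExpF R)) x p + p 2 * pd 1 (pint 2 (negExpF R)) x p) :=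
    nice_add (nice_add (nice_pdx nG1) (nice_coord_mul (nice_pd nG1 0) (by norm_num)))
      (nice_coord_mul (nice_pd nG1 1) (by norm_num))
  have dKK : FnDependsOn (fun x p => pdx (pint 2 (negExpF R)) x p + p 1 * pd 0 (pint 2 (negExpF R)) x p + p 2 * pd 1 (pint 2 (negExpF R)) x p) 3 :=
    dep_add (dep_add (dep_pdx dG1) (dep_coord_mul (dep_pd dG1 0) (by norm_num)))
      (dep_coord_mul (dep_pd dG1 1) (by norm_num))
  have nP3g : Nice (fun x p => p 3 * (negExpF R) x p) := nice_coord_mul ng (by norm_num)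
  have npd1DNe : Nice (pd 1 (fun x p => pdx N1 x p + p 1 * pd 0 N1 x p + p 2 * pd 1 N1 x p)) := nice_pd nDNe 1
  -- FTC facts
  have S1 : ∀ x p, pd 2 (pint2 2 (negExpF R)) x p = (pint 2 (negExpF R)) x p := pd_pint nG1 (by norm_num)
  have S2 : ∀ x p, pd 2 (pint 2 (negExpF R)) x p = (negExpF R) x p := pd_pint ng (by norm_num)
  have S3 : ∀ x p, pd 1 (pint2 1 f1) x p = (pint 1 f1) x p := pd_pint nF1 (by norm_num)
  have S4 : ∀ x p, pd 1 (pint 1 f1) x p = f1 x p := pd_pint nf1 (by norm_num)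
  have S5 : ∀ x p, pd 0 (pint 0 f0) x p = f0 x p := pd_pint nf0 (by norm_num)
  -- pointwise form of L
  have hL' : ∀ x p, L x p = (pint2 2 (negExpF R)) x p - (pint2 1 f1) x p + (pint 0 f0) x p
      + (pdx N1 x p + p 1 * pd 0 N1 x p + p 2 * pd 1 N1 x p) := by
    intro x p
    rw [hL x p]
    congr 1
    exact D2_eval x p N1
  -- pd of L
  have C1 : ∀ x p, pd 2 L x p = (pint 2 (negExpF R)) x p + pd 1 N1 x p := by
    intro x p
    have e1 : pd 2 L x p = pd 2 (fun x p => (pint2 2 (negExpF R)) x p - (pint2 1 f1) x p + (pint 0 f0) x p + (fun x p => pdx N1 x p + p 1 * pd 0 N1 x p + p 2 * pd 1 N1 x p) x p) x p :=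
      pd_congr x p hL'
    rw [e1, pd_split4 x p nG2 nF2 nC0 nDNe 2, pd_shape2 x p nXN nU0 nU,
      S1 x p, pd_of_dep (k := 2) dF2 (by norm_num) x p, pd_of_dep (k := 2) dC0 (by norm_num) x p,
      pd_of_dep (k := 2) dXN (by norm_num) x p, pd_of_dep (k := 2) dU0 (by norm_num) x p,
      pd_of_dep (k := 2) dU (by norm_num) x p]
    ring
  have C2 : ∀ x p, pd 1 L x p = pd 1 (pint2 2 (negExpF R)) x p - (pint 1 f1) x p + pd 1 (fun x p => pdx N1 x p + p 1 * pd 0 N1 x p + p 2 * pd 1 N1 x p) x p := by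
    intro x p
    have e1 : pd 1 L x p = pd 1 (fun x p => (pint2 2 (negExpF R)) x p - (pint2 1 f1) x p + (pint 0 f0) x p + (fun x p => pdx N1 x p + p 1 * pd 0 N1 x p + p 2 * pd 1 N1 x p) x p) x p :=
      pd_congr x p hL'
    rw [e1, pd_split4 x p nG2 nF2 nC0 nDNe 1, S3 x p, pd_of_dep (k := 1) dC0 (by norm_num) x p]
    ring
  have C3 : ∀ x p, pd 0 L x p = pd 0 (pint2 2 (negExpF R)) x p - pd 0 (pint2 1 f1) x p + f0 x p + pd 0 (fun x p => pdx N1 x p + p 1 * pd 0 N1 x p + p 2 * pd 1 N1 x p) x p := by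
    intro x p
    have e1 : pd 0 L x p = pd 0 (fun x p => (pint2 2 (negExpF R)) x p - (pint2 1 f1) x p + (pint 0 f0) x p + (fun x p => pdx N1 x p + p 1 * pd 0 N1 x p + p 2 * pd 1 N1 x p) x p) x p :=
      pd_congr x p hL'
    rw [e1, pd_split4 x p nG2 nF2 nC0 nDNe 0, S5 x p]
  -- N1 bookkeeping
  have n1 : ∀ x p, pd 1 (fun x p => pdx N1 x p + p 1 * pd 0 N1 x p + p 2 * pd 1 N1 x p) x p = pdx (pd 1 N1) x p + pd 0 N1 x p
      + p 1 * pd 0 (pd 1 N1) x p + p 2 * pd 1 (pd 1 N1) x p := by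
    intro x p
    rw [pd_shape1 x p nXN nU0 nU, pd_pdx_comm nN1 (by norm_num) x p,
      pd_pd_comm nN1 (by norm_num) (by norm_num) x p]
    ring
  have n0 : ∀ x p, pd 0 (fun x p => pdx N1 x p + p 1 * pd 0 N1 x p + p 2 * pd 1 N1 x p) x p = pdx (pd 0 N1) x p
      + p 1 * pd 0 (pd 0 N1) x p + p 2 * pd 1 (pd 0 N1) x p := by
    intro x p
    rw [pd_shape0 x p nXN nU0 nU 0 (by norm_num), pd_pdx_comm nN1 (by norm_num) x p,
      pd_pd_comm (j := 0) (k := 1) nN1 (by norm_num) (by norm_num) x p]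
  have hD4U : ∀ x p, D 4 (pd 1 N1) x p = pd 1 (fun x p => pdx N1 x p + p 1 * pd 0 N1 x p + p 2 * pd 1 N1 x p) x p - pd 0 N1 x p := by
    intro x p
    rw [D4_eval x p (pd 1 N1), pd_of_dep dU (by norm_num : (2:ℕ) ≤ 2) x p,
      pd_of_dep dU (by norm_num : (2:ℕ) ≤ 3) x p, n1 x p]
    ring
  have hD4U0 : ∀ x p, D 4 (pd 0 N1) x p = pd 0 (fun x p => pdx N1 x p + p 1 * pd 0 N1 x p + p 2 * pd 1 N1 x p) x p := by
    intro x p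
    rw [D4_eval x p (pd 0 N1), pd_of_dep dU0 (by norm_num : (2:ℕ) ≤ 2) x p,
      pd_of_dep dU0 (by norm_num : (2:ℕ) ≤ 3) x p, n0 x p]
    ring
  -- second-order pieces
  have e3G1 : ∀ x p, D 4 (pint 2 (negExpF R)) x p = (pdx (pint 2 (negExpF R)) x p + p 1 * pd 0 (pint 2 (negExpF R)) x p + p 2 * pd 1 (pint 2 (negExpF R)) x p)
      + p 3 * (negExpF R) x p := by
    intro x p
    rw [D4_eval x p (pint 2 (negExpF R)), S2 x p, pd_of_dep (k := 3) dG1 (by norm_num) x p]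
    ring
  have hM2 : ∀ x p, D 4 (pd 2 L) x p = (pdx (pint 2 (negExpF R)) x p + p 1 * pd 0 (pint 2 (negExpF R)) x p
      + p 2 * pd 1 (pint 2 (negExpF R)) x p) + p 3 * (negExpF R) x p + pd 1 (fun x p => pdx N1 x p + p 1 * pd 0 N1 x p + p 2 * pd 1 N1 x p) x p - pd 0 N1 x p := by
    intro x p
    have e1 : D 4 (pd 2 L) x p = D 4 (fun x p => (pint 2 (negExpF R)) x p + pd 1 N1 x p) x p :=
      D_congr x p 4 C1
    rw [e1, D_add x p 4 nG1 nU, e3G1 x p, hD4U x p]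
    ring
  have hT3 : ∀ x p, D 4 (D 4 (pd 2 L)) x p = D 4 (fun x p => pdx (pint 2 (negExpF R)) x p + p 1 * pd 0 (pint 2 (negExpF R)) x p + p 2 * pd 1 (pint 2 (negExpF R)) x p) x p + D 4 (fun x p => p 3 * (negExpF R) x p) x p
      + D 4 (pd 1 (fun x p => pdx N1 x p + p 1 * pd 0 N1 x p + p 2 * pd 1 N1 x p)) x p - D 4 (pd 0 N1) x p := by
    intro x p
    have e1 : D 4 (D 4 (pd 2 L)) x p = D 4 (fun x p => pdx (pint 2 (negExpF R)) x p + p 1 * pd 0 (pint 2 (negExpF R)) x p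
        + p 2 * pd 1 (pint 2 (negExpF R)) x p + p 3 * (negExpF R) x p + pd 1 (fun x p => pdx N1 x p + p 1 * pd 0 N1 x p + p 2 * pd 1 N1 x p) x p - pd 0 N1 x p) x p :=
      D_congr x p 4 hM2
    rw [e1, D_sub x p 4 (A := fun x p => pdx (pint 2 (negExpF R)) x p + p 1 * pd 0 (pint 2 (negExpF R)) x p
        + p 2 * pd 1 (pint 2 (negExpF R)) x p + p 3 * (negExpF R) x p + pd 1 (fun x p => pdx N1 x p + p 1 * pd 0 N1 x p + p 2 * pd 1 N1 x p) x p) (B := pd 0 N1)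
        (nice_add (nice_add nKK nP3g) npd1DNe) nU0,
      D_add x p 4 (A := fun x p => pdx (pint 2 (negExpF R)) x p + p 1 * pd 0 (pint 2 (negExpF R)) x p
        + p 2 * pd 1 (pint 2 (negExpF R)) x p + p 3 * (negExpF R) x p) (B := pd 1 (fun x p => pdx N1 x p + p 1 * pd 0 N1 x p + p 2 * pd 1 N1 x p))
        (nice_add nKK nP3g) npd1DNe,
      D_add x p 4 (A := (fun x p => pdx (pint 2 (negExpF R)) x p + p 1 * pd 0 (pint 2 (negExpF R)) x p + p 2 * pd 1 (pint 2 (negExpF R)) x p)) (B := (fun x p => p 3 * (negExpF R) x p)) nKK nP3g]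
  have eK2 : ∀ x p, pd 2 (fun x p => pdx (pint 2 (negExpF R)) x p + p 1 * pd 0 (pint 2 (negExpF R)) x p + p 2 * pd 1 (pint 2 (negExpF R)) x p) x p = pdx (negExpF R) x p + p 1 * pd 0 (negExpF R) x p
      + pd 1 (pint 2 (negExpF R)) x p + p 2 * pd 1 (negExpF R) x p := by
    intro x p
    have c1 : pd 2 (pdx (pint 2 (negExpF R))) x p = pdx (pd 2 (pint 2 (negExpF R))) x p := pd_pdx_comm nG1 (by norm_num) x p
    have c2 : pd 2 (pd 0 (pint 2 (negExpF R))) x p = pd 0 (pd 2 (pint 2 (negExpF R))) x p :=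
      pd_pd_comm nG1 (by norm_num) (by norm_num) x p
    have c3 : pd 2 (pd 1 (pint 2 (negExpF R))) x p = pd 1 (pd 2 (pint 2 (negExpF R))) x p :=
      pd_pd_comm nG1 (by norm_num) (by norm_num) x p
    have r1 : pdx (pd 2 (pint 2 (negExpF R))) x p = pdx (negExpF R) x p := pdx_congr x p S2
    have r2 : pd 0 (pd 2 (pint 2 (negExpF R))) x p = pd 0 (negExpF R) x p := pd_congr x p S2
    have r3 : pd 1 (pd 2 (pint 2 (negExpF R))) x p = pd 1 (negExpF R) x p := pd_congr x p S2
    rw [pd_shape2 x p (nice_pdx nG1) (nice_pd nG1 0) (nice_pd nG1 1), c1, c2, c3, r1, r2, r3]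
    ring
  have hD4KK : ∀ x p, D 4 (fun x p => pdx (pint 2 (negExpF R)) x p + p 1 * pd 0 (pint 2 (negExpF R)) x p + p 2 * pd 1 (pint 2 (negExpF R)) x p) x p = D 2 (fun x p => pdx (pint 2 (negExpF R)) x p + p 1 * pd 0 (pint 2 (negExpF R)) x p + p 2 * pd 1 (pint 2 (negExpF R)) x p) x p + p 3 * (D 2 (negExpF R) x p + pd 1 (pint 2 (negExpF R)) x p) := by
    intro x p
    rw [D4_eval x p (fun x p => pdx (pint 2 (negExpF R)) x p + p 1 * pd 0 (pint 2 (negExpF R)) x p + p 2 * pd 1 (pint 2 (negExpF R)) x p), D2_eval x p (fun x p => pdx (pint 2 (negExpF R)) x p + p 1 * pd 0 (pint 2 (negExpF R)) x p + p 2 * pd 1 (pint 2 (negExpF R)) x p), eK2 x p, pd_of_dep (k := 3) dKK (by norm_num) x p,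
      D2_eval x p (negExpF R)]
    ring
  have hD4P3g : ∀ x p, D 4 (fun x p => p 3 * (negExpF R) x p) x p = p 3 * D 2 (negExpF R) x p + p 3 ^ 2 * pd 2 (negExpF R) x p
      + p 4 * (negExpF R) x p := by
    intro x p
    rw [D4_eval x p (fun x p => p 3 * (negExpF R) x p), pdx_coord_mul x p ng 3,
      pd_coord_mul x p ng (by norm_num : (3:ℕ) ≠ 0),
      pd_coord_mul x p ng (by norm_num : (3:ℕ) ≠ 1),
      pd_coord_mul x p ng (by norm_num : (3:ℕ) ≠ 2),
      pd_coord_mul_self x p ng 3, pd_of_dep (k := 3) dg (by norm_num) x p, D2_eval x p (negExpF R)]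
    ring
  have hD4pd1G2 : ∀ x p, D 4 (pd 1 (pint2 2 (negExpF R))) x p = D 2 (pd 1 (pint2 2 (negExpF R))) x p + p 3 * pd 1 (pint 2 (negExpF R)) x p := by
    intro x p
    have c1 : pd 2 (pd 1 (pint2 2 (negExpF R))) x p = pd 1 (pd 2 (pint2 2 (negExpF R))) x p :=
      pd_pd_comm nG2 (by norm_num) (by norm_num) x p
    have r1 : pd 1 (pd 2 (pint2 2 (negExpF R))) x p = pd 1 (pint 2 (negExpF R)) x p := pd_congr x p S1
    rw [D4_eval x p (pd 1 (pint2 2 (negExpF R))), D2_eval x p (pd 1 (pint2 2 (negExpF R))), c1, r1,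
      pd_of_dep (k := 3) (dep_pd dG2 1) (by norm_num) x p]
    ring
  have hD4F1 : ∀ x p, D 4 (pint 1 f1) x p = D 1 (pint 1 f1) x p + p 2 * f1 x p := by
    intro x p
    rw [D4_eval x p (pint 1 f1), D1_eval x p (pint 1 f1), S4 x p,
      pd_of_dep dF1 (by norm_num : (2:ℕ) ≤ 2) x p,
      pd_of_dep dF1 (by norm_num : (2:ℕ) ≤ 3) x p]
    ring
  have hD4pd1L : ∀ x p, D 4 (pd 1 L) x p = D 2 (pd 1 (pint2 2 (negExpF R))) x p + p 3 * pd 1 (pint 2 (negExpF R)) x p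
      - D 1 (pint 1 f1) x p - p 2 * f1 x p + D 4 (pd 1 (fun x p => pdx N1 x p + p 1 * pd 0 N1 x p + p 2 * pd 1 N1 x p)) x p := by
    intro x p
    have e1 : D 4 (pd 1 L) x p
        = D 4 (fun x p => pd 1 (pint2 2 (negExpF R)) x p - (pint 1 f1) x p + pd 1 (fun x p => pdx N1 x p + p 1 * pd 0 N1 x p + p 2 * pd 1 N1 x p) x p) x p :=
      D_congr x p 4 C2
    rw [e1, D_add x p 4 (A := fun x p => pd 1 (pint2 2 (negExpF R)) x p - (pint 1 f1) x p) (B := pd 1 (fun x p => pdx N1 x p + p 1 * pd 0 N1 x p + p 2 * pd 1 N1 x p))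
        (nice_sub (nice_pd nG2 1) nF1) npd1DNe,
      D_sub x p 4 (nice_pd nG2 1) nF1, hD4pd1G2 x p, hD4F1 x p]
    ring
  -- Euler-Lagrange pieces appearing in f3
  have hG1KK : ∀ x p, D 2 (pd 2 (pint2 2 (negExpF R))) x p = (fun x p => pdx (pint 2 (negExpF R)) x p + p 1 * pd 0 (pint 2 (negExpF R)) x p + p 2 * pd 1 (pint 2 (negExpF R)) x p) x p := by
    intro x p
    exact (D_congr x p 2 S1).trans (D2_eval x p (pint 2 (negExpF R)))
  have hE22 : ∀ x p, E 2 2 (pint2 2 (negExpF R)) x p = pd 0 (pint2 2 (negExpF R)) x p - D 2 (pd 1 (pint2 2 (negExpF R))) x p + D 2 (fun x p => pdx (pint 2 (negExpF R)) x p + p 1 * pd 0 (pint 2 (negExpF R)) x p + p 2 * pd 1 (pint 2 (negExpF R)) x p) x p := by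
    intro x p
    rw [E22_eval x p (pint2 2 (negExpF R)), D_congr x p 2 hG1KK]
  have hE11 : ∀ x p, E 1 1 (pint2 1 f1) x p = pd 0 (pint2 1 f1) x p - D 1 (pint 1 f1) x p := by
    intro x p
    rw [E11_eval x p (pint2 1 f1), D_congr x p 1 S3]
  -- chain rule for the exponential
  have hc2 : ∀ x p, pd 2 (negExpF R) x p = -pd 2 R x p * (negExpF R) x p := fun x p => pd_negExp x p nR 2
  have hcD2 : ∀ x p, D 2 (negExpF R) x p = -D 2 R x p * (negExpF R) x p := by
    intro x p
    have a0 : pd 0 (negExpF R) x p = -pd 0 R x p * (negExpF R) x p := pd_negExp x p nR 0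
    have a1 : pd 1 (negExpF R) x p = -pd 1 R x p * (negExpF R) x p := pd_negExp x p nR 1
    have ax : pdx (negExpF R) x p = -pdx R x p * (negExpF R) x p := pdx_negExp x p nR
    rw [D2_eval x p (negExpF R), D2_eval x p R, a0, a1, ax]
    ring
  constructor
  · intro x p
    rw [hρ x p]
    exact Real.exp_pos _
  · intro x p
    have hρ' : ρ x p = (negExpF R) x p := hρ x p
    have hexp : (negExpF R) x p * Real.exp (R x p) = 1 := by
      show Real.exp (-R x p) * Real.exp (R x p) = 1
      rw [← Real.exp_add]
      simp
    rw [hρ', hf3 x p, E42_eval x p L, C3 x p, hD4pd1L x p, hT3 x p, hD4KK x p, hD4P3g x p,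
      hD4U0 x p, hE22 x p, hE11 x p, hc2 x p, hcD2 x p]
    linear_combination (pd 0 (pint2 2 (negExpF R)) x p - D 2 (pd 1 (pint2 2 (negExpF R))) x p + D 2 (fun x p => pdx (pint 2 (negExpF R)) x p + p 1 * pd 0 (pint 2 (negExpF R)) x p + p 2 * pd 1 (pint 2 (negExpF R)) x p) x p + f1 x p * p 2
      - (pd 0 (pint2 1 f1) x p - D 1 (pint 1 f1) x p) + f0 x p) * hexp
end

section
/- As operators on smooth functions of (x, p_0, p_1, …) depending on finitely many variables, ∂_2^2 ∘ E_2^2 = (D_2^2 ∂_2 + 3 D_2 ∂_1 + 3 ∂_0) ∘ ∂_2^2; that is, for every such smooth function F, ∂_2^2 (E_2^2 F) = D_2^2 ∂_2 (∂_2^2 F) + 3 D_2 ∂_1 (∂_2^2 F) + 3 ∂_0 (∂_2^2 F). -/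
/-! ### Auxiliary abstract calculus on a normed space -/

section Abstract
variable {Ω : Type*} [NormedAddCommGroup Ω] [NormedSpace ℝ Ω]

/-- Directional derivative operator. -/
noncomputable def der (u : Ω) (H : Ω → ℝ) : Ω → ℝ := fun w => fderiv ℝ H w u

lemma contDiff_der (u : Ω) {H : Ω → ℝ} (hH : ContDiff ℝ (⊤ : ℕ∞) H) : ContDiff ℝ (⊤ : ℕ∞) (der u H) := by
  have h1 : ContDiff ℝ (⊤ : ℕ∞) (fderiv ℝ H) := hH.fderiv_right (by simp)
  exact (ContinuousLinearMap.apply ℝ ℝ u).contDiff.comp h1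

lemma der_add {A B : Ω → ℝ} (hA : Differentiable ℝ A) (hB : Differentiable ℝ B) (u : Ω) :
    der u (fun w => A w + B w) = fun w => der u A w + der u B w := by
  funext w
  simp only [der, fderiv_fun_add (hA w) (hB w), ContinuousLinearMap.add_apply]

lemma der_mul {A B : Ω → ℝ} (hA : Differentiable ℝ A) (hB : Differentiable ℝ B) (u : Ω) :
    der u (fun w => A w * B w) = fun w => der u A w * B w + A w * der u B w := by
  funext w
  simp only [der, fderiv_fun_mul (hA w) (hB w), ContinuousLinearMap.add_apply,
    ContinuousLinearMap.smul_apply, smul_eq_mul]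
  ring

lemma der_clm (ℓ : Ω →L[ℝ] ℝ) (u : Ω) : der u (fun w => ℓ w) = fun _ => ℓ u := by
  funext w
  simp [der, ℓ.fderiv]

lemma der_comm {H : Ω → ℝ} (hH : ContDiff ℝ (⊤ : ℕ∞) H) (u v : Ω) :
    der u (der v H) = der v (der u H) := by
  funext x
  have hd : ∀ y, HasFDerivAt H (fderiv ℝ H y) y := fun y => (hH.differentiable (by simp) y).hasFDerivAt
  have h2 : HasFDerivAt (fderiv ℝ H) (fderiv ℝ (fderiv ℝ H) x) x :=
    (((hH.fderiv_right (m := (⊤ : ℕ∞)) (by simp)).differentiable (by simp)) x).hasFDerivAt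
  have sym := second_derivative_symmetric hd h2
  have h3 : ∀ a : Ω, fderiv ℝ (der a H) x =
      (ContinuousLinearMap.apply ℝ ℝ a).comp (fderiv ℝ (fderiv ℝ H) x) := by
    intro a
    exact ((ContinuousLinearMap.apply ℝ ℝ a).hasFDerivAt.comp x h2).fderiv
  show fderiv ℝ (der v H) x u = fderiv ℝ (der u H) x v
  rw [h3 v, h3 u]
  exact sym u v

lemma deriv_along {G : Ω → ℝ} (hG : ContDiff ℝ (⊤ : ℕ∞) G) (w v : Ω) (t0 : ℝ) :
    deriv (fun t => G (w + (t - t0) • v)) t0 = fderiv ℝ G w v := by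
  have h1 : HasDerivAt (fun t : ℝ => w + (t - t0) • v) v t0 := by
    have h : HasDerivAt (fun t : ℝ => t - t0) 1 t0 := (hasDerivAt_id t0).sub_const t0
    simpa using (h.smul_const v).const_add w
  have h2 : HasFDerivAt G (fderiv ℝ G w) ((fun t : ℝ => w + (t - t0) • v) t0) := by
    simpa using (hG.differentiable (by simp) w).hasFDerivAt
  exact (h2.comp_hasDerivAt t0 h1).deriv

variable (vx v0 v1 : Ω) (ℓ1 ℓ2 : Ω →L[ℝ] ℝ)

/-- Abstract model of the truncated total differential `D 2`. -/
noncomputable def TD (H : Ω → ℝ) : Ω → ℝ :=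
  fun w => der vx H w + ℓ1 w * der v0 H w + ℓ2 w * der v1 H w

lemma contDiff_TD {H : Ω → ℝ} (hH : ContDiff ℝ (⊤ : ℕ∞) H) :
    ContDiff ℝ (⊤ : ℕ∞) (TD vx v0 v1 ℓ1 ℓ2 H) :=
  ((contDiff_der vx hH).add (ℓ1.contDiff.mul (contDiff_der v0 hH))).add
    (ℓ2.contDiff.mul (contDiff_der v1 hH))

lemma der_TD {H : Ω → ℝ} (hH : ContDiff ℝ (⊤ : ℕ∞) H) (u : Ω) :
    der u (TD vx v0 v1 ℓ1 ℓ2 H) =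
      fun w => TD vx v0 v1 ℓ1 ℓ2 (der u H) w + ℓ1 u * der v0 H w + ℓ2 u * der v1 H w := by
  have dx : Differentiable ℝ (der vx H) := (contDiff_der vx hH).differentiable (by simp)
  have d0 : Differentiable ℝ (der v0 H) := (contDiff_der v0 hH).differentiable (by simp)
  have d1 : Differentiable ℝ (der v1 H) := (contDiff_der v1 hH).differentiable (by simp)
  have dl1 : Differentiable ℝ (fun w => ℓ1 w) := ℓ1.differentiable
  have dl2 : Differentiable ℝ (fun w => ℓ2 w) := ℓ2.differentiable
  have h1 : der u (TD vx v0 v1 ℓ1 ℓ2 H) =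
      fun w => der u (fun z => der vx H z + ℓ1 z * der v0 H z) w
        + der u (fun z => ℓ2 z * der v1 H z) w :=
    der_add (A := fun z => der vx H z + ℓ1 z * der v0 H z)
      (B := fun z => ℓ2 z * der v1 H z)
      (dx.add (dl1.mul d0)) (dl2.mul d1) u
  have h2 : der u (fun z => der vx H z + ℓ1 z * der v0 H z) =
      fun w => der u (der vx H) w + der u (fun z => ℓ1 z * der v0 H z) w :=
    der_add dx (dl1.mul d0) u
  have h3 : der u (fun z => ℓ1 z * der v0 H z) =
      fun w => der u (fun z => ℓ1 z) w * der v0 H w + ℓ1 w * der u (der v0 H) w :=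
    der_mul dl1 d0 u
  have h4 : der u (fun z => ℓ2 z * der v1 H z) =
      fun w => der u (fun z => ℓ2 z) w * der v1 H w + ℓ2 w * der u (der v1 H) w :=
    der_mul dl2 d1 u
  funext w
  rw [h1, h2, h3, h4, der_clm ℓ1 u, der_clm ℓ2 u,
    der_comm hH u vx, der_comm hH u v0, der_comm hH u v1]
  simp only [TD]
  ring

lemma der_combo3 {A B C : Ω → ℝ} (hA : Differentiable ℝ A) (hB : Differentiable ℝ B)
    (hC : Differentiable ℝ C) (u : Ω) :
    der u (fun w => A w - B w + C w) = fun w => der u A w - der u B w + der u C w := by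
  funext w
  have h := (((hA w).hasFDerivAt.sub (hB w).hasFDerivAt).add (hC w).hasFDerivAt)
  have h' : fderiv ℝ (fun w => A w - B w + C w) w =
      fderiv ℝ A w - fderiv ℝ B w + fderiv ℝ C w := h.fderiv
  simp only [der, h', ContinuousLinearMap.add_apply, ContinuousLinearMap.sub_apply]

lemma der_combo4 {A B C D' : Ω → ℝ} (hA : Differentiable ℝ A) (hB : Differentiable ℝ B)
    (hC : Differentiable ℝ C) (hD : Differentiable ℝ D') (u : Ω) :
    der u (fun w => 2 * A w + B w - C w + D' w) =
      fun w => 2 * der u A w + der u B w - der u C w + der u D' w := by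
  funext w
  have h := ((((hA w).hasFDerivAt.const_mul (2 : ℝ)).add (hB w).hasFDerivAt).sub
      (hC w).hasFDerivAt).add (hD w).hasFDerivAt
  have h' : fderiv ℝ (fun w => 2 * A w + B w - C w + D' w) w =
      (2 : ℝ) • fderiv ℝ A w + fderiv ℝ B w - fderiv ℝ C w + fderiv ℝ D' w := h.fderiv
  simp only [der, h', ContinuousLinearMap.add_apply, ContinuousLinearMap.sub_apply,
    ContinuousLinearMap.smul_apply, smul_eq_mul]

lemma TD_add {A B : Ω → ℝ} (hA : Differentiable ℝ A) (hB : Differentiable ℝ B) :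
    TD vx v0 v1 ℓ1 ℓ2 (fun w => A w + B w) =
      fun w => TD vx v0 v1 ℓ1 ℓ2 A w + TD vx v0 v1 ℓ1 ℓ2 B w := by
  funext w
  simp only [TD]
  rw [der_add hA hB vx, der_add hA hB v0, der_add hA hB v1]
  ring

variable (v2 : Ω)

lemma master (hp11 : ℓ1 v1 = 1) (hp21 : ℓ2 v1 = 0) (hp12 : ℓ1 v2 = 0) (hp22 : ℓ2 v2 = 1)
    {G : Ω → ℝ} (hG : ContDiff ℝ (⊤ : ℕ∞) G) (w : Ω) :
    der v2 (der v2 (fun z => der v0 G z - TD vx v0 v1 ℓ1 ℓ2 (der v1 G) z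
        + TD vx v0 v1 ℓ1 ℓ2 (TD vx v0 v1 ℓ1 ℓ2 (der v2 G)) z)) w =
      TD vx v0 v1 ℓ1 ℓ2 (TD vx v0 v1 ℓ1 ℓ2 (der v2 (der v2 (der v2 G)))) w
        + 3 * TD vx v0 v1 ℓ1 ℓ2 (der v1 (der v2 (der v2 G))) w
        + 3 * der v0 (der v2 (der v2 G)) w := by
  set T := TD vx v0 v1 ℓ1 ℓ2 with hT
  have Tsm : ∀ {H : Ω → ℝ}, ContDiff ℝ (⊤ : ℕ∞) H → ContDiff ℝ (⊤ : ℕ∞) (T H) := by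
    intro H hH; exact contDiff_TD vx v0 v1 ℓ1 ℓ2 hH
  have dT2 : ∀ {H : Ω → ℝ}, ContDiff ℝ (⊤ : ℕ∞) H →
      der v2 (T H) = fun w => T (der v2 H) w + der v1 H w := by
    intro H hH
    rw [hT, der_TD vx v0 v1 ℓ1 ℓ2 hH v2, hp12, hp22]
    funext z; ring
  have dT1 : ∀ {H : Ω → ℝ}, ContDiff ℝ (⊤ : ℕ∞) H →
      der v1 (T H) = fun w => T (der v1 H) w + der v0 H w := by
    intro H hH
    rw [hT, der_TD vx v0 v1 ℓ1 ℓ2 hH v1, hp11, hp21]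
    funext z; ring
  have hdf : ∀ {H : Ω → ℝ}, ContDiff ℝ (⊤ : ℕ∞) H → Differentiable ℝ H := fun h => h.differentiable (by simp)
  have Tadd : ∀ (A B : Ω → ℝ), Differentiable ℝ A → Differentiable ℝ B →
      T (fun w => A w + B w) = fun w => T A w + T B w := by
    intro A B hA hB; rw [hT]; exact TD_add vx v0 v1 ℓ1 ℓ2 hA hB
  have hG0 := contDiff_der v0 hG
  have hG1 := contDiff_der v1 hG
  have hG2 := contDiff_der v2 hG
  have hG12 := contDiff_der v1 hG2
  have hG22 := contDiff_der v2 hG2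
  have hG222 := contDiff_der v2 hG22
  have hG122 := contDiff_der v1 hG22
  have step1 : der v2 (fun z => der v0 G z - T (der v1 G) z + T (T (der v2 G)) z) =
      fun z => 2 * der v0 (der v2 G) z + T (der v1 (der v2 G)) z - der v1 (der v1 G) z
        + T (T (der v2 (der v2 G))) z := by
    rw [der_combo3 (hdf hG0) (hdf (Tsm hG1)) (hdf (Tsm (Tsm hG2))) v2]
    rw [dT2 hG1, dT2 (Tsm hG2), dT2 hG2, dT1 hG2]
    rw [Tadd (T (der v2 (der v2 G))) (der v1 (der v2 G)) (hdf (Tsm hG22)) (hdf hG12)]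
    rw [der_comm hG v2 v0, der_comm hG v2 v1]
    funext z; ring
  rw [step1]
  have step2 : der v2 (fun z => 2 * der v0 (der v2 G) z + T (der v1 (der v2 G)) z
        - der v1 (der v1 G) z + T (T (der v2 (der v2 G))) z) =
      fun z => T (T (der v2 (der v2 (der v2 G)))) z + 3 * T (der v1 (der v2 (der v2 G))) z
        + 3 * der v0 (der v2 (der v2 G)) z := by
    rw [der_combo4 (hdf (contDiff_der v0 hG2)) (hdf (Tsm hG12)) (hdf (contDiff_der v1 hG1))
      (hdf (Tsm (Tsm hG22))) v2]
    rw [dT2 hG12, dT2 (Tsm hG22), dT2 hG22, dT1 hG22]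
    rw [Tadd (T (der v2 (der v2 (der v2 G)))) (der v1 (der v2 (der v2 G)))
      (hdf (Tsm hG222)) (hdf hG122)]
    rw [der_comm hG2 v2 v0]
    rw [der_comm hG2 v2 v1]
    rw [der_comm hG1 v2 v1]
    rw [der_comm hG v2 v1]
    funext z; ring
  rw [step2]

end Abstract

/-! ### Bridging `Fn` operators to the finite-dimensional model -/

section Bridge
variable {M : ℕ}

lemma rep_pd {F : Fn} {G : ℝ × (Fin M → ℝ) → ℝ} (hG : ContDiff ℝ (⊤ : ℕ∞) G)
    (hRep : ∀ x p, F x p = G (x, fun i => p i)) (k : ℕ) (hk : k < M) :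
    ∀ (x : ℝ) (p : ℕ → ℝ),
      pd k F x p = der ((0 : ℝ), Pi.single (⟨k, hk⟩ : Fin M) (1 : ℝ)) G (x, fun i => p i) := by
  intro x p
  have key : ∀ t : ℝ, ((x, fun i : Fin M => Function.update p k t i) : ℝ × (Fin M → ℝ)) =
      (x, fun i : Fin M => p i) +
        (t - p k) • (((0 : ℝ), Pi.single (⟨k, hk⟩ : Fin M) (1 : ℝ)) : ℝ × (Fin M → ℝ)) := by
    intro t
    have h2 : (fun i : Fin M => Function.update p k t i) =
        (fun i : Fin M => p i) +
          (t - p k) • (Pi.single (⟨k, hk⟩ : Fin M) (1 : ℝ) : Fin M → ℝ) := by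
      funext i
      by_cases hik : i = (⟨k, hk⟩ : Fin M)
      · subst hik
        simp [Function.update_self]
      · have hik' : (i : ℕ) ≠ k := fun h => hik (Fin.ext h)
        simp [Function.update_of_ne hik', Pi.single_eq_of_ne hik]
    rw [Prod.ext_iff]
    constructor
    · simp
    · simpa using h2
  have hfun : (fun t => F x (Function.update p k t)) =
      fun t => G ((x, fun i : Fin M => p i) + (t - p k) • (0, Pi.single ⟨k, hk⟩ 1)) := by
    funext t
    rw [hRep x (Function.update p k t)]
    exact congrArg G (key t)
  show deriv _ (p k) = _
  rw [hfun, deriv_along hG _ _ (p k)]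
  rfl

lemma rep_pdx {F : Fn} {G : ℝ × (Fin M → ℝ) → ℝ} (hG : ContDiff ℝ (⊤ : ℕ∞) G)
    (hRep : ∀ x p, F x p = G (x, fun i => p i)) :
    ∀ (x : ℝ) (p : ℕ → ℝ),
      pdx F x p = der ((1 : ℝ), (0 : Fin M → ℝ)) G (x, fun i => p i) := by
  intro x p
  have hfun : (fun t => F t p) =
      fun t => G ((x, fun i : Fin M => p i) + (t - x) • ((1 : ℝ), (0 : Fin M → ℝ))) := by
    funext t
    rw [hRep t p]
    congr 1
    rw [Prod.ext_iff]
    constructor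
    · simp
    · simp
  show deriv _ x = _
  rw [hfun, deriv_along hG _ _ x]
  rfl

lemma rep_D2 (h0 : 0 < M) (h1 : 1 < M) (h2 : 2 < M) {F : Fn} {G : ℝ × (Fin M → ℝ) → ℝ}
    (hG : ContDiff ℝ (⊤ : ℕ∞) G) (hRep : ∀ x p, F x p = G (x, fun i => p i)) :
    ∀ (x : ℝ) (p : ℕ → ℝ),
      D 2 F x p = TD ((1 : ℝ), (0 : Fin M → ℝ))
        ((0 : ℝ), Pi.single (⟨0, h0⟩ : Fin M) (1 : ℝ))
        ((0 : ℝ), Pi.single (⟨1, h1⟩ : Fin M) (1 : ℝ))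
        ((ContinuousLinearMap.proj (⟨1, h1⟩ : Fin M)).comp
          (ContinuousLinearMap.snd ℝ ℝ (Fin M → ℝ)))
        ((ContinuousLinearMap.proj (⟨2, h2⟩ : Fin M)).comp
          (ContinuousLinearMap.snd ℝ ℝ (Fin M → ℝ)))
        G (x, fun i => p i) := by
  intro x p
  show pdx F x p + _ = _
  rw [Finset.sum_range_succ, Finset.sum_range_one]
  rw [rep_pdx hG hRep x p, rep_pd hG hRep 0 h0 x p, rep_pd hG hRep 1 h1 x p]
  simp only [TD, ContinuousLinearMap.comp_apply, ContinuousLinearMap.coe_snd',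
    ContinuousLinearMap.proj_apply]
  ring

lemma final (h0 : 0 < M) (h1 : 1 < M) (h2 : 2 < M) {F : Fn} {G : ℝ × (Fin M → ℝ) → ℝ}
    (hG : ContDiff ℝ (⊤ : ℕ∞) G) (hRep : ∀ x p, F x p = G (x, fun i => p i)) (x : ℝ) (p : ℕ → ℝ) :
    pd 2 (pd 2 (E 2 2 F)) x p =
      (D 2)^[2] (pd 2 (pd 2 (pd 2 F))) x p + 3 * D 2 (pd 1 (pd 2 (pd 2 F))) x p +
        3 * pd 0 (pd 2 (pd 2 F)) x p := by
  set e0 : ℝ × (Fin M → ℝ) := ((0 : ℝ), Pi.single (⟨0, h0⟩ : Fin M) (1 : ℝ)) with he0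
  set e1 : ℝ × (Fin M → ℝ) := ((0 : ℝ), Pi.single (⟨1, h1⟩ : Fin M) (1 : ℝ)) with he1
  set e2 : ℝ × (Fin M → ℝ) := ((0 : ℝ), Pi.single (⟨2, h2⟩ : Fin M) (1 : ℝ)) with he2
  set vx : ℝ × (Fin M → ℝ) := ((1 : ℝ), (0 : Fin M → ℝ)) with hvx
  set l1 : (ℝ × (Fin M → ℝ)) →L[ℝ] ℝ := (ContinuousLinearMap.proj (⟨1, h1⟩ : Fin M)).comp
    (ContinuousLinearMap.snd ℝ ℝ (Fin M → ℝ)) with hl1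
  set l2 : (ℝ × (Fin M → ℝ)) →L[ℝ] ℝ := (ContinuousLinearMap.proj (⟨2, h2⟩ : Fin M)).comp
    (ContinuousLinearMap.snd ℝ ℝ (Fin M → ℝ)) with hl2
  have hsm : ∀ {H : ℝ × (Fin M → ℝ) → ℝ}, ContDiff ℝ (⊤ : ℕ∞) H →
      ContDiff ℝ (⊤ : ℕ∞) (TD vx e0 e1 l1 l2 H) := fun h => contDiff_TD vx e0 e1 l1 l2 h
  -- pairings
  have hne21 : (⟨2, h2⟩ : Fin M) ≠ ⟨1, h1⟩ := by simp [Fin.ext_iff]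
  have hne12 : (⟨1, h1⟩ : Fin M) ≠ ⟨2, h2⟩ := by simp [Fin.ext_iff]
  have hp11 : l1 e1 = 1 := by
    simp [hl1, he1]
  have hp21 : l2 e1 = 0 := by
    simp [hl2, he1, Pi.single_eq_of_ne hne21]
  have hp12 : l1 e2 = 0 := by
    simp [hl1, he2, Pi.single_eq_of_ne hne12]
  have hp22 : l2 e2 = 1 := by
    simp [hl2, he2]
  -- representation chain
  have hR0 : ∀ x p, pd 0 F x p = der e0 G (x, fun i => p i) := rep_pd hG hRep 0 h0
  have hR1 : ∀ x p, pd 1 F x p = der e1 G (x, fun i => p i) := rep_pd hG hRep 1 h1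
  have hR2 : ∀ x p, pd 2 F x p = der e2 G (x, fun i => p i) := rep_pd hG hRep 2 h2
  have hG2 := contDiff_der e2 hG
  have hG22 := contDiff_der e2 hG2
  have hG222 := contDiff_der e2 hG22
  have hR22 : ∀ x p, pd 2 (pd 2 F) x p = der e2 (der e2 G) (x, fun i => p i) :=
    rep_pd hG2 hR2 2 h2
  have hR222 : ∀ x p, pd 2 (pd 2 (pd 2 F)) x p = der e2 (der e2 (der e2 G)) (x, fun i => p i) :=
    rep_pd hG22 hR22 2 h2
  have hRD1 : ∀ x p, D 2 (pd 1 F) x p = TD vx e0 e1 l1 l2 (der e1 G) (x, fun i => p i) :=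
    rep_D2 h0 h1 h2 (contDiff_der e1 hG) hR1
  have hRD2 : ∀ x p, D 2 (pd 2 F) x p = TD vx e0 e1 l1 l2 (der e2 G) (x, fun i => p i) :=
    rep_D2 h0 h1 h2 hG2 hR2
  have hRD22 : ∀ x p, D 2 (D 2 (pd 2 F)) x p =
      TD vx e0 e1 l1 l2 (TD vx e0 e1 l1 l2 (der e2 G)) (x, fun i => p i) :=
    rep_D2 h0 h1 h2 (hsm hG2) hRD2
  -- representation of `E 2 2 F`
  have hRE : ∀ x p, E 2 2 F x p =
      (fun z => der e0 G z - TD vx e0 e1 l1 l2 (der e1 G) z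
        + TD vx e0 e1 l1 l2 (TD vx e0 e1 l1 l2 (der e2 G)) z) (x, fun i => p i) := by
    intro x' p'
    show (∑ k ∈ Finset.range 3, (-1 : ℝ) ^ k * ((D 2)^[k] (pd k F)) x' p') = _
    rw [Finset.sum_range_succ, Finset.sum_range_succ, Finset.sum_range_one]
    have i0 : (D 2)^[0] (pd 0 F) = pd 0 F := rfl
    have i1 : (D 2)^[1] (pd 1 F) = D 2 (pd 1 F) := rfl
    have i2 : (D 2)^[2] (pd 2 F) = D 2 (D 2 (pd 2 F)) := rfl
    rw [i0, i1, i2, hR0 x' p', hRD1 x' p', hRD22 x' p']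
    show _ = der e0 G (x', fun i => p' i) - TD vx e0 e1 l1 l2 (der e1 G) (x', fun i => p' i)
        + TD vx e0 e1 l1 l2 (TD vx e0 e1 l1 l2 (der e2 G)) (x', fun i => p' i)
    ring
  have hPE : ContDiff ℝ (⊤ : ℕ∞) (fun z => der e0 G z - TD vx e0 e1 l1 l2 (der e1 G) z
      + TD vx e0 e1 l1 l2 (TD vx e0 e1 l1 l2 (der e2 G)) z) :=
    ((contDiff_der e0 hG).sub (hsm (contDiff_der e1 hG))).add (hsm (hsm hG2))
  have hRE2 : ∀ x p, pd 2 (E 2 2 F) x p =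
      der e2 (fun z => der e0 G z - TD vx e0 e1 l1 l2 (der e1 G) z
        + TD vx e0 e1 l1 l2 (TD vx e0 e1 l1 l2 (der e2 G)) z) (x, fun i => p i) :=
    rep_pd hPE hRE 2 h2
  have hRE22 : ∀ x p, pd 2 (pd 2 (E 2 2 F)) x p =
      der e2 (der e2 (fun z => der e0 G z - TD vx e0 e1 l1 l2 (der e1 G) z
        + TD vx e0 e1 l1 l2 (TD vx e0 e1 l1 l2 (der e2 G)) z)) (x, fun i => p i) :=
    rep_pd (contDiff_der e2 hPE) hRE2 2 h2
  -- RHS representations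
  have hRD222 : ∀ x p, D 2 (pd 2 (pd 2 (pd 2 F))) x p =
      TD vx e0 e1 l1 l2 (der e2 (der e2 (der e2 G))) (x, fun i => p i) :=
    rep_D2 h0 h1 h2 hG222 hR222
  have hRDD222 : ∀ x p, D 2 (D 2 (pd 2 (pd 2 (pd 2 F)))) x p =
      TD vx e0 e1 l1 l2 (TD vx e0 e1 l1 l2 (der e2 (der e2 (der e2 G)))) (x, fun i => p i) :=
    rep_D2 h0 h1 h2 (hsm hG222) hRD222
  have hR122 : ∀ x p, pd 1 (pd 2 (pd 2 F)) x p =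
      der e1 (der e2 (der e2 G)) (x, fun i => p i) := rep_pd hG22 hR22 1 h1
  have hRD122 : ∀ x p, D 2 (pd 1 (pd 2 (pd 2 F))) x p =
      TD vx e0 e1 l1 l2 (der e1 (der e2 (der e2 G))) (x, fun i => p i) :=
    rep_D2 h0 h1 h2 (contDiff_der e1 hG22) hR122
  have hR022 : ∀ x p, pd 0 (pd 2 (pd 2 F)) x p =
      der e0 (der e2 (der e2 G)) (x, fun i => p i) := rep_pd hG22 hR22 0 h0
  have hIt : (D 2)^[2] (pd 2 (pd 2 (pd 2 F))) = D 2 (D 2 (pd 2 (pd 2 (pd 2 F)))) := rfl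
  rw [hIt, hRE22 x p, hRDD222 x p, hRD122 x p, hR022 x p]
  exact master vx e0 e1 l1 l2 e2 hp11 hp21 hp12 hp22 hG (x, fun i => p i)

end Bridge

/-- `∂₂² ∘ E₂² = (D₂² ∂₂ + 3 D₂ ∂₁ + 3 ∂₀) ∘ ∂₂²`. -/
theorem pd2_sq_E22 (F : Fn) (hF : SmoothFn F) (x : ℝ) (p : ℕ → ℝ) :
    pd 2 (pd 2 (E 2 2 F)) x p =
      (D 2)^[2] (pd 2 (pd 2 (pd 2 F))) x p + 3 * D 2 (pd 1 (pd 2 (pd 2 F))) x p +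
        3 * pd 0 (pd 2 (pd 2 F)) x p := by
  obtain ⟨M₀, hdep₀, hsm₀⟩ := hF
  set M : ℕ := max M₀ 3 with hM
  have hMM : M₀ ≤ M := le_max_left _ _
  have h3M : 3 ≤ M := le_max_right _ _
  have h0 : 0 < M := by omega
  have h1 : 1 < M := by omega
  have h2 : 2 < M := by omega
  have hdep : FnDependsOn F M := fun y pp q h => hdep₀ y pp q fun i hi => h i (lt_of_lt_of_le hi hMM)
  set G : ℝ × (Fin M → ℝ) → ℝ :=
    fun v => F v.1 (fun i => if h : i < M then v.2 ⟨i, h⟩ else 0) with hGdef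
  have hL : ContDiff ℝ (⊤ : ℕ∞) (fun v : ℝ × (Fin M → ℝ) =>
      ((v.1, fun i : Fin M₀ => v.2 ⟨(i : ℕ), lt_of_lt_of_le i.2 hMM⟩) : ℝ × (Fin M₀ → ℝ))) :=
    contDiff_fst.prodMk (contDiff_pi.mpr fun i => by
      exact ((ContinuousLinearMap.proj (⟨(i : ℕ), lt_of_lt_of_le i.2 hMM⟩ : Fin M)).comp
        (ContinuousLinearMap.snd ℝ ℝ (Fin M → ℝ))).contDiff)
  have hG : ContDiff ℝ (⊤ : ℕ∞) G := by
    have hcomp := hsm₀.comp hL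
    have hEq : (fun v : ℝ × (Fin M → ℝ) =>
        (fun w : ℝ × (Fin M₀ → ℝ) => F w.1 (fun i => if h : i < M₀ then w.2 ⟨i, h⟩ else 0))
          ((v.1, fun i : Fin M₀ => v.2 ⟨(i : ℕ), lt_of_lt_of_le i.2 hMM⟩))) = G := by
      funext v
      show F v.1 _ = F v.1 _
      apply hdep₀
      intro i hi
      simp [hi, lt_of_lt_of_le hi hMM]
    rw [← hEq]
    exact hcomp
  have hRep : ∀ y q, F y q = G (y, fun i => q i) := by
    intro y q
    show F y q = F y (fun i => if h : i < M then q i else 0)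
    apply hdep
    intro i hi
    simp [hi]
  exact final h0 h1 h2 hG hRep x p
end
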